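/- arXiv:2403.00384 — 7 statements merged into one kernel-verified Lean document; each statement's English description precedes it below -/
import Mathlib

section
/- Let Z be a subcritical Galton-Watson process (offspring mean μ < 1) whose offspring distribution admits a finite moment of order ℓ ∈ ℕ*. Then the total progeny Z̃_∞ = Σ_{n≥0} Z_n admits a finite moment of order ℓ. -/
open MeasureTheory ProbabilityTheory Filter Finset
open scoped ENNReal NNReal Topology

lemma tsum_pow_fin (g : ℕ → ℝ≥0∞) : ∀ j, ∑' t : Fin j → ℕ, ∏ r, g (t r) = (∑' i, g i) ^ j := by
  intro j
  induction j with
  | zero =>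
    rw [tsum_eq_single (default : Fin 0 → ℕ) (by intro b hb; exact absurd (Subsingleton.elim b default) hb)]
    simp
  | succ j ih =>
    rw [← Equiv.tsum_eq (Fin.consEquiv (fun _ : Fin (j+1) => ℕ))]
    have h1 : ∀ p : ℕ × (Fin j → ℕ), ∏ r, g ((Fin.consEquiv (fun _ : Fin (j+1) => ℕ)) p r)
        = g p.1 * ∏ r, g (p.2 r) := by
      intro p
      rw [Fin.prod_univ_succ]
      simp [Fin.consEquiv]
    rw [tsum_congr h1,
      ENNReal.tsum_prod (f := fun (a : ℕ) (b : Fin j → ℕ) => g a * ∏ r : Fin j, g (b r))]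
    simp_rw [ENNReal.tsum_mul_left]
    rw [ih, ENNReal.tsum_mul_right, pow_succ]
    ring

lemma tsum_pow_fintype {ι : Type*} [Fintype ι] (g : ℕ → ℝ≥0∞) :
    ∑' t : ι → ℕ, ∏ r, g (t r) = (∑' i, g i) ^ (Fintype.card ι) := by
  classical
  let e := Fintype.equivFin ι
  rw [← tsum_pow_fin g (Fintype.card ι)]
  rw [← Equiv.tsum_eq (Equiv.arrowCongr e.symm (Equiv.refl ℕ))]
  refine tsum_congr fun u => ?_
  refine Fintype.prod_equiv e _ _ fun r => ?_
  simp

lemma tsum_count (m : ℕ) {ι : Type*} [Fintype ι] :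
    ∑' t : ι → ℕ, (if ∀ q, t q < m then (1:ℝ≥0∞) else 0) = (m : ℝ≥0∞) ^ (Fintype.card ι) := by
  classical
  have h := tsum_pow_fintype (ι := ι) (fun i => if i < m then (1:ℝ≥0∞) else 0)
  have h2 : ∑' i : ℕ, (if i < m then (1:ℝ≥0∞) else 0) = m := by
    rw [tsum_eq_sum (s := Finset.range m) (by intro b hb; simp only [Finset.mem_range] at hb; simp [Nat.not_lt.2 (Nat.le_of_not_lt hb)])]
    rw [Finset.sum_congr rfl (fun b hb => if_pos (Finset.mem_range.1 hb))]
    simp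
  rw [h2] at h
  rw [← h]
  refine tsum_congr fun t => ?_
  rw [Finset.prod_boole]
  simp


lemma tsum_count_pair {j m : ℕ} (r s : Fin j) (hrs : r ≠ s) :
    ∑' t : Fin j → ℕ, (if (t s = t r ∧ ∀ q, t q < m) then (1:ℝ≥0∞) else 0)
      ≤ (m : ℝ≥0∞) ^ (j - 1) := by
  classical
  set F : (Fin j → ℕ) → ℝ≥0∞ := fun t => if (t s = t r ∧ ∀ q, t q < m) then (1:ℝ≥0∞) else 0 with hF
  set e : ({q : Fin j // q ≠ s} → ℕ) → (Fin j → ℕ) :=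
    fun v q => if h : q = s then v ⟨r, hrs⟩ else v ⟨q, h⟩ with he
  have hinj : Function.Injective e := by
    intro v w hvw
    funext q'
    have := congrFun hvw q'.1
    simp only [he] at this
    rwa [dif_neg q'.2, dif_neg q'.2] at this
  have hsupp : Function.support F ⊆ Set.range e := by
    intro t ht
    simp only [Function.mem_support, hF] at ht
    by_cases h : t s = t r ∧ ∀ q, t q < m
    · refine ⟨fun q' => t q'.1, ?_⟩
      funext q
      by_cases hq : q = s
      · simp only [he, dif_pos hq, hq]
        exact h.1.symm
      · simp [he, dif_neg hq]
    · simp [h] at ht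
  have key : ∑' t : Fin j → ℕ, F t = ∑' v, F (e v) := (hinj.tsum_eq hsupp).symm
  have hFe : ∀ v, F (e v) = if ∀ q' : {q : Fin j // q ≠ s}, v q' < m then (1:ℝ≥0∞) else 0 := by
    intro v
    have h1 : e v s = e v r := by simp [he, dif_neg hrs]
    have h2 : (∀ q, e v q < m) ↔ ∀ q' : {q : Fin j // q ≠ s}, v q' < m := by
      constructor
      · intro h q'
        have := h q'.1
        simp only [he] at this
        rwa [dif_neg q'.2] at this
      · intro h q
        by_cases hq : q = s
        · rw [he]; simp only [dif_pos hq]; exact h _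
        · rw [he]; simp only [dif_neg hq]; exact h _
    simp only [hF, h1, true_and, h2]
  have hcard : Fintype.card {q : Fin j // q ≠ s} = j - 1 := by
    have := Fintype.card_subtype_compl (fun q : Fin j => q = s)
    simpa [Fintype.card_subtype_eq] using this
  rw [key, tsum_congr hFe, tsum_count, hcard]

lemma iSup_pow_mono (a : ℕ → ℝ≥0∞) (ha : Monotone a) (k : ℕ) :
    (⨆ N, a N) ^ k = ⨆ N, a N ^ k := by
  induction k with
  | zero => simp
  | succ k ih =>
    rw [pow_succ, ih, ENNReal.iSup_mul]
    refine le_antisymm (iSup_le fun N => ?_) (iSup_le fun N => ?_)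
    · rw [ENNReal.mul_iSup]
      refine iSup_le fun M => ?_
      calc a N ^ k * a M ≤ a (max N M) ^ k * a (max N M) :=
            mul_le_mul' (pow_le_pow_left' (ha (le_max_left N M)) k) (ha (le_max_right N M))
        _ = a (max N M) ^ (k + 1) := (pow_succ _ _).symm
        _ ≤ ⨆ N, a N ^ (k+1) := le_iSup (fun N => a N ^ (k+1)) _
    · calc a N ^ (k+1) = a N ^ k * a N := pow_succ _ _
        _ ≤ a N ^ k * ⨆ M, a M := mul_le_mul' le_rfl (le_iSup a N)
        _ ≤ ⨆ N, a N ^ k * ⨆ M, a M := le_iSup (fun N => a N ^ k * ⨆ M, a M) N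



noncomputable def Mnt (p : ℕ → ℝ) (a : ℕ) : ℝ≥0∞ := ∑' k : ℕ, (k : ℝ≥0∞) ^ a * ENNReal.ofReal (p k)

lemma Mnt_ofReal (p : ℕ → ℝ) (hp : ∀ k, 0 ≤ p k) (a k : ℕ) :
    (k : ℝ≥0∞) ^ a * ENNReal.ofReal (p k) = ENNReal.ofReal ((k : ℝ) ^ a * p k) := by
  rw [ENNReal.ofReal_mul (p := (k:ℝ)^a) (pow_nonneg (Nat.cast_nonneg k) a), ENNReal.ofReal_pow (Nat.cast_nonneg k),
    ENNReal.ofReal_natCast]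

lemma Mnt_zero (p : ℕ → ℝ) (hp : ∀ k, 0 ≤ p k) (hpsum : ∑' k, p k = 1)
    (hps : Summable p) : Mnt p 0 = 1 := by
  unfold Mnt
  simp only [pow_zero, one_mul]
  rw [← ENNReal.ofReal_tsum_of_nonneg hp hps, hpsum, ENNReal.ofReal_one]

lemma Mnt_mono (p : ℕ → ℝ) (hp : ∀ k, 0 ≤ p k) (hpsum : ∑' k, p k = 1)
    (hps : Summable p) {a b : ℕ} (hab : a ≤ b) : Mnt p a ≤ 1 + Mnt p b := by
  have h1 : (1 : ℝ≥0∞) + Mnt p b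
      = ∑' k : ℕ, (ENNReal.ofReal (p k) + (k : ℝ≥0∞) ^ b * ENNReal.ofReal (p k)) := by
    rw [ENNReal.tsum_add]
    congr 1
    rw [← ENNReal.ofReal_tsum_of_nonneg hp hps, hpsum, ENNReal.ofReal_one]
  rw [h1]
  refine ENNReal.tsum_le_tsum fun k => ?_
  have hk : (k : ℝ≥0∞) ^ a ≤ 1 + (k : ℝ≥0∞) ^ b := by
    rcases Nat.eq_zero_or_pos k with rfl | hk
    · rcases Nat.eq_zero_or_pos a with rfl | ha
      · simp
      · rw [Nat.cast_zero, zero_pow (Nat.pos_iff_ne_zero.1 ha)]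
        exact zero_le
    · have h1k : (1 : ℝ≥0∞) ≤ (k : ℝ≥0∞) := by exact_mod_cast hk
      exact le_trans (pow_le_pow_right' h1k hab) le_add_self
  calc (k : ℝ≥0∞) ^ a * ENNReal.ofReal (p k)
      ≤ (1 + (k : ℝ≥0∞) ^ b) * ENNReal.ofReal (p k) := mul_le_mul_left hk _
    _ = ENNReal.ofReal (p k) + (k : ℝ≥0∞) ^ b * ENNReal.ofReal (p k) := by ring

lemma Mnt_one (p : ℕ → ℝ) (hp : ∀ k, 0 ≤ p k) (mp : ℝ)
    (hmean : HasSum (fun k : ℕ => (k : ℝ) * p k) mp) : Mnt p 1 = ENNReal.ofReal mp := by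
  unfold Mnt
  have : ∀ k : ℕ, (k : ℝ≥0∞) ^ 1 * ENNReal.ofReal (p k)
      = ENNReal.ofReal ((k : ℝ) * p k) := by
    intro k
    rw [Mnt_ofReal p hp 1 k, pow_one]
  rw [tsum_congr this, ← ENNReal.ofReal_tsum_of_nonneg
    (fun k => mul_nonneg (Nat.cast_nonneg k) (hp k)) hmean.summable, hmean.tsum_eq]

lemma Mnt_fin (p : ℕ → ℝ) (hp : ∀ k, 0 ≤ p k) (ℓ : ℕ)
    (hmom : Summable fun k : ℕ => (k : ℝ) ^ ℓ * p k) : Mnt p ℓ ≠ ⊤ := by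
  unfold Mnt
  rw [tsum_congr (fun k => Mnt_ofReal p hp ℓ k),
    ← ENNReal.ofReal_tsum_of_nonneg (fun k => mul_nonneg (pow_nonneg (Nat.cast_nonneg k) ℓ) (hp k)) hmom]
  exact ENNReal.ofReal_ne_top

section GW
variable {Ω : Type*} [mΩ : MeasurableSpace Ω] {μ : Measure Ω}

lemma lintegral_nat_pow {g : Ω → ℕ} (hg : Measurable g) (a : ℕ) :
    ∫⁻ ω, ((g ω : ℝ≥0∞)) ^ a ∂μ = ∑' k : ℕ, (k : ℝ≥0∞) ^ a * μ {ω | g ω = k} := by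
  have hpt : ∀ ω, ((g ω : ℝ≥0∞)) ^ a
      = ∑' k : ℕ, Set.indicator {ω' | g ω' = k} (fun _ => (k:ℝ≥0∞)^a) ω := by
    intro ω
    rw [tsum_eq_single (g ω)]
    · rw [Set.indicator_of_mem (by simp : ω ∈ {ω' | g ω' = g ω})]
    · intro k hk
      exact Set.indicator_of_notMem (by simp [Ne.symm hk]) _
  have hms : ∀ k : ℕ, MeasurableSet {ω' | g ω' = k} := fun k => hg (measurableSet_singleton k)
  rw [lintegral_congr hpt, lintegral_tsum
    (fun k => ((measurable_const.indicator (hms k)).aemeasurable))]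
  exact tsum_congr fun k => lintegral_indicator_const (hms k) _

/-- The σ-algebra generated by the X's with first coordinates < n. -/
def Gsa {Ω : Type*} (X : ℕ → ℕ → Ω → ℕ) (n : ℕ) : MeasurableSpace Ω :=
  ⨆ q ∈ {q : ℕ × ℕ | q.1 < n}, MeasurableSpace.comap (X q.1 q.2) inferInstance

lemma Gsa_le (X : ℕ → ℕ → Ω → ℕ) (hXmeas : ∀ n i, Measurable (X n i)) (n : ℕ) :
    Gsa X n ≤ mΩ := by
  refine iSup₂_le fun q _ => ?_
  exact measurable_iff_comap_le.1 (hXmeas q.1 q.2)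

lemma Gsa_mono (X : ℕ → ℕ → Ω → ℕ) {n n' : ℕ} (h : n ≤ n') : Gsa X n ≤ Gsa X n' :=
  biSup_mono fun q hq => lt_of_lt_of_le hq h

lemma Z_meas_Gsa (X : ℕ → ℕ → Ω → ℕ) (Z : ℕ → Ω → ℕ)
    (hZ0 : ∀ ω, Z 0 ω = 1)
    (hZrec : ∀ n ω, Z (n + 1) ω = ∑ i ∈ Finset.range (Z n ω), X n i ω) :
    ∀ n, Measurable[Gsa X n] (Z n) := by
  intro n
  induction n with
  | zero =>
    have : Z 0 = fun _ => 1 := funext hZ0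
    rw [this]
    exact measurable_const
  | succ n ih =>
    refine @measurable_to_countable' ℕ Ω _ _ (Gsa X (n+1)) (Z (n+1)) fun k => ?_
    have hZn : Measurable[Gsa X (n+1)] (Z n) := ih.mono (Gsa_mono X (Nat.le_succ n)) le_rfl
    have hXni : ∀ i, Measurable[Gsa X (n+1)] (X n i) := by
      intro i
      refine Measurable.of_comap_le ?_
      exact le_biSup (fun q : ℕ × ℕ => MeasurableSpace.comap (X q.1 q.2) inferInstance)
        (show ((n, i) : ℕ × ℕ) ∈ {q : ℕ × ℕ | q.1 < n + 1} by simp)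
    have hsum : ∀ m : ℕ, Measurable[Gsa X (n+1)] (fun ω => ∑ i ∈ Finset.range m, X n i ω) :=
      fun m => Finset.measurable_sum _ (fun i _ => hXni i)
    have : Z (n+1) ⁻¹' {k} = ⋃ m : ℕ, ({ω | Z n ω = m} ∩ {ω | ∑ i ∈ Finset.range m, X n i ω = k}) := by
      ext ω
      simp only [Set.mem_preimage, Set.mem_singleton_iff, Set.mem_iUnion, Set.mem_inter_iff,
        Set.mem_setOf_eq, hZrec n ω]
      constructor
      · intro h; exact ⟨Z n ω, rfl, h⟩
      · rintro ⟨m, hm, hk⟩; rw [hm]; exact hk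
    rw [this]
    exact MeasurableSet.iUnion fun m =>
      (hZn (measurableSet_singleton m)).inter (hsum m (measurableSet_singleton k))

lemma Z_meas (X : ℕ → ℕ → Ω → ℕ) (Z : ℕ → Ω → ℕ)
    (hXmeas : ∀ n i, Measurable (X n i))
    (hZ0 : ∀ ω, Z 0 ω = 1)
    (hZrec : ∀ n ω, Z (n + 1) ω = ∑ i ∈ Finset.range (Z n ω), X n i ω) (n : ℕ) :
    Measurable (Z n) :=
  (Z_meas_Gsa X Z hZ0 hZrec n).mono (Gsa_le X hXmeas n) le_rfl


lemma factor_lemma (μ : Measure Ω) [IsProbabilityMeasure μ]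
    (X : ℕ → ℕ → Ω → ℕ) (hXmeas : ∀ n i, Measurable (X n i))
    (hXindep : iIndepFun (fun ni : ℕ × ℕ => X ni.1 ni.2) μ)
    (Z : ℕ → Ω → ℕ) (hZG : ∀ n, Measurable[Gsa X n] (Z n))
    (n : ℕ) (φ : ℕ → ℝ≥0∞) (g : ℕ → ℕ → ℝ≥0∞) (S : Finset ℕ) :
    ∫⁻ ω, φ (Z n ω) * ∏ i ∈ S, g i (X n i ω) ∂μ
      = (∫⁻ ω, φ (Z n ω) ∂μ) * ∏ i ∈ S, ∫⁻ ω, g i (X n i ω) ∂μ := by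
  classical
  induction S using Finset.induction_on with
  | empty => simp
  | @insert i₀ S hi₀ ih =>
    set T : Set (ℕ × ℕ) := {q | q.1 < n ∨ (q.1 = n ∧ q.2 ∈ S)} with hT
    set MT : MeasurableSpace Ω := ⨆ q ∈ T, MeasurableSpace.comap (X q.1 q.2) inferInstance with hMT
    have hle : ∀ q : ℕ × ℕ, MeasurableSpace.comap (X q.1 q.2) inferInstance ≤ mΩ :=
      fun q => measurable_iff_comap_le.1 (hXmeas q.1 q.2)
    have hMTle : MT ≤ mΩ := iSup₂_le fun q _ => hle q
    have hnotmem : ((n, i₀) : ℕ × ℕ) ∉ T := by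
      simp only [hT, Set.mem_setOf_eq, lt_self_iff_false, false_or, not_and]
      intro _; exact hi₀
    have hIndep : Indep (MeasurableSpace.comap (X n i₀) inferInstance) MT μ := by
      have h := indep_iSup_of_disjoint
        (m := fun q : ℕ × ℕ => MeasurableSpace.comap (X q.1 q.2) inferInstance)
        hle hXindep (S := {((n, i₀) : ℕ × ℕ)}) (T := T)
        (Set.disjoint_singleton_left.2 hnotmem)
      rwa [_root_.iSup_singleton] at h
    have hmf : Measurable[MeasurableSpace.comap (X n i₀) inferInstance]
        (fun ω => g i₀ (X n i₀ ω)) :=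
      (Measurable.of_discrete (f := g i₀)).comp (Measurable.of_comap_le le_rfl)
    have hZ' : Measurable[MT] (Z n) := by
      refine (hZG n).mono ?_ le_rfl
      exact biSup_mono fun q hq => Or.inl hq
    have hXS : ∀ i ∈ S, Measurable[MT] (fun ω => g i (X n i ω)) := by
      intro i hi
      refine (Measurable.of_discrete (f := g i)).comp (Measurable.of_comap_le ?_)
      exact le_biSup (fun q : ℕ × ℕ => MeasurableSpace.comap (X q.1 q.2) inferInstance)
        (show ((n, i) : ℕ × ℕ) ∈ T from Or.inr ⟨rfl, hi⟩)
    have hmg : Measurable[MT] (fun ω => φ (Z n ω) * ∏ i ∈ S, g i (X n i ω)) := by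
      refine Measurable.mul ?_ ?_
      · exact (Measurable.of_discrete (f := φ)).comp hZ'
      · exact Finset.measurable_prod _ hXS
    have heq : ∀ ω, φ (Z n ω) * ∏ i ∈ insert i₀ S, g i (X n i ω)
        = (fun ω => g i₀ (X n i₀ ω)) ω * (fun ω => φ (Z n ω) * ∏ i ∈ S, g i (X n i ω)) ω := by
      intro ω
      rw [Finset.prod_insert hi₀]
      ring
    rw [lintegral_congr heq,
      lintegral_mul_eq_lintegral_mul_lintegral_of_independent_measurableSpace
        (measurable_iff_comap_le.1 (hXmeas n i₀)) hMTle hIndep hmf hmg,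
      ih, Finset.prod_insert hi₀]
    ring


lemma recursion_lemma (μ : Measure Ω) [IsProbabilityMeasure μ]
    (X : ℕ → ℕ → Ω → ℕ) (hXmeas : ∀ n i, Measurable (X n i))
    (hXindep : iIndepFun (fun ni : ℕ × ℕ => X ni.1 ni.2) μ)
    (Z : ℕ → Ω → ℕ) (hZG : ∀ n, Measurable[Gsa X n] (Z n))
    (hZmeas : ∀ n, Measurable (Z n))
    (hZrec : ∀ n ω, Z (n + 1) ω = ∑ i ∈ Finset.range (Z n ω), X n i ω)
    (M : ℕ → ℝ≥0∞) (hMX : ∀ m i a, ∫⁻ ω, ((X m i ω : ℝ≥0∞)) ^ a ∂μ = M a)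
    (hMbound : ∀ a b : ℕ, a ≤ b → M a ≤ 1 + M b)
    (j n : ℕ) :
    ∫⁻ ω, ((Z (n+1) ω : ℝ≥0∞)) ^ j ∂μ
      ≤ (M 1) ^ j * ∫⁻ ω, ((Z n ω : ℝ≥0∞)) ^ j ∂μ
        + (((univ : Finset (Fin j)).offDiag.card : ℝ≥0∞)) * (1 + M j) ^ j
            * ∫⁻ ω, ((Z n ω : ℝ≥0∞)) ^ (j - 1) ∂μ := by
  classical
  set W : Ω → ℕ := Z n with hW
  have hWmeas : Measurable W := hZmeas n
  set gg : ℕ → Ω → ℝ≥0∞ := fun i ω => if i < W ω then (X n i ω : ℝ≥0∞) else 0 with hgg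
  have hggmeas : ∀ i, Measurable (gg i) := by
    intro i
    refine Measurable.ite ?_ ?_ measurable_const
    · exact hWmeas measurableSet_Ioi
    · exact (measurable_from_top (f := (Nat.cast : ℕ → ℝ≥0∞))).comp (hXmeas n i)
  -- Step 1: pointwise expansion
  have hpt : ∀ ω, ((Z (n+1) ω : ℝ≥0∞)) ^ j = ∑' t : Fin j → ℕ, ∏ r, gg (t r) ω := by
    intro ω
    have hs : ((Z (n+1) ω : ℝ≥0∞)) = ∑' i, gg i ω := by
      rw [hZrec n ω, Nat.cast_sum,
        tsum_eq_sum (s := Finset.range (W ω)) (by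
          intro b hb
          simp only [Finset.mem_range] at hb
          exact if_neg hb)]
      exact Finset.sum_congr rfl fun i hi => (if_pos (Finset.mem_range.1 hi)).symm
    rw [hs, ← tsum_pow_fin (fun i => gg i ω) j]
  -- Step 2: swap integral and sum
  have hprodmeas : ∀ t : Fin j → ℕ, Measurable (fun ω => ∏ r, gg (t r) ω) :=
    fun t => Finset.measurable_prod _ (fun r _ => hggmeas (t r))
  have hswap : ∫⁻ ω, ((Z (n+1) ω : ℝ≥0∞)) ^ j ∂μ
      = ∑' t : Fin j → ℕ, ∫⁻ ω, ∏ r, gg (t r) ω ∂μ := by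
    rw [lintegral_congr hpt, lintegral_tsum (fun t => (hprodmeas t).aemeasurable)]
  -- objects per tuple
  set A : (Fin j → ℕ) → Set Ω := fun t => {ω | ∀ r, t r < W ω} with hA
  have hAmeas : ∀ t, MeasurableSet (A t) := by
    intro t
    have : A t = ⋂ r, {ω | t r < W ω} := by ext ω; simp [hA]
    rw [this]
    exact MeasurableSet.iInter fun r => hWmeas measurableSet_Ioi
  set cnt : (Fin j → ℕ) → ℕ → ℕ := fun t i => (univ.filter (fun r => t r = i)).card with hcnt
  -- Step 3: pointwise factorization per tuple
  have hfact : ∀ (t : Fin j → ℕ) (ω : Ω), ∏ r, gg (t r) ω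
      = (if ∀ r, t r < W ω then (1:ℝ≥0∞) else 0)
        * ∏ i ∈ Finset.image t univ, ((X n i ω : ℝ≥0∞)) ^ (cnt t i) := by
    intro t ω
    by_cases h : ∀ r, t r < W ω
    · rw [if_pos h, one_mul]
      have : ∀ r : Fin j, gg (t r) ω = (fun i => ((X n i ω : ℝ≥0∞))) (t r) :=
        fun r => if_pos (h r)
      rw [Finset.prod_congr rfl (fun r _ => this r)]
      exact Finset.prod_comp (fun i => ((X n i ω : ℝ≥0∞))) t
    · rw [if_neg h, zero_mul]
      push_neg at h
      obtain ⟨r₀, hr₀⟩ := h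
      exact Finset.prod_eq_zero (Finset.mem_univ r₀) (if_neg (Nat.not_lt.2 hr₀))
  -- Step 4: integral per tuple
  have hint : ∀ t : Fin j → ℕ, ∫⁻ ω, ∏ r, gg (t r) ω ∂μ
      = μ (A t) * ∏ i ∈ Finset.image t univ, M (cnt t i) := by
    intro t
    rw [lintegral_congr (hfact t)]
    have := factor_lemma μ X hXmeas hXindep Z hZG n
      (fun m => if ∀ r, t r < m then (1:ℝ≥0∞) else 0)
      (fun i x => ((x : ℝ≥0∞)) ^ (cnt t i)) (Finset.image t univ)
    rw [this]
    congr 1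
    · have : ∀ ω, (if ∀ r, t r < Z n ω then (1:ℝ≥0∞) else 0) = (A t).indicator 1 ω := by
        intro ω
        rw [Set.indicator_apply]
        simp only [hA, Set.mem_setOf_eq, Pi.one_apply]
        rfl
      rw [lintegral_congr this, lintegral_indicator_one (hAmeas t)]
    · exact Finset.prod_congr rfl fun i _ => hMX n i (cnt t i)
  -- Step 5: bounds on the product of moments
  have hcnt_le : ∀ (t : Fin j → ℕ) i, cnt t i ≤ j := by
    intro t i
    calc cnt t i ≤ (univ : Finset (Fin j)).card := Finset.card_filter_le _ _
      _ = j := by simp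
  have hK1 : (1:ℝ≥0∞) ≤ 1 + M j := le_self_add
  have hcard_im : ∀ t : Fin j → ℕ, (Finset.image t univ).card ≤ j := by
    intro t
    calc (Finset.image t univ).card ≤ (univ : Finset (Fin j)).card := Finset.card_image_le
      _ = j := by simp
  have hprod_noninj : ∀ t : Fin j → ℕ,
      ∏ i ∈ Finset.image t univ, M (cnt t i) ≤ (1 + M j) ^ j := by
    intro t
    calc ∏ i ∈ Finset.image t univ, M (cnt t i)
        ≤ ∏ _i ∈ Finset.image t univ, (1 + M j) :=
          Finset.prod_le_prod' fun i _ => hMbound _ _ (hcnt_le t i)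
      _ = (1 + M j) ^ (Finset.image t univ).card := by rw [Finset.prod_const]
      _ ≤ (1 + M j) ^ j := pow_le_pow_right' hK1 (hcard_im t)
  have hprod_inj : ∀ t : Fin j → ℕ, Function.Injective t →
      ∏ i ∈ Finset.image t univ, M (cnt t i) = (M 1) ^ j := by
    intro t ht
    have hcnt1 : ∀ i ∈ Finset.image t univ, cnt t i = 1 := by
      intro i hi
      obtain ⟨r₀, _, hr₀⟩ := Finset.mem_image.1 hi
      show (univ.filter (fun r => t r = i)).card = 1
      have : (univ.filter fun r => t r = i) = {r₀} := by
        ext r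
        simp only [Finset.mem_filter, Finset.mem_univ, true_and, Finset.mem_singleton]
        constructor
        · intro h; exact ht (h.trans hr₀.symm)
        · intro h; rw [h]; exact hr₀
      rw [this, Finset.card_singleton]
    calc ∏ i ∈ Finset.image t univ, M (cnt t i)
        = ∏ _i ∈ Finset.image t univ, M 1 :=
          Finset.prod_congr rfl fun i hi => by rw [hcnt1 i hi]
      _ = (M 1) ^ (Finset.image t univ).card := by rw [Finset.prod_const]
      _ = (M 1) ^ j := by
          rw [Finset.card_image_of_injective _ ht]
          simp
  -- Step 6/7: sum the bounds
  set ν : (Fin j → ℕ) → ℝ≥0∞ := fun t => if Function.Injective t then 0 else μ (A t) with hν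
  have hterm : ∀ t : Fin j → ℕ,
      μ (A t) * ∏ i ∈ Finset.image t univ, M (cnt t i)
        ≤ μ (A t) * (M 1) ^ j + (1 + M j) ^ j * ν t := by
    intro t
    by_cases ht : Function.Injective t
    · rw [hprod_inj t ht]
      exact le_add_right le_rfl
    · refine le_add_left ?_
      rw [hν]
      simp only [ht, if_false]
      rw [mul_comm]
      exact mul_le_mul' (hprod_noninj t) le_rfl
  -- Step 8
  have hsum1 : ∑' t : Fin j → ℕ, μ (A t) = ∫⁻ ω, ((W ω : ℝ≥0∞)) ^ j ∂μ := by
    have h1 : ∀ t, μ (A t) = ∫⁻ ω, (A t).indicator 1 ω ∂μ :=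
      fun t => (lintegral_indicator_one (hAmeas t)).symm
    rw [tsum_congr h1, ← lintegral_tsum (f := fun t => (A t).indicator (1 : Ω → ℝ≥0∞)) (fun t =>
      ((measurable_const.indicator (hAmeas t)).aemeasurable))]
    refine lintegral_congr fun ω => ?_
    have : ∀ t : Fin j → ℕ, (A t).indicator (1 : Ω → ℝ≥0∞) ω
        = if ∀ r, t r < W ω then (1:ℝ≥0∞) else 0 := by
      intro t
      rw [Set.indicator_apply]
      simp only [hA, Set.mem_setOf_eq, Pi.one_apply]
    rw [tsum_congr this]
    have hcount := tsum_count (W ω) (ι := Fin j)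
    rw [Fintype.card_fin] at hcount
    rw [← hcount]
    exact tsum_congr fun t => by by_cases h : ∀ r : Fin j, t r < W ω <;> simp [h]
  -- Step 9
  have hsum2 : ∑' t : Fin j → ℕ, ν t
      ≤ (((univ : Finset (Fin j)).offDiag.card : ℝ≥0∞)) * ∫⁻ ω, ((W ω : ℝ≥0∞)) ^ (j-1) ∂μ := by
    have hνle : ∀ t : Fin j → ℕ,
        ν t ≤ ∑ p ∈ (univ : Finset (Fin j)).offDiag, (if t p.2 = t p.1 then μ (A t) else 0) := by
      intro t
      by_cases ht : Function.Injective t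
      · simp [hν, ht]
      · rw [Function.not_injective_iff] at ht
        obtain ⟨r₀, s₀, heq, hne⟩ := ht
        have hmem : ((r₀, s₀) : Fin j × Fin j) ∈ (univ : Finset (Fin j)).offDiag := by
          rw [Finset.mem_offDiag]
          exact ⟨Finset.mem_univ _, Finset.mem_univ _, hne⟩
        have : ν t = (if t (r₀, s₀).2 = t (r₀, s₀).1 then μ (A t) else 0) := by
          simp only [hν]
          rw [if_neg (by rw [Function.not_injective_iff]; exact ⟨r₀, s₀, heq, hne⟩),
            if_pos heq.symm]
        rw [this]
        exact Finset.single_le_sum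
          (f := fun p : Fin j × Fin j => if t p.2 = t p.1 then μ (A t) else 0)
          (fun p _ => zero_le) hmem
    calc ∑' t : Fin j → ℕ, ν t
        ≤ ∑' t : Fin j → ℕ, ∑ p ∈ (univ : Finset (Fin j)).offDiag,
            (if t p.2 = t p.1 then μ (A t) else 0) := ENNReal.tsum_le_tsum hνle
      _ = ∑ p ∈ (univ : Finset (Fin j)).offDiag, ∑' t : Fin j → ℕ,
            (if t p.2 = t p.1 then μ (A t) else 0) :=
          Summable.tsum_finsetSum (fun p _ => ENNReal.summable)
      _ ≤ ∑ p ∈ (univ : Finset (Fin j)).offDiag, ∫⁻ ω, ((W ω : ℝ≥0∞)) ^ (j-1) ∂μ := by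
          refine Finset.sum_le_sum fun p hp => ?_
          have hne : p.1 ≠ p.2 := (Finset.mem_offDiag.1 hp).2.2
          have hint2 : ∀ t : Fin j → ℕ, (if t p.2 = t p.1 then μ (A t) else 0)
              = ∫⁻ ω, (if (t p.2 = t p.1 ∧ ∀ q, t q < W ω) then (1:ℝ≥0∞) else 0) ∂μ := by
            intro t
            by_cases h : t p.2 = t p.1
            · rw [if_pos h, ← lintegral_indicator_one (hAmeas t)]
              refine lintegral_congr fun ω => ?_
              rw [Set.indicator_apply]
              simp only [hA, Set.mem_setOf_eq, Pi.one_apply, h, true_and]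
            · simp [h]
          have hmeas2 : ∀ t : Fin j → ℕ,
              Measurable (fun ω => (if (t p.2 = t p.1 ∧ ∀ q, t q < W ω) then (1:ℝ≥0∞) else 0)) := by
            intro t
            by_cases h : t p.2 = t p.1
            · simp only [h, true_and]
              have : (fun ω => (if (∀ q, t q < W ω) then (1:ℝ≥0∞) else 0))
                  = (A t).indicator 1 := by
                funext ω
                rw [Set.indicator_apply]
                simp only [hA, Set.mem_setOf_eq, Pi.one_apply]
              rw [this]
              exact measurable_const.indicator (hAmeas t)
            · simp only [h, false_and, if_false]
              exact measurable_const
          rw [tsum_congr hint2, ← lintegral_tsum (fun t => (hmeas2 t).aemeasurable)]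
          refine lintegral_mono fun ω => ?_
          exact tsum_count_pair p.1 p.2 hne
      _ = (((univ : Finset (Fin j)).offDiag.card : ℝ≥0∞)) * ∫⁻ ω, ((W ω : ℝ≥0∞)) ^ (j-1) ∂μ := by
          rw [Finset.sum_const, nsmul_eq_mul]
  -- Combine
  calc ∫⁻ ω, ((Z (n+1) ω : ℝ≥0∞)) ^ j ∂μ
      = ∑' t : Fin j → ℕ, μ (A t) * ∏ i ∈ Finset.image t univ, M (cnt t i) := by
        rw [hswap, tsum_congr hint]
    _ ≤ ∑' t : Fin j → ℕ, (μ (A t) * (M 1) ^ j + (1 + M j) ^ j * ν t) :=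
        ENNReal.tsum_le_tsum hterm
    _ = (∑' t : Fin j → ℕ, μ (A t) * (M 1) ^ j) + ∑' t : Fin j → ℕ, (1 + M j) ^ j * ν t :=
        ENNReal.tsum_add
    _ = (M 1) ^ j * ∫⁻ ω, ((W ω : ℝ≥0∞)) ^ j ∂μ + (1 + M j) ^ j * ∑' t : Fin j → ℕ, ν t := by
        rw [ENNReal.tsum_mul_right, ENNReal.tsum_mul_left, hsum1, mul_comm]
    _ ≤ (M 1) ^ j * ∫⁻ ω, ((Z n ω : ℝ≥0∞)) ^ j ∂μ
        + (((univ : Finset (Fin j)).offDiag.card : ℝ≥0∞)) * (1 + M j) ^ j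
            * ∫⁻ ω, ((Z n ω : ℝ≥0∞)) ^ (j - 1) ∂μ := by
        refine add_le_add le_rfl ?_
        calc (1 + M j) ^ j * ∑' t : Fin j → ℕ, ν t
            ≤ (1 + M j) ^ j * ((((univ : Finset (Fin j)).offDiag.card : ℝ≥0∞))
                * ∫⁻ ω, ((W ω : ℝ≥0∞)) ^ (j-1) ∂μ) := mul_le_mul' le_rfl hsum2
          _ = (((univ : Finset (Fin j)).offDiag.card : ℝ≥0∞)) * (1 + M j) ^ j
                * ∫⁻ ω, ((Z n ω : ℝ≥0∞)) ^ (j - 1) ∂μ := by ring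


lemma decay_lemma (μ : Measure Ω) [IsProbabilityMeasure μ]
    (Z : ℕ → Ω → ℕ) (hZ0 : ∀ ω, Z 0 ω = 1)
    (M : ℕ → ℝ≥0∞) (ℓ : ℕ)
    (hrec : ∀ j n, ∫⁻ ω, ((Z (n+1) ω : ℝ≥0∞)) ^ j ∂μ
      ≤ (M 1) ^ j * ∫⁻ ω, ((Z n ω : ℝ≥0∞)) ^ j ∂μ
        + (((univ : Finset (Fin j)).offDiag.card : ℝ≥0∞)) * (1 + M j) ^ j
            * ∫⁻ ω, ((Z n ω : ℝ≥0∞)) ^ (j - 1) ∂μ)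
    (hMfin : ∀ a, a ≤ ℓ → M a ≠ ⊤)
    (s δ : ℝ≥0∞) (hsδ : M 1 + δ = s) (hδ0 : δ ≠ 0) (hδtop : δ ≠ ⊤) (hM1le : M 1 ≤ 1) :
    ∀ j, 1 ≤ j → j ≤ ℓ →
      ∃ C : ℝ≥0∞, C ≠ ⊤ ∧ ∀ n, ∫⁻ ω, ((Z n ω : ℝ≥0∞)) ^ j ∂μ ≤ C * s ^ n := by
  have hL0 : ∀ j : ℕ, ∫⁻ ω, ((Z 0 ω : ℝ≥0∞)) ^ j ∂μ = 1 := by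
    intro j
    have : ∀ ω, ((Z 0 ω : ℝ≥0∞)) ^ j = 1 := by intro ω; rw [hZ0 ω]; simp
    rw [lintegral_congr this, lintegral_one, measure_univ]
  have hM1s : M 1 ≤ s := le_trans le_self_add (le_of_eq hsδ)
  intro j hj1 hjℓ
  induction j with
  | zero => omega
  | succ j ih =>
    by_cases hj0 : j = 0
    · -- base case j + 1 = 1
      subst hj0
      refine ⟨1, ENNReal.one_ne_top, fun n => ?_⟩
      induction n with
      | zero => rw [hL0 1]; simp
      | succ n ihn =>
        have hcard : (((univ : Finset (Fin 1)).offDiag.card : ℝ≥0∞)) = 0 := by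
          simp [Finset.offDiag_card]
        calc ∫⁻ ω, ((Z (n+1) ω : ℝ≥0∞)) ^ 1 ∂μ
            ≤ (M 1) ^ 1 * ∫⁻ ω, ((Z n ω : ℝ≥0∞)) ^ 1 ∂μ
              + (((univ : Finset (Fin 1)).offDiag.card : ℝ≥0∞)) * (1 + M 1) ^ 1
                  * ∫⁻ ω, ((Z n ω : ℝ≥0∞)) ^ (1 - 1) ∂μ := hrec 1 n
          _ = M 1 * ∫⁻ ω, ((Z n ω : ℝ≥0∞)) ^ 1 ∂μ := by rw [hcard]; ring
          _ ≤ s * (1 * s ^ n) := mul_le_mul' hM1s ihn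
          _ = 1 * s ^ (n+1) := by ring
    · -- inductive step: j ≥ 1
      have hj1' : 1 ≤ j := Nat.one_le_iff_ne_zero.2 hj0
      obtain ⟨C', hC'top, hC'⟩ := ih hj1' (Nat.le_of_succ_le hjℓ)
      set D : ℝ≥0∞ := (((univ : Finset (Fin (j+1))).offDiag.card : ℝ≥0∞)) * (1 + M (j+1)) ^ (j+1)
        with hD
      have hDtop : D ≠ ⊤ := by
        refine ENNReal.mul_ne_top (ENNReal.natCast_ne_top _) (ENNReal.pow_ne_top ?_)
        exact ENNReal.add_ne_top.2 ⟨ENNReal.one_ne_top, hMfin (j+1) hjℓ⟩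
      set E : ℝ≥0∞ := D * C' with hE
      have hEtop : E ≠ ⊤ := ENNReal.mul_ne_top hDtop hC'top
      set C : ℝ≥0∞ := 1 + E / δ with hC
      have hCtop : C ≠ ⊤ := by
        refine ENNReal.add_ne_top.2 ⟨ENNReal.one_ne_top, ?_⟩
        exact ne_top_of_lt (ENNReal.div_lt_top hEtop hδ0)
      have hkey : M 1 * C + E ≤ C * s := by
      -- C * s = C * (M 1 + δ) = C * M 1 + C * δ ≥ M 1 * C + E
        have h1 : C * δ = δ + E := by
          rw [hC, add_mul, one_mul, ENNReal.div_mul_cancel hδ0 hδtop]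
        calc M 1 * C + E ≤ C * M 1 + C * δ := by
              rw [h1, mul_comm]
              exact add_le_add le_rfl le_add_self
          _ = C * (M 1 + δ) := by ring
          _ = C * s := by rw [hsδ]
      refine ⟨C, hCtop, fun n => ?_⟩
      induction n with
      | zero =>
        rw [hL0 (j+1), pow_zero, mul_one, hC]
        exact le_self_add
      | succ n ihn =>
        have hMpow : (M 1) ^ (j+1) ≤ M 1 := by
          calc (M 1) ^ (j+1) = (M 1) ^ j * M 1 := pow_succ _ _
            _ ≤ 1 ^ j * M 1 := mul_le_mul' (pow_le_pow_left' hM1le j) le_rfl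
            _ = M 1 := by rw [one_pow, one_mul]
        calc ∫⁻ ω, ((Z (n+1) ω : ℝ≥0∞)) ^ (j+1) ∂μ
            ≤ (M 1) ^ (j+1) * ∫⁻ ω, ((Z n ω : ℝ≥0∞)) ^ (j+1) ∂μ
              + D * ∫⁻ ω, ((Z n ω : ℝ≥0∞)) ^ (j+1-1) ∂μ := hrec (j+1) n
          _ ≤ M 1 * (C * s ^ n) + D * (C' * s ^ n) := by
              refine add_le_add (mul_le_mul' hMpow ihn) (mul_le_mul' le_rfl ?_)
              have : j + 1 - 1 = j := rfl
              rw [this]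
              exact hC' n
          _ = (M 1 * C + E) * s ^ n := by rw [hE]; ring
          _ ≤ (C * s) * s ^ n := mul_le_mul' hkey le_rfl
          _ = C * s ^ (n+1) := by ring

end GW


theorem stmt_2
    {Ω : Type*} [mΩ : MeasurableSpace Ω] (μ : Measure Ω) [IsProbabilityMeasure μ]
    (p : ℕ → ℝ) (hp : ∀ k, 0 ≤ p k) (hpsum : ∑' k, p k = 1)
    (X : ℕ → ℕ → Ω → ℕ)
    (hXmeas : ∀ n i, Measurable (X n i))
    (hXindep : iIndepFun
      (fun ni : ℕ × ℕ => X ni.1 ni.2) μ)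
    (hXlaw : ∀ n i k, μ {ω | X n i ω = k} = ENNReal.ofReal (p k))
    (Z : ℕ → Ω → ℕ)
    (hZ0 : ∀ ω, Z 0 ω = 1)
    (hZrec : ∀ n ω, Z (n + 1) ω = ∑ i ∈ Finset.range (Z n ω), X n i ω)
    (mp : ℝ) (hmean : HasSum (fun k : ℕ => (k : ℝ) * p k) mp)
    (hsub : mp < 1)
    (ℓ : ℕ) (hℓ : 0 < ℓ) (hmom : Summable fun k : ℕ => (k : ℝ) ^ ℓ * p k) :
    ∫⁻ ω, (∑' n, (Z n ω : ℝ≥0∞)) ^ ℓ ∂μ < ⊤ := by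
  classical
  have hps : Summable p := by
    by_contra h
    rw [tsum_eq_zero_of_not_summable h] at hpsum
    norm_num at hpsum
  set M : ℕ → ℝ≥0∞ := Mnt p with hM
  have hZG := Z_meas_Gsa X Z hZ0 hZrec
  have hZmeas := Z_meas X Z hXmeas hZ0 hZrec
  have hMX : ∀ m i a, ∫⁻ ω, ((X m i ω : ℝ≥0∞)) ^ a ∂μ = M a := by
    intro m i a
    rw [lintegral_nat_pow (hXmeas m i) a]
    exact tsum_congr fun k => by rw [hXlaw m i k]
  have hMbound : ∀ a b : ℕ, a ≤ b → M a ≤ 1 + M b :=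
    fun a b hab => Mnt_mono p hp hpsum hps hab
  have hrec := recursion_lemma μ X hXmeas hXindep Z hZG hZmeas hZrec M hMX hMbound
  have hmp0 : 0 ≤ mp := by
    rw [← hmean.tsum_eq]
    exact tsum_nonneg fun k => mul_nonneg (Nat.cast_nonneg k) (hp k)
  set s : ℝ≥0∞ := ENNReal.ofReal ((1 + mp) / 2) with hs
  set δ : ℝ≥0∞ := ENNReal.ofReal ((1 - mp) / 2) with hδ
  have hsδ : M 1 + δ = s := by
    rw [hM, Mnt_one p hp mp hmean, hδ, hs, ← ENNReal.ofReal_add hmp0 (by linarith)]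
    congr 1
    ring
  have hδ0 : δ ≠ 0 := by
    rw [hδ]
    exact ne_of_gt (ENNReal.ofReal_pos.2 (by linarith))
  have hM1le : M 1 ≤ 1 := by
    rw [hM, Mnt_one p hp mp hmean]
    exact ENNReal.ofReal_le_one.2 hsub.le
  have hs1 : s < 1 := by
    rw [hs]
    exact ENNReal.ofReal_lt_one.2 (by linarith)
  have hMfin : ∀ a, a ≤ ℓ → M a ≠ ⊤ := by
    intro a ha
    refine ne_top_of_le_ne_top ?_ (hMbound a ℓ ha)
    exact ENNReal.add_ne_top.2 ⟨ENNReal.one_ne_top, Mnt_fin p hp ℓ hmom⟩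
  obtain ⟨C, hCtop, hC⟩ := decay_lemma μ Z hZ0 M ℓ hrec hMfin s δ hsδ hδ0
    ENNReal.ofReal_ne_top hM1le ℓ hℓ le_rfl
  -- analytic part
  set ℓr : ℝ := (ℓ : ℝ) with hℓr
  have hℓrpos : (0:ℝ) < ℓr := by rw [hℓr]; exact_mod_cast hℓ
  have hℓr1 : (1:ℝ) ≤ ℓr := by rw [hℓr]; exact_mod_cast hℓ
  have hinvpos : (0:ℝ) < 1 / ℓr := by positivity
  set ψ : ℕ → ℝ≥0∞ := fun n => (∫⁻ ω, ((Z n ω : ℝ≥0∞)) ^ ℓr ∂μ) ^ (1/ℓr) with hψ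
  have hrpowint : ∀ n, ∫⁻ ω, ((Z n ω : ℝ≥0∞)) ^ ℓr ∂μ = ∫⁻ ω, ((Z n ω : ℝ≥0∞)) ^ ℓ ∂μ :=
    fun n => lintegral_congr fun ω => ENNReal.rpow_natCast _ ℓ
  set r : ℝ≥0∞ := s ^ (1/ℓr) with hr
  have hr1 : r < 1 := ENNReal.rpow_lt_one hs1 hinvpos
  have hψle : ∀ n, ψ n ≤ C ^ (1/ℓr) * r ^ n := by
    intro n
    have h1 : ψ n ≤ (C * s ^ n) ^ (1/ℓr) := by
      rw [hψ]
      exact ENNReal.rpow_le_rpow (by rw [hrpowint n]; exact hC n) hinvpos.le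
    refine h1.trans (le_of_eq ?_)
    rw [ENNReal.mul_rpow_of_nonneg _ _ hinvpos.le]
    congr 1
    rw [← ENNReal.rpow_natCast s n, ← ENNReal.rpow_mul, mul_comm, ENNReal.rpow_mul,
      ENNReal.rpow_natCast]
  set T : ℝ≥0∞ := ∑' n, ψ n with hT
  have hTtop : T ≠ ⊤ := by
    refine ne_top_of_le_ne_top ?_ (ENNReal.tsum_le_tsum hψle)
    rw [ENNReal.tsum_mul_left, ENNReal.tsum_geometric]
    exact ENNReal.mul_ne_top (ENNReal.rpow_ne_top_of_nonneg hinvpos.le hCtop)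
      (ENNReal.inv_ne_top.2 (ne_of_gt (tsub_pos_of_lt hr1)))
  have hcastmeas : ∀ n, Measurable (fun ω => ((Z n ω : ℝ≥0∞))) :=
    fun n => (measurable_from_top (f := (Nat.cast : ℕ → ℝ≥0∞))).comp (hZmeas n)
  have hFmeas : ∀ N, Measurable (fun ω => ∑ n ∈ Finset.range N, ((Z n ω : ℝ≥0∞))) :=
    fun N => Finset.measurable_sum _ fun n _ => hcastmeas n
  have hmink : ∀ N, (∫⁻ ω, (∑ n ∈ Finset.range N, ((Z n ω : ℝ≥0∞))) ^ ℓr ∂μ) ^ (1/ℓr)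
      ≤ ∑ n ∈ Finset.range N, ψ n := by
    intro N
    induction N with
    | zero =>
      simp only [Finset.range_zero, Finset.sum_empty]
      rw [lintegral_congr (fun ω => ENNReal.zero_rpow_of_pos hℓrpos), lintegral_zero,
        ENNReal.zero_rpow_of_pos hinvpos]
    | succ N ihN =>
      have key := ENNReal.lintegral_Lp_add_le (μ := μ)
        (f := fun ω => ∑ n ∈ Finset.range N, ((Z n ω : ℝ≥0∞)))
        (g := fun ω => ((Z N ω : ℝ≥0∞)))
        ((hFmeas N).aemeasurable) ((hcastmeas N).aemeasurable) hℓr1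
      have heq : ∀ ω, (∑ n ∈ Finset.range (N+1), ((Z n ω : ℝ≥0∞))) ^ ℓr
          = (((fun ω => ∑ n ∈ Finset.range N, ((Z n ω : ℝ≥0∞)))
            + (fun ω => ((Z N ω : ℝ≥0∞)))) ω) ^ ℓr := by
        intro ω
        rw [Finset.sum_range_succ]
        rfl
      rw [lintegral_congr heq, Finset.sum_range_succ]
      exact le_trans key (add_le_add ihN le_rfl)
  have hsummono : Monotone (fun N => fun ω => (∑ n ∈ Finset.range N, ((Z n ω : ℝ≥0∞))) ^ ℓ) := by
    intro N N' hNN' ω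
    refine pow_le_pow_left' ?_ ℓ
    simpa using Finset.sum_le_sum_of_subset (f := fun n => ((Z n ω : ℝ≥0∞)))
      (Finset.range_subset_range.2 hNN')
  have hpow : ∀ ω, (∑' n, ((Z n ω : ℝ≥0∞))) ^ ℓ
      = ⨆ N, (∑ n ∈ Finset.range N, ((Z n ω : ℝ≥0∞))) ^ ℓ := by
    intro ω
    rw [ENNReal.tsum_eq_iSup_nat]
    refine iSup_pow_mono _ (fun N N' h => ?_) ℓ
    simpa using Finset.sum_le_sum_of_subset (f := fun n => ((Z n ω : ℝ≥0∞)))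
      (Finset.range_subset_range.2 h)
  rw [lintegral_congr hpow, lintegral_iSup (fun N => (hFmeas N).pow_const ℓ) hsummono]
  have hbound : ∀ N, ∫⁻ ω, (∑ n ∈ Finset.range N, ((Z n ω : ℝ≥0∞))) ^ ℓ ∂μ ≤ T ^ ℓr := by
    intro N
    have h1 : ∫⁻ ω, (∑ n ∈ Finset.range N, ((Z n ω : ℝ≥0∞))) ^ ℓ ∂μ
        = ∫⁻ ω, (∑ n ∈ Finset.range N, ((Z n ω : ℝ≥0∞))) ^ ℓr ∂μ :=
      (lintegral_congr fun ω => ENNReal.rpow_natCast _ ℓ).symm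
    rw [h1]
    have h4 : (∫⁻ ω, (∑ n ∈ Finset.range N, ((Z n ω : ℝ≥0∞))) ^ ℓr ∂μ) ^ (1/ℓr) ≤ T :=
      le_trans (hmink N) (ENNReal.sum_le_tsum _)
    calc ∫⁻ ω, (∑ n ∈ Finset.range N, ((Z n ω : ℝ≥0∞))) ^ ℓr ∂μ
        = ((∫⁻ ω, (∑ n ∈ Finset.range N, ((Z n ω : ℝ≥0∞))) ^ ℓr ∂μ) ^ (1/ℓr)) ^ ℓr := by
          rw [← ENNReal.rpow_mul, one_div, inv_mul_cancel₀ (ne_of_gt hℓrpos),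
            ENNReal.rpow_one]
      _ ≤ T ^ ℓr := ENNReal.rpow_le_rpow h4 hℓrpos.le
  refine lt_of_le_of_lt (iSup_le hbound) ?_
  exact ENNReal.rpow_lt_top_of_nonneg hℓrpos.le hTtop
end

section
/- Let (Z_n, M_n) be a subcritical marked Galton-Watson process (μ < 1) with E[M_∞] = ξ_1 > 0, where M_∞ is the total number of marks. Then the process H_n = Z_n + M_n/ξ_1 is a martingale with respect to (F_n), with H_0 = 1. -/
open MeasureTheory ProbabilityTheory Filter Finset
open scoped ENNReal NNReal Topology

/-- compose with a measurable ℕ-valued index -/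
lemma aux_meas_comp_nat {Ω α : Type*} {m : MeasurableSpace Ω} [MeasurableSpace α]
    {N : Ω → ℕ} (hN : Measurable N) {F : ℕ → Ω → α} (hF : ∀ z, Measurable (F z)) :
    Measurable fun ω => F (N ω) ω := by
  have : (fun ω => F (N ω) ω) = (fun p : Ω × ℕ => F p.2 p.1) ∘ (fun ω => (ω, N ω)) := rfl
  rw [this]
  exact (measurable_from_prod_countable_left (fun z => hF z)).comp (measurable_id.prodMk hN)

/-- integrability of ℕ-valued function from finite lintegral -/
lemma aux_integrable_nat {Ω : Type*} {m : MeasurableSpace Ω} {μ : Measure Ω}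
    {f : Ω → ℕ} (hf : Measurable f) (hfin : ∫⁻ ω, (f ω : ℝ≥0∞) ∂μ < ∞) :
    Integrable (fun ω => (f ω : ℝ)) μ := by
  refine ⟨(measurable_from_top.comp hf).aestronglyMeasurable, ?_⟩
  rw [hasFiniteIntegral_def]
  simpa using hfin

/-- set integral of a nonneg ℕ-valued function equals toReal of the set lintegral -/
lemma aux_integral_eq_lintegral {Ω : Type*} {m : MeasurableSpace Ω} {μ : Measure Ω}
    {f : Ω → ℕ} (hf : Measurable f) (s : Set Ω) :
    ∫ ω in s, (f ω : ℝ) ∂μ = (∫⁻ ω in s, (f ω : ℝ≥0∞) ∂μ).toReal := by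
  rw [integral_eq_lintegral_of_nonneg_ae (ae_of_all _ fun ω => by positivity)
    (Measurable.aestronglyMeasurable (f := fun ω => (f ω : ℝ)) (μ := μ.restrict s)
      (measurable_from_top.comp hf))]
  congr 1
  exact lintegral_congr fun ω => by simp

lemma aux_wald {Ω : Type*} {mΩ : MeasurableSpace Ω} {μ : Measure Ω} [IsProbabilityMeasure μ]
    {m : MeasurableSpace Ω} (hm : m ≤ mΩ)
    {N : Ω → ℕ} (hNm : Measurable[m] N)
    {X : ℕ → Ω → ℝ≥0∞} (hX : ∀ i, Measurable[mΩ] (X i))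
    {c : ℝ≥0∞} (hc : ∀ i, ∫⁻ ω, X i ω ∂μ = c)
    (hindep : Indep m (⨆ i, MeasurableSpace.comap (X i) inferInstance) μ)
    {A : Set Ω} (hA : MeasurableSet[m] A) :
    ∫⁻ ω in A, (∑ i ∈ Finset.range (N ω), X i ω) ∂μ
      = c * ∫⁻ ω in A, (N ω : ℝ≥0∞) ∂μ := by
  set B : ℕ → Set Ω := fun z => A ∩ {ω | N ω = z} with hB
  have hBm : ∀ z, MeasurableSet[m] (B z) := fun z =>
    hA.inter (hNm (measurableSet_singleton z))
  have hBm' : ∀ z, MeasurableSet[mΩ] (B z) := fun z => hm _ (hBm z)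
  have hAU : A = ⋃ z, B z := by
    ext ω; simp [hB]
  have hdisj : Pairwise (Function.onFun Disjoint B) := by
    intro i j hij
    simp only [Function.onFun, hB]
    exact Set.disjoint_left.2 fun ω hi hj => hij (hi.2.symm.trans hj.2)
  have hTmeas : ∀ z : ℕ, Measurable[⨆ i, MeasurableSpace.comap (X i) inferInstance]
      (fun ω => ∑ i ∈ Finset.range z, X i ω) := by
    intro z
    apply Finset.measurable_sum
    intro i _
    exact (Measurable.of_comap_le le_rfl).mono
      (le_iSup (fun j => MeasurableSpace.comap (X j) inferInstance) i) le_rfl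
  have hsup_le : (⨆ i, MeasurableSpace.comap (X i) inferInstance) ≤ mΩ :=
    iSup_le fun i => (hX i).comap_le
  have hpiece : ∀ z : ℕ, ∫⁻ ω in B z, (∑ i ∈ Finset.range (N ω), X i ω) ∂μ
      = μ (B z) * ((z : ℝ≥0∞) * c) := by
    intro z
    have h1 : ∫⁻ ω in B z, (∑ i ∈ Finset.range (N ω), X i ω) ∂μ
        = ∫⁻ ω in B z, (∑ i ∈ Finset.range z, X i ω) ∂μ := by
      refine setLIntegral_congr_fun (hBm' z) (fun ω hω => ?_)
      rw [hω.2]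
    rw [h1, ← lintegral_indicator (hBm' z)]
    have h2 : (B z).indicator (fun ω => ∑ i ∈ Finset.range z, X i ω)
        = ((B z).indicator (fun _ => (1:ℝ≥0∞))) * (fun ω => ∑ i ∈ Finset.range z, X i ω) := by
      funext ω
      by_cases hω : ω ∈ B z <;> simp [Set.indicator, hω]
    rw [h2]
    have hind : IndepFun ((B z).indicator (fun _ => (1:ℝ≥0∞)))
        (fun ω => ∑ i ∈ Finset.range z, X i ω) μ := by
      have hindm : Measurable[m] ((B z).indicator (fun _ => (1:ℝ≥0∞))) :=
        measurable_const.indicator (hBm z)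
      have h3 : MeasurableSpace.comap ((B z).indicator (fun _ => (1:ℝ≥0∞))) inferInstance ≤ m :=
        Measurable.comap_le hindm
      have h4 : MeasurableSpace.comap (fun ω => ∑ i ∈ Finset.range z, X i ω) inferInstance
          ≤ ⨆ i, MeasurableSpace.comap (X i) inferInstance :=
        Measurable.comap_le (hTmeas z)
      exact indep_of_indep_of_le_right (indep_of_indep_of_le_left hindep h3) h4
    have hint1 : ∫⁻ ω, (B z).indicator (fun _ => (1:ℝ≥0∞)) ω ∂μ = μ (B z) := by
      rw [lintegral_indicator (hBm' z)]; simp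
    rw [lintegral_mul_eq_lintegral_mul_lintegral_of_indepFun
        (measurable_const.indicator (hBm' z)) ((hTmeas z).mono hsup_le le_rfl) hind,
      hint1, lintegral_finset_sum _ (fun i _ => hX i)]
    congr 1
    rw [Finset.sum_congr rfl (fun i _ => hc i)]
    simp [mul_comm]
  have hNpiece : ∀ z : ℕ, ∫⁻ ω in B z, (N ω : ℝ≥0∞) ∂μ = (z : ℝ≥0∞) * μ (B z) := by
    intro z
    have h5 : ∫⁻ ω in B z, (N ω : ℝ≥0∞) ∂μ = ∫⁻ _ in B z, (z : ℝ≥0∞) ∂μ := by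
      refine setLIntegral_congr_fun (hBm' z) (fun ω hω => ?_)
      rw [hω.2]
    rw [h5, setLIntegral_const]
  calc ∫⁻ ω in A, (∑ i ∈ Finset.range (N ω), X i ω) ∂μ
      = ∑' z, ∫⁻ ω in B z, (∑ i ∈ Finset.range (N ω), X i ω) ∂μ := by
        rw [hAU, lintegral_iUnion hBm' hdisj]
    _ = ∑' z : ℕ, μ (B z) * ((z : ℝ≥0∞) * c) := tsum_congr hpiece
    _ = c * ∑' z : ℕ, (z : ℝ≥0∞) * μ (B z) := by
        rw [← ENNReal.tsum_mul_left]
        exact tsum_congr fun z => by ring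
    _ = c * ∫⁻ ω in A, (N ω : ℝ≥0∞) ∂μ := by
        rw [hAU, lintegral_iUnion hBm' hdisj]
        exact congrArg _ (tsum_congr fun z => (hNpiece z).symm)

lemma aux_lintegral_law {Ω : Type*} {mΩ : MeasurableSpace Ω} {μ : Measure Ω}
    {f : Ω → ℕ × Bool} (hf : Measurable f) (g : ℕ × Bool → ℝ≥0∞) :
    ∫⁻ ω, g (f ω) ∂μ = ∑' k : ℕ, (g (k, false) * μ {ω | f ω = (k, false)}
      + g (k, true) * μ {ω | f ω = (k, true)}) := by
  rw [← lintegral_map (measurable_of_countable g) hf, lintegral_countable' g]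
  rw [ENNReal.tsum_prod']
  refine tsum_congr fun k => ?_
  rw [tsum_bool]
  have h : ∀ x : ℕ × Bool, (μ.map f) {x} = μ {ω | f ω = x} := by
    intro x
    rw [Measure.map_apply hf (measurableSet_singleton _)]
    rfl
  rw [h, h]

theorem stmt_9
    {Ω : Type*} [mΩ : MeasurableSpace Ω] (μ : Measure Ω) [IsProbabilityMeasure μ]
    (p q : ℕ → ℝ) (hp : ∀ k, 0 ≤ p k) (hpsum : ∑' k, p k = 1)
    (hq : ∀ k, q k ∈ Set.Icc (0 : ℝ) 1)
    (hdeg : p 0 + p 1 < 1) (hmark : ∃ k, 0 < p k * q k)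
    (ξ : ℕ → ℕ → Ω → ℕ × Bool)
    (hξmeas : ∀ n i, Measurable (ξ n i))
    (hξindep : iIndepFun
      (fun ni : ℕ × ℕ => ξ ni.1 ni.2) μ)
    (hξlaw : ∀ n i k η, μ {ω | ξ n i ω = (k, η)} =
      ENNReal.ofReal (p k * if η then q k else 1 - q k))
    (Z M : ℕ → Ω → ℕ)
    (hZ0 : ∀ ω, Z 0 ω = 1)
    (hZrec : ∀ n ω, Z (n + 1) ω = ∑ i ∈ Finset.range (Z n ω), (ξ n i ω).1)
    (hM0 : ∀ ω, M 0 ω = 0)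
    (hMrec : ∀ n ω, M (n + 1) ω = M n ω +
      ∑ i ∈ Finset.range (Z n ω), (if (ξ n i ω).2 then 1 else 0))
    (ℱ : Filtration ℕ mΩ)
    (hℱ : ∀ n, ℱ n = ⨆ (m : ℕ) (_ : m < n) (i : ℕ),
      MeasurableSpace.comap (ξ m i) inferInstance)
    (mp : ℝ) (hmean : HasSum (fun k : ℕ => (k : ℝ) * p k) mp)
    (hsub : mp < 1)
    (Minf : Ω → ℕ) (hMinfmeas : Measurable Minf)
    (hMinf : ∀ᵐ ω ∂μ, ∃ N, ∀ n ≥ N, M n ω = Minf ω)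
    (xi1 : ℝ) (hxi1 : xi1 = ∫ ω, (Minf ω : ℝ) ∂μ) (hxi1pos : 0 < xi1) :
    Martingale (fun n ω => (Z n ω : ℝ) + (M n ω : ℝ) / xi1) ℱ μ ∧
      ∀ ω, (Z 0 ω : ℝ) + (M 0 ω : ℝ) / xi1 = 1 := by
  have hm : ∀ n, (ℱ n : MeasurableSpace Ω) ≤ mΩ := fun n => ℱ.le n
  -- summability facts
  have hsp : Summable p := by
    by_contra h
    rw [tsum_eq_zero_of_not_summable h] at hpsum
    norm_num at hpsum
  set mq : ℝ := ∑' k, p k * q k with hmqdef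
  have hpq_nonneg : ∀ k, 0 ≤ p k * q k := fun k => mul_nonneg (hp k) (hq k).1
  have hpq_summable : Summable (fun k => p k * q k) :=
    Summable.of_nonneg_of_le hpq_nonneg
      (fun k => mul_le_of_le_one_right (hp k) (hq k).2) hsp
  have hmq0 : 0 ≤ mq := tsum_nonneg hpq_nonneg
  have hmp0 : 0 ≤ mp := by
    rw [← hmean.tsum_eq]
    exact tsum_nonneg fun k => mul_nonneg (Nat.cast_nonneg k) (hp k)
  -- measurability with respect to the filtration
  have hcomap_le : ∀ n i m', n < m' →
      MeasurableSpace.comap (ξ n i) inferInstance ≤ ℱ m' := by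
    intro n i m' hnm
    rw [hℱ m']
    exact le_iSup_of_le n (le_iSup_of_le hnm (le_iSup
      (fun j => MeasurableSpace.comap (ξ n j) inferInstance) i))
  have hξF : ∀ n i, Measurable[ℱ (n+1)] (ξ n i) := fun n i =>
    Measurable.of_comap_le (hcomap_le n i (n+1) (Nat.lt_succ_self n))
  have hZmeas : ∀ n, Measurable[ℱ n] (Z n) := by
    intro n
    induction n with
    | zero =>
      have h0 : Z 0 = fun _ => 1 := funext hZ0
      rw [h0]; exact measurable_const
    | succ n ih =>
      have hZn : Measurable[ℱ (n+1)] (Z n) := ih.mono (ℱ.mono (Nat.le_succ n)) le_rfl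
      have hF : ∀ z, Measurable[ℱ (n+1)] (fun ω => ∑ i ∈ Finset.range z, (ξ n i ω).1) :=
        fun z => Finset.measurable_sum _ fun i _ => measurable_fst.comp (hξF n i)
      have h1 : Z (n+1) = fun ω => ∑ i ∈ Finset.range (Z n ω), (ξ n i ω).1 :=
        funext (hZrec n)
      rw [h1]
      exact aux_meas_comp_nat (m := ℱ (n+1)) hZn hF
  have hMmeas : ∀ n, Measurable[ℱ n] (M n) := by
    intro n
    induction n with
    | zero =>
      have h0 : M 0 = fun _ => 0 := funext hM0
      rw [h0]; exact measurable_const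
    | succ n ih =>
      have hMn : Measurable[ℱ (n+1)] (M n) := ih.mono (ℱ.mono (Nat.le_succ n)) le_rfl
      have hZn : Measurable[ℱ (n+1)] (Z n) := (hZmeas n).mono (ℱ.mono (Nat.le_succ n)) le_rfl
      have hF : ∀ z, Measurable[ℱ (n+1)]
          (fun ω => ∑ i ∈ Finset.range z, (if (ξ n i ω).2 then 1 else 0 : ℕ)) := by
        intro z
        apply Finset.measurable_sum
        intro i _
        exact (measurable_of_countable (fun b : Bool => if b then 1 else 0 : Bool → ℕ)).comp
          (measurable_snd.comp (hξF n i))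
      have h1 : M (n+1) = fun ω => M n ω +
          ∑ i ∈ Finset.range (Z n ω), (if (ξ n i ω).2 then 1 else 0 : ℕ) := funext (hMrec n)
      rw [h1]
      exact hMn.add (aux_meas_comp_nat (m := ℱ (n+1)) hZn hF)
  have hZmeas' : ∀ n, Measurable (Z n) := fun n => (hZmeas n).mono (hm n) le_rfl
  have hMmeas' : ∀ n, Measurable (M n) := fun n => (hMmeas n).mono (hm n) le_rfl
  -- independence of generation n from the past
  have hiIndep : iIndep (fun ni : ℕ × ℕ =>
      MeasurableSpace.comap (ξ ni.1 ni.2) inferInstance) μ := hξindep.iIndep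
  have hindepF : ∀ n, Indep (ℱ n) (⨆ i, MeasurableSpace.comap (ξ n i) inferInstance) μ := by
    intro n
    have hdisjST : Disjoint {ni : ℕ × ℕ | ni.1 < n} {ni : ℕ × ℕ | ni.1 = n} := by
      rw [Set.disjoint_left]
      rintro ⟨a, b⟩ ha hb
      simp only [Set.mem_setOf_eq] at ha hb
      omega
    have h := indep_iSup_of_disjoint
      (fun ni : ℕ × ℕ => (hξmeas ni.1 ni.2).comap_le) hiIndep hdisjST
    have hS : (⨆ ni ∈ {ni : ℕ × ℕ | ni.1 < n},
        MeasurableSpace.comap (ξ ni.1 ni.2) inferInstance) = ℱ n := by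
      rw [hℱ n]
      apply le_antisymm
      · refine iSup₂_le fun ni hni => ?_
        exact le_iSup_of_le ni.1 (le_iSup_of_le hni
          (le_iSup (fun j => MeasurableSpace.comap (ξ ni.1 j) inferInstance) ni.2))
      · refine iSup_le fun m' => iSup_le fun hmn => iSup_le fun i => ?_
        exact le_iSup_of_le (m', i) (le_iSup_of_le hmn le_rfl)
    rw [hS] at h
    refine indep_of_indep_of_le_right h ?_
    refine iSup_le fun i => ?_
    exact le_iSup_of_le (n, i) (le_iSup_of_le rfl le_rfl)
  -- the ℝ≥0∞-valued step variables
  have hX1meas : ∀ n i, Measurable (fun ω => ((ξ n i ω).1 : ℝ≥0∞)) := fun n i =>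
    (measurable_of_countable (fun x : ℕ × Bool => (x.1 : ℝ≥0∞))).comp (hξmeas n i)
  have hX2meas : ∀ n i, Measurable (fun ω => (if (ξ n i ω).2 then (1:ℝ≥0∞) else 0)) := fun n i =>
    (measurable_of_countable (fun x : ℕ × Bool => if x.2 then (1:ℝ≥0∞) else 0)).comp (hξmeas n i)
  -- expectations of the step variables
  have hX1int : ∀ n i, ∫⁻ ω, ((ξ n i ω).1 : ℝ≥0∞) ∂μ = ENNReal.ofReal mp := by
    intro n i
    have h := aux_lintegral_law (μ := μ) (hξmeas n i) (fun x : ℕ × Bool => (x.1 : ℝ≥0∞))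
    simp only at h
    rw [h]
    have h2 : ∀ k : ℕ, (k : ℝ≥0∞) * μ {ω | ξ n i ω = (k, false)}
        + (k : ℝ≥0∞) * μ {ω | ξ n i ω = (k, true)} = ENNReal.ofReal ((k : ℝ) * p k) := by
      intro k
      have ha : (0:ℝ) ≤ (k : ℝ) * (p k * (1 - q k)) :=
        mul_nonneg (Nat.cast_nonneg k) (mul_nonneg (hp k) (by linarith [(hq k).2]))
      have hb : (0:ℝ) ≤ (k : ℝ) * (p k * q k) :=
        mul_nonneg (Nat.cast_nonneg k) (mul_nonneg (hp k) (hq k).1)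
      rw [hξlaw n i k false, hξlaw n i k true]
      norm_num
      rw [show (k : ℝ≥0∞) = ENNReal.ofReal (k : ℝ) by simp,
        ← ENNReal.ofReal_mul (Nat.cast_nonneg k), ← ENNReal.ofReal_mul (Nat.cast_nonneg k),
        ← ENNReal.ofReal_add ha hb]
      congr 1
      ring
      exact ENNReal.ofReal_mul (Nat.cast_nonneg k)
    rw [← hmean.tsum_eq, ENNReal.ofReal_tsum_of_nonneg
      (fun k => mul_nonneg (Nat.cast_nonneg k) (hp k)) hmean.summable]
    exact tsum_congr h2
  have hX2int : ∀ n i, ∫⁻ ω, (if (ξ n i ω).2 then (1:ℝ≥0∞) else 0) ∂μ = ENNReal.ofReal mq := by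
    intro n i
    have h := aux_lintegral_law (μ := μ) (hξmeas n i) (fun x : ℕ × Bool => if x.2 then (1:ℝ≥0∞) else 0)
    simp only at h
    rw [h]
    have h2 : ∀ k : ℕ, (if false then (1:ℝ≥0∞) else 0) * μ {ω | ξ n i ω = (k, false)}
        + (if true then (1:ℝ≥0∞) else 0) * μ {ω | ξ n i ω = (k, true)}
        = ENNReal.ofReal (p k * q k) := by
      intro k
      rw [hξlaw n i k true]
      simp
    rw [hmqdef, ENNReal.ofReal_tsum_of_nonneg hpq_nonneg hpq_summable]
    exact tsum_congr h2
  -- independence for the wald lemma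
  have hindep1 : ∀ n, Indep (ℱ n)
      (⨆ i, MeasurableSpace.comap (fun ω => ((ξ n i ω).1 : ℝ≥0∞)) inferInstance) μ := by
    intro n
    refine indep_of_indep_of_le_right (hindepF n) (iSup_mono fun i => ?_)
    have hξc : Measurable[MeasurableSpace.comap (ξ n i) inferInstance] (ξ n i) :=
      Measurable.of_comap_le le_rfl
    exact Measurable.comap_le
      ((measurable_of_countable (fun x : ℕ × Bool => (x.1 : ℝ≥0∞))).comp hξc)
  have hindep2 : ∀ n, Indep (ℱ n)
      (⨆ i, MeasurableSpace.comap (fun ω => (if (ξ n i ω).2 then (1:ℝ≥0∞) else 0))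
        inferInstance) μ := by
    intro n
    refine indep_of_indep_of_le_right (hindepF n) (iSup_mono fun i => ?_)
    have hξc : Measurable[MeasurableSpace.comap (ξ n i) inferInstance] (ξ n i) :=
      Measurable.of_comap_le le_rfl
    exact Measurable.comap_le
      ((measurable_of_countable (fun x : ℕ × Bool => if x.2 then (1:ℝ≥0∞) else 0)).comp hξc)
  -- wald recursions, for sets in ℱ n
  have hZcast : ∀ n ω, ((Z (n+1) ω : ℝ≥0∞)) = ∑ i ∈ Finset.range (Z n ω), ((ξ n i ω).1 : ℝ≥0∞) := by
    intro n ω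
    rw [hZrec n ω]
    push_cast
    rfl
  have hScast : ∀ n ω, ((∑ i ∈ Finset.range (Z n ω), (if (ξ n i ω).2 then 1 else 0 : ℕ) : ℕ) : ℝ≥0∞)
      = ∑ i ∈ Finset.range (Z n ω), (if (ξ n i ω).2 then (1:ℝ≥0∞) else 0) := by
    intro n ω
    push_cast
    exact Finset.sum_congr rfl fun i _ => by split <;> simp
  have hZwald : ∀ n (A : Set Ω), MeasurableSet[ℱ n] A →
      ∫⁻ ω in A, (Z (n+1) ω : ℝ≥0∞) ∂μ = ENNReal.ofReal mp * ∫⁻ ω in A, (Z n ω : ℝ≥0∞) ∂μ := by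
    intro n A hA
    have := aux_wald (hm n) (hZmeas n) (hX1meas n) (hX1int n) (hindep1 n) hA
    rw [← this]
    exact lintegral_congr fun ω => by rw [hZcast n ω]
  have hSwald : ∀ n (A : Set Ω), MeasurableSet[ℱ n] A →
      ∫⁻ ω in A, ((∑ i ∈ Finset.range (Z n ω), (if (ξ n i ω).2 then 1 else 0 : ℕ) : ℕ) : ℝ≥0∞) ∂μ
        = ENNReal.ofReal mq * ∫⁻ ω in A, (Z n ω : ℝ≥0∞) ∂μ := by
    intro n A hA
    have := aux_wald (hm n) (hZmeas n) (hX2meas n) (hX2int n) (hindep2 n) hA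
    rw [← this]
    exact lintegral_congr fun ω => by rw [hScast n ω]
  -- total masses
  have hZlint : ∀ n, ∫⁻ ω, (Z n ω : ℝ≥0∞) ∂μ = (ENNReal.ofReal mp) ^ n := by
    intro n
    induction n with
    | zero => simp [hZ0]
    | succ n ih =>
      have := hZwald n Set.univ MeasurableSet.univ
      simp only [Measure.restrict_univ] at this
      rw [this, ih, pow_succ]
      ring
  have hrne : ENNReal.ofReal mp ≠ ∞ := ENNReal.ofReal_ne_top
  have hZfin : ∀ n, ∫⁻ ω, (Z n ω : ℝ≥0∞) ∂μ < ∞ := by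
    intro n
    rw [hZlint n]
    exact ENNReal.pow_lt_top (ENNReal.ofReal_lt_top)
  have hSmeasN : ∀ n, Measurable (fun ω =>
      (∑ i ∈ Finset.range (Z n ω), (if (ξ n i ω).2 then 1 else 0 : ℕ))) := by
    intro n
    have hF : ∀ z, Measurable (fun ω => ∑ i ∈ Finset.range z,
        (if (ξ n i ω).2 then 1 else 0 : ℕ)) := by
      intro z
      apply Finset.measurable_sum
      intro i _
      exact (measurable_of_countable
        (fun x : ℕ × Bool => if x.2 then 1 else 0 : ℕ × Bool → ℕ)).comp (hξmeas n i)
    exact aux_meas_comp_nat (hZmeas' n) hF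
  have hSlint : ∀ n, ∫⁻ ω, ((∑ i ∈ Finset.range (Z n ω),
      (if (ξ n i ω).2 then 1 else 0 : ℕ) : ℕ) : ℝ≥0∞) ∂μ
      = ENNReal.ofReal mq * (ENNReal.ofReal mp) ^ n := by
    intro n
    have := hSwald n Set.univ MeasurableSet.univ
    simp only [Measure.restrict_univ] at this
    rw [this, hZlint n]
  have hMlint : ∀ n, ∫⁻ ω, (M n ω : ℝ≥0∞) ∂μ
      = ENNReal.ofReal mq * ∑ m' ∈ Finset.range n, (ENNReal.ofReal mp) ^ m' := by
    intro n
    induction n with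
    | zero => simp [hM0]
    | succ n ih =>
      have hMadd : ∀ ω, ((M (n+1) ω : ℝ≥0∞)) = (M n ω : ℝ≥0∞) +
          ((∑ i ∈ Finset.range (Z n ω), (if (ξ n i ω).2 then 1 else 0 : ℕ) : ℕ) : ℝ≥0∞) := by
        intro ω
        rw [hMrec n ω]
        push_cast
        rfl
      rw [lintegral_congr hMadd, lintegral_add_left
        (show Measurable (fun ω => (M n ω : ℝ≥0∞)) from
          (measurable_of_countable (fun k : ℕ => (k : ℝ≥0∞))).comp (hMmeas' n)), hSlint n, ih,
        Finset.sum_range_succ, mul_add]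
  have hMfin : ∀ n, ∫⁻ ω, (M n ω : ℝ≥0∞) ∂μ < ∞ := by
    intro n
    rw [hMlint n]
    exact ENNReal.mul_lt_top ENNReal.ofReal_lt_top
      (ENNReal.sum_lt_top.2 fun m' _ => ENNReal.pow_lt_top ENNReal.ofReal_lt_top)
  -- identification of xi1
  have hMmono : ∀ ω, Monotone fun n => M n ω := by
    intro ω
    apply monotone_nat_of_le_succ
    intro n
    rw [hMrec n ω]
    exact Nat.le_add_right _ _
  have haeq : (fun ω => (Minf ω : ℝ≥0∞)) =ᵐ[μ] fun ω => ⨆ n, (M n ω : ℝ≥0∞) := by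
    filter_upwards [hMinf] with ω hω
    obtain ⟨N, hN⟩ := hω
    apply le_antisymm
    · rw [← hN N le_rfl]
      exact le_iSup (fun n => (M n ω : ℝ≥0∞)) N
    · refine iSup_le fun n => ?_
      have hle : M n ω ≤ Minf ω := by
        rcases le_total n N with h | h
        · rw [← hN N le_rfl]
          exact hMmono ω h
        · rw [hN n h]
      exact_mod_cast Nat.cast_le.2 hle
  have hr1 : ENNReal.ofReal mp < 1 := by
    rw [← ENNReal.ofReal_one]
    exact ENNReal.ofReal_lt_ofReal_iff_of_nonneg hmp0 |>.2 hsub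
  have hMinf_lint : ∫⁻ ω, (Minf ω : ℝ≥0∞) ∂μ
      = ENNReal.ofReal mq * (1 - ENNReal.ofReal mp)⁻¹ := by
    rw [lintegral_congr_ae haeq,
      lintegral_iSup (fun n => show Measurable (fun ω => (M n ω : ℝ≥0∞)) from
          (measurable_of_countable (fun k : ℕ => (k : ℝ≥0∞))).comp (hMmeas' n))
        (fun a b hab ω => Nat.cast_le.2 (hMmono ω hab))]
    have h1 : ∀ n, ∫⁻ ω, (M n ω : ℝ≥0∞) ∂μ
        = ENNReal.ofReal mq * ∑ m' ∈ Finset.range n, (ENNReal.ofReal mp) ^ m' := hMlint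
    rw [iSup_congr h1, ← ENNReal.mul_iSup, ← ENNReal.tsum_eq_iSup_nat,
      ENNReal.tsum_geometric]
  have h1mp : (0:ℝ) < 1 - mp := by linarith
  have hxi1eq : xi1 = mq / (1 - mp) := by
    have h0 := aux_integral_eq_lintegral (m := mΩ) (μ := μ) hMinfmeas Set.univ
    rw [Measure.restrict_univ] at h0
    rw [hxi1, h0, hMinf_lint]
    rw [show (1 : ℝ≥0∞) - ENNReal.ofReal mp = ENNReal.ofReal (1 - mp) by
      rw [ENNReal.ofReal_sub _ hmp0, ENNReal.ofReal_one],
      ← ENNReal.ofReal_inv_of_pos h1mp,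
      ← ENNReal.ofReal_mul hmq0, ENNReal.toReal_ofReal
        (mul_nonneg hmq0 (inv_nonneg.2 h1mp.le))]
    ring
  have hxi1ne : xi1 ≠ 0 := ne_of_gt hxi1pos
  have hkey : mq = xi1 * (1 - mp) := by
    rw [hxi1eq]
    field_simp
  -- integrability
  have hZint : ∀ n, Integrable (fun ω => (Z n ω : ℝ)) μ := fun n =>
    aux_integrable_nat (hZmeas' n) (hZfin n)
  have hMint : ∀ n, Integrable (fun ω => (M n ω : ℝ)) μ := fun n =>
    aux_integrable_nat (hMmeas' n) (hMfin n)
  -- set integral identities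
  have hsetZ : ∀ n (s : Set Ω), MeasurableSet[ℱ n] s →
      ∫ ω in s, (Z (n+1) ω : ℝ) ∂μ = mp * ∫ ω in s, (Z n ω : ℝ) ∂μ := by
    intro n s hs
    rw [aux_integral_eq_lintegral (hZmeas' (n+1)) s, aux_integral_eq_lintegral (hZmeas' n) s,
      hZwald n s hs, ENNReal.toReal_mul, ENNReal.toReal_ofReal hmp0]
  have hsetS : ∀ n (s : Set Ω), MeasurableSet[ℱ n] s →
      ∫ ω in s, ((∑ i ∈ Finset.range (Z n ω), (if (ξ n i ω).2 then 1 else 0 : ℕ) : ℕ) : ℝ) ∂μ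
        = mq * ∫ ω in s, (Z n ω : ℝ) ∂μ := by
    intro n s hs
    rw [aux_integral_eq_lintegral (hSmeasN n) s, aux_integral_eq_lintegral (hZmeas' n) s,
      hSwald n s hs, ENNReal.toReal_mul, ENNReal.toReal_ofReal hmq0]
  have hSfin : ∀ n, ∫⁻ ω, ((∑ i ∈ Finset.range (Z n ω),
      (if (ξ n i ω).2 then 1 else 0 : ℕ) : ℕ) : ℝ≥0∞) ∂μ < ∞ := by
    intro n
    rw [hSlint n]
    exact ENNReal.mul_lt_top ENNReal.ofReal_lt_top (ENNReal.pow_lt_top ENNReal.ofReal_lt_top)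
  have hSint : ∀ n, Integrable (fun ω =>
      ((∑ i ∈ Finset.range (Z n ω), (if (ξ n i ω).2 then 1 else 0 : ℕ) : ℕ) : ℝ)) μ := fun n =>
    aux_integrable_nat (hSmeasN n) (hSfin n)
  have hsetM : ∀ n (s : Set Ω), MeasurableSet[ℱ n] s →
      ∫ ω in s, (M (n+1) ω : ℝ) ∂μ
        = ∫ ω in s, (M n ω : ℝ) ∂μ + mq * ∫ ω in s, (Z n ω : ℝ) ∂μ := by
    intro n s hs
    have h1 : ∀ ω, (M (n+1) ω : ℝ) = (M n ω : ℝ) +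
        ((∑ i ∈ Finset.range (Z n ω), (if (ξ n i ω).2 then 1 else 0 : ℕ) : ℕ) : ℝ) := by
      intro ω
      rw [hMrec n ω]
      push_cast
      rfl
    rw [setIntegral_congr_fun (hm n s hs) (fun ω _ => h1 ω),
      integral_add ((hMint n).integrableOn) ((hSint n).integrableOn), hsetS n s hs]
  -- the process
  set H : ℕ → Ω → ℝ := fun n ω => (Z n ω : ℝ) + (M n ω : ℝ) / xi1 with hH
  have hHint : ∀ n, Integrable (H n) μ := fun n =>
    (hZint n).add ((hMint n).div_const xi1)
  have hHadapted : StronglyAdapted ℱ H := by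
    intro n
    exact Measurable.stronglyMeasurable
      ((measurable_from_top.comp (hZmeas n)).add
        ((measurable_from_top.comp (hMmeas n)).div_const xi1))
  have hHset : ∀ n (s : Set Ω), MeasurableSet[ℱ n] s →
      ∫ ω in s, H n ω ∂μ = ∫ ω in s, H (n+1) ω ∂μ := by
    intro n s hs
    have hint1 : ∫ ω in s, H n ω ∂μ
        = ∫ ω in s, (Z n ω : ℝ) ∂μ + (∫ ω in s, (M n ω : ℝ) ∂μ) / xi1 := by
      rw [hH]
      rw [integral_add ((hZint n).integrableOn) (((hMint n).div_const xi1).integrableOn),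
        integral_div]
    have hint2 : ∫ ω in s, H (n+1) ω ∂μ
        = ∫ ω in s, (Z (n+1) ω : ℝ) ∂μ + (∫ ω in s, (M (n+1) ω : ℝ) ∂μ) / xi1 := by
      rw [hH]
      rw [integral_add ((hZint (n+1)).integrableOn)
        (((hMint (n+1)).div_const xi1).integrableOn), integral_div]
    rw [hint1, hint2, hsetZ n s hs, hsetM n s hs]
    set a := ∫ ω in s, (Z n ω : ℝ) ∂μ
    set b := ∫ ω in s, (M n ω : ℝ) ∂μ
    rw [hkey]
    field_simp
    ring
  refine ⟨martingale_of_setIntegral_eq_succ hHadapted hHint hHset, fun ω => ?_⟩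
  simp [hZ0, hM0]
end

section
/- Let (Z_n, M_n) be a marked Galton-Watson process and for s, t ∈ [0,1] let f_s(t) = E[s^{M_1} t^{Z_1}]. Then for all n, p ≥ 0, E[s^{M_{n+p}} t^{Z_{n+p}} | F_n] = s^{M_n} (f_s^{∘p}(t))^{Z_n}, where f_s^{∘p} denotes the p-fold composition of f_s. In particular E[s^{M_p} t^{Z_p}] = f_s^{∘p}(t). -/
open MeasureTheory ProbabilityTheory Filter Finset
open scoped ENNReal NNReal Topology

private lemma meas_comp_nat' {Ω β : Type*} [MeasurableSpace β] (m : MeasurableSpace Ω)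
    {g : Ω → ℕ} {F : ℕ → Ω → β} (hg : Measurable[m] g)
    (hF : ∀ z, Measurable[m] (F z)) :
    Measurable[m] fun ω => F (g ω) ω := by
  letI := m
  have h1 : Measurable fun q : Ω × ℕ => F q.2 q.1 :=
    measurable_from_prod_countable_left fun z => hF z
  exact h1.comp (measurable_id.prodMk hg)

set_option maxHeartbeats 1000000 in
theorem stmt_11
    {Ω : Type*} [mΩ : MeasurableSpace Ω] (μ : Measure Ω) [IsProbabilityMeasure μ]
    (p q : ℕ → ℝ) (hp : ∀ k, 0 ≤ p k) (hpsum : ∑' k, p k = 1)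
    (hq : ∀ k, q k ∈ Set.Icc (0 : ℝ) 1)
    (hdeg : p 0 + p 1 < 1) (hmark : ∃ k, 0 < p k * q k)
    (ξ : ℕ → ℕ → Ω → ℕ × Bool)
    (hξmeas : ∀ n i, Measurable (ξ n i))
    (hξindep : iIndepFun
      (fun ni : ℕ × ℕ => ξ ni.1 ni.2) μ)
    (hξlaw : ∀ n i k η, μ {ω | ξ n i ω = (k, η)} =
      ENNReal.ofReal (p k * if η then q k else 1 - q k))
    (Z M : ℕ → Ω → ℕ)
    (hZ0 : ∀ ω, Z 0 ω = 1)
    (hZrec : ∀ n ω, Z (n + 1) ω = ∑ i ∈ Finset.range (Z n ω), (ξ n i ω).1)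
    (hM0 : ∀ ω, M 0 ω = 0)
    (hMrec : ∀ n ω, M (n + 1) ω = M n ω +
      ∑ i ∈ Finset.range (Z n ω), (if (ξ n i ω).2 then 1 else 0))
    (ℱ : Filtration ℕ mΩ)
    (hℱ : ∀ n, ℱ n = ⨆ (m : ℕ) (_ : m < n) (i : ℕ),
      MeasurableSpace.comap (ξ m i) inferInstance)
    (s t : ℝ) (hs : s ∈ Set.Icc (0 : ℝ) 1) (ht : t ∈ Set.Icc (0 : ℝ) 1)
    (fs : ℝ → ℝ)
    (hfs : ∀ u, fs u = ∫ ω, s ^ M 1 ω * u ^ Z 1 ω ∂μ) :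
    (∀ n k, (μ[fun ω => s ^ M (n + k) ω * t ^ Z (n + k) ω|ℱ n]) =ᵐ[μ]
        fun ω => s ^ M n ω * (fs^[k] t) ^ Z n ω) ∧
      ∀ k, (∫ ω, s ^ M k ω * t ^ Z k ω ∂μ) = fs^[k] t := by
  obtain ⟨hs0, hs1⟩ := hs
  -- comap of ξ m i is below ℱ n for m < n
  have hcomap : ∀ {m n : ℕ}, m < n → ∀ i,
      MeasurableSpace.comap (ξ m i) inferInstance ≤ ℱ n := by
    intro m n hmn i
    rw [hℱ n]
    exact le_iSup_of_le m (le_iSup_of_le hmn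
      (le_iSup (fun i => MeasurableSpace.comap (ξ m i) inferInstance) i))
  -- Z n and M n are ℱ n - measurable
  have hZM : ∀ n, Measurable[ℱ n] (Z n) ∧ Measurable[ℱ n] (M n) := by
    intro n
    induction n with
    | zero =>
      constructor
      · have h : Z 0 = fun _ => 1 := funext hZ0
        rw [h]; exact measurable_const
      · have h : M 0 = fun _ => 0 := funext hM0
        rw [h]; exact measurable_const
    | succ n ih =>
      have hξm : ∀ i, Measurable[ℱ (n + 1)] (ξ n i) :=
        fun i => Measurable.of_comap_le (hcomap (Nat.lt_succ_self n) i)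
      have hZn : Measurable[ℱ (n + 1)] (Z n) := ih.1.mono (ℱ.mono n.le_succ) le_rfl
      have hMn : Measurable[ℱ (n + 1)] (M n) := ih.2.mono (ℱ.mono n.le_succ) le_rfl
      constructor
      · have h : Z (n + 1) = fun ω =>
            (fun z ω' => ∑ i ∈ Finset.range z, (ξ n i ω').1) (Z n ω) ω :=
          funext (hZrec n)
        rw [h]
        exact meas_comp_nat' (ℱ (n+1)) hZn fun z =>
          Finset.measurable_sum _ fun i _ => measurable_fst.comp (hξm i)
      · have h : M (n + 1) = fun ω =>
            (fun z ω' => M n ω' + ∑ i ∈ Finset.range z,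
              (if (ξ n i ω').2 then 1 else 0)) (Z n ω) ω :=
          funext (hMrec n)
        rw [h]
        exact meas_comp_nat' (ℱ (n+1))
          (F := fun z ω' => M n ω' + ∑ i ∈ Finset.range z,
            (if (ξ n i ω').2 then 1 else 0)) hZn fun z =>
          hMn.add (Finset.measurable_sum _ fun i _ =>
            ((measurable_of_countable fun b : Bool => if b then (1:ℕ) else 0)).comp
              (measurable_snd.comp (hξm i)))
  -- the one-individual generating function
  set H : ℝ → ℕ × Bool → ℝ := fun u x => (if x.2 then s else 1) * u ^ x.1 with hH
  have hHmeas : ∀ u, Measurable (H u) := fun u => measurable_of_countable _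
  have hHmem : ∀ u, u ∈ Set.Icc (0:ℝ) 1 → ∀ x, H u x ∈ Set.Icc (0:ℝ) 1 := by
    rintro u ⟨hu0, hu1⟩ ⟨k, b⟩
    constructor
    · exact mul_nonneg (by by_cases h : b <;> simp [h, hs0]) (pow_nonneg hu0 _)
    · refine mul_le_one₀ (by by_cases h : b <;> simp [h, hs1]) (pow_nonneg hu0 _)
        (pow_le_one₀ hu0 hu1)
  -- all ξ n i have the same law
  have hmap : ∀ n i, μ.map (ξ n i) = μ.map (ξ 0 0) := by
    intro n i
    refine Measure.ext_of_singleton fun x => ?_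
    obtain ⟨k, η⟩ := x
    rw [Measure.map_apply (hξmeas n i) (measurableSet_singleton _),
      Measure.map_apply (hξmeas 0 0) (measurableSet_singleton _)]
    have h1 : ξ n i ⁻¹' {(k, η)} = {ω | ξ n i ω = (k, η)} := rfl
    have h2 : ξ 0 0 ⁻¹' {(k, η)} = {ω | ξ 0 0 ω = (k, η)} := rfl
    rw [h1, h2, hξlaw n i k η, hξlaw 0 0 k η]
  have hint_ξ : ∀ n i u, ∫ ω, H u (ξ n i ω) ∂μ = fs u := by
    intro n i u
    have e1 : ∫ ω, H u (ξ n i ω) ∂μ = ∫ x, H u x ∂(μ.map (ξ n i)) :=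
      (integral_map (hξmeas n i).aemeasurable (hHmeas u).aestronglyMeasurable).symm
    have e2 : ∫ x, H u x ∂(μ.map (ξ 0 0)) = ∫ ω, H u (ξ 0 0 ω) ∂μ :=
      integral_map (hξmeas 0 0).aemeasurable (hHmeas u).aestronglyMeasurable
    have e3 : ∀ ω, s ^ M 1 ω * u ^ Z 1 ω = H u (ξ 0 0 ω) := by
      intro ω
      have hM1 : M 1 ω = if (ξ 0 0 ω).2 then 1 else 0 := by
        rw [hMrec 0 ω, hM0 ω, hZ0 ω, Finset.sum_range_one, zero_add]
      have hZ1 : Z 1 ω = (ξ 0 0 ω).1 := by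
        rw [hZrec 0 ω, hZ0 ω, Finset.sum_range_one]
      rw [hM1, hZ1, hH]
      by_cases hb : (ξ 0 0 ω).2 <;> simp [hb]
    rw [e1, hmap n i, e2, hfs u]
    exact (integral_congr_ae (Filter.Eventually.of_forall e3)).symm
  -- integrability of bounded measurable functions
  have hintbd : ∀ {f : Ω → ℝ}, Measurable f → (∀ ω, f ω ∈ Set.Icc (0:ℝ) 1) →
      Integrable f μ := by
    intro f hf hbd
    refine Integrable.mono' (integrable_const 1) hf.aestronglyMeasurable
      (Filter.Eventually.of_forall fun ω => ?_)
    rw [Real.norm_eq_abs, abs_of_nonneg (hbd ω).1]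
    exact (hbd ω).2
  -- fs maps [0,1] to [0,1]
  have hfs_mem : ∀ u, u ∈ Set.Icc (0:ℝ) 1 → fs u ∈ Set.Icc (0:ℝ) 1 := by
    intro u hu
    have hint : Integrable (fun ω => H u (ξ 0 0 ω)) μ :=
      hintbd ((hHmeas u).comp (hξmeas 0 0)) fun ω => hHmem u hu _
    have h : fs u = ∫ ω, H u (ξ 0 0 ω) ∂μ := (hint_ξ 0 0 u).symm
    rw [h]
    constructor
    · exact integral_nonneg fun ω => (hHmem u hu _).1
    · calc ∫ ω, H u (ξ 0 0 ω) ∂μ ≤ ∫ _, (1:ℝ) ∂μ :=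
            integral_mono hint (integrable_const 1) fun ω => (hHmem u hu _).2
        _ = 1 := by simp
  have hiter_mem : ∀ k u, u ∈ Set.Icc (0:ℝ) 1 → fs^[k] u ∈ Set.Icc (0:ℝ) 1 := by
    intro k
    induction k with
    | zero => intro u hu; simpa using hu
    | succ k ih =>
      intro u hu
      rw [Function.iterate_succ_apply]
      exact ih _ (hfs_mem u hu)
  -- measurability and integrability of the main integrands
  have hmeasfn : ∀ (u : ℝ) (k : ℕ), Measurable fun ω => s ^ M k ω * u ^ Z k ω := by
    intro u k
    have hMk : Measurable (M k) := ((hZM k).2).mono (ℱ.le k) le_rfl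
    have hZk : Measurable (Z k) := ((hZM k).1).mono (ℱ.le k) le_rfl
    exact ((measurable_from_nat (f := fun m : ℕ => s ^ m)).comp hMk).mul
      ((measurable_from_nat (f := fun m : ℕ => u ^ m)).comp hZk)
  have hmemfn : ∀ u, u ∈ Set.Icc (0:ℝ) 1 → ∀ (k : ℕ) ω,
      s ^ M k ω * u ^ Z k ω ∈ Set.Icc (0:ℝ) 1 := by
    rintro u ⟨hu0, hu1⟩ k ω
    exact ⟨mul_nonneg (pow_nonneg hs0 _) (pow_nonneg hu0 _),
      mul_le_one₀ (pow_le_one₀ hs0 hs1) (pow_nonneg hu0 _) (pow_le_one₀ hu0 hu1)⟩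
  have hintfn : ∀ u, u ∈ Set.Icc (0:ℝ) 1 → ∀ k,
      Integrable (fun ω => s ^ M k ω * u ^ Z k ω) μ :=
    fun u hu k => hintbd (hmeasfn u k) (hmemfn u hu k)
  -- independence infrastructure
  have hIndepGen : ∀ (S T : Set (ℕ × ℕ)), Disjoint S T →
      Indep (⨆ pq ∈ S, MeasurableSpace.comap (ξ pq.1 pq.2) inferInstance)
        (⨆ pq ∈ T, MeasurableSpace.comap (ξ pq.1 pq.2) inferInstance) μ := by
    intro S T hST
    have hii : iIndep (fun pq : ℕ × ℕ =>
        MeasurableSpace.comap (ξ pq.1 pq.2) inferInstance) μ := hξindep.iIndep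
    exact indep_iSup_of_disjoint (m := fun pq : ℕ × ℕ =>
      MeasurableSpace.comap (ξ pq.1 pq.2) inferInstance)
      (fun pq => (hξmeas pq.1 pq.2).comap_le) hii hST
  have mkIF : ∀ {m₁ m₂ : MeasurableSpace Ω} {f g : Ω → ℝ}, Indep m₁ m₂ μ →
      Measurable[m₁] f → Measurable[m₂] g → IndepFun f g μ :=
    fun h hf hg => indep_of_indep_of_le_right
      (indep_of_indep_of_le_left h (measurable_iff_comap_le.1 hf))
      (measurable_iff_comap_le.1 hg)
  have hIndep1 : ∀ n, Indep (ℱ n)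
      (⨆ i, MeasurableSpace.comap (ξ n i) inferInstance) μ := by
    intro n
    have h := hIndepGen {pq : ℕ × ℕ | pq.1 < n} {pq : ℕ × ℕ | pq.1 = n}
      (Set.disjoint_left.2 fun pq h1 h2 => absurd (h2 ▸ h1) (lt_irrefl n))
    refine indep_of_indep_of_le_right (indep_of_indep_of_le_left h ?_) ?_
    · rw [hℱ n]
      refine iSup_le fun m => iSup_le fun hm => iSup_le fun i => ?_
      exact le_iSup₂ (f := fun (pq : ℕ × ℕ) (_ : pq ∈ {pq : ℕ × ℕ | pq.1 < n}) =>
        MeasurableSpace.comap (ξ pq.1 pq.2) inferInstance) (m, i) hm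
    · refine iSup_le fun i => ?_
      exact le_iSup₂ (f := fun (pq : ℕ × ℕ) (_ : pq ∈ {pq : ℕ × ℕ | pq.1 = n}) =>
        MeasurableSpace.comap (ξ pq.1 pq.2) inferInstance) (n, i) rfl
  -- integral of the product over one generation
  have hprod : ∀ n, ∀ u ∈ Set.Icc (0:ℝ) 1, ∀ z,
      ∫ ω, ∏ i ∈ Finset.range z, H u (ξ n i ω) ∂μ = fs u ^ z := by
    intro n u hu z
    induction z with
    | zero => simp
    | succ z ih =>
      have hST : Disjoint {pq : ℕ × ℕ | pq.1 = n ∧ pq.2 < z} ({(n, z)} : Set (ℕ × ℕ)) :=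
        Set.disjoint_left.2 (by
          rintro ⟨a, b⟩ ⟨h1, h2⟩ h3
          rw [Set.mem_singleton_iff, Prod.mk.injEq] at h3
          exact absurd (h3.2 ▸ h2) (lt_irrefl z))
      have hind := hIndepGen _ _ hST
      have hX : Measurable[⨆ pq ∈ {pq : ℕ × ℕ | pq.1 = n ∧ pq.2 < z},
          MeasurableSpace.comap (ξ pq.1 pq.2) inferInstance]
          fun ω => ∏ i ∈ Finset.range z, H u (ξ n i ω) :=
        Finset.measurable_prod _ fun i hi => (hHmeas u).comp
          (Measurable.of_comap_le (le_iSup₂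
            (f := fun (pq : ℕ × ℕ) (_ : pq ∈ {pq : ℕ × ℕ | pq.1 = n ∧ pq.2 < z}) =>
              MeasurableSpace.comap (ξ pq.1 pq.2) inferInstance)
            (n, i) ⟨rfl, Finset.mem_range.1 hi⟩))
      have hY : Measurable[⨆ pq ∈ ({(n, z)} : Set (ℕ × ℕ)),
          MeasurableSpace.comap (ξ pq.1 pq.2) inferInstance]
          fun ω => H u (ξ n z ω) :=
        (hHmeas u).comp (Measurable.of_comap_le (le_iSup₂
          (f := fun (pq : ℕ × ℕ) (_ : pq ∈ ({(n, z)} : Set (ℕ × ℕ))) =>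
            MeasurableSpace.comap (ξ pq.1 pq.2) inferInstance)
          (n, z) rfl))
      have hIF := mkIF hind hX hY
      have hXg : Measurable fun ω => ∏ i ∈ Finset.range z, H u (ξ n i ω) :=
        Finset.measurable_prod _ fun i _ => (hHmeas u).comp (hξmeas n i)
      have key : ∫ ω, (∏ i ∈ Finset.range z, H u (ξ n i ω)) * H u (ξ n z ω) ∂μ =
          (∫ ω, ∏ i ∈ Finset.range z, H u (ξ n i ω) ∂μ) * ∫ ω, H u (ξ n z ω) ∂μ :=
        hIF.integral_mul_eq_mul_integral hXg.aestronglyMeasurable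
          ((hHmeas u).comp (hξmeas n z)).aestronglyMeasurable
      simp only [Finset.prod_range_succ]
      rw [key, ih, hint_ξ n z u, pow_succ]
  -- one-step identity for set integrals
  have honestep : ∀ n, ∀ u ∈ Set.Icc (0:ℝ) 1, ∀ A, MeasurableSet[ℱ n] A →
      ∫ ω in A, s ^ M (n + 1) ω * u ^ Z (n + 1) ω ∂μ =
        ∫ ω in A, s ^ M n ω * fs u ^ Z n ω ∂μ := by
    intro n u hu A hA
    have hAm : MeasurableSet A := ℱ.le n A hA
    have hZnm : Measurable (Z n) := ((hZM n).1).mono (ℱ.le n) le_rfl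
    have hpt : ∀ ω, s ^ M (n + 1) ω * u ^ Z (n + 1) ω =
        s ^ M n ω * ∏ i ∈ Finset.range (Z n ω), H u (ξ n i ω) := by
      intro ω
      rw [hMrec n ω, hZrec n ω, pow_add, ← Finset.prod_pow_eq_pow_sum,
        ← Finset.prod_pow_eq_pow_sum, mul_assoc, ← Finset.prod_mul_distrib]
      congr 1
      refine Finset.prod_congr rfl fun i _ => ?_
      by_cases h : (ξ n i ω).2 <;> simp [hH, h]
    set B : ℕ → Set Ω := fun z => A ∩ {ω | Z n ω = z} with hBdef
    have hBm : ∀ z, MeasurableSet (B z) :=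
      fun z => hAm.inter (hZnm (measurableSet_singleton z))
    have hBF : ∀ z, MeasurableSet[ℱ n] (B z) :=
      fun z => hA.inter ((hZM n).1 (measurableSet_singleton z))
    have hBdisj : Pairwise (Function.onFun Disjoint B) := by
      intro a b hab
      refine Set.disjoint_left.2 fun ω hωa hωb => hab ?_
      rw [← hωa.2, ← hωb.2]
    have hBU : (⋃ z, B z) = A := by
      ext ω
      simp only [hBdef, Set.mem_iUnion, Set.mem_inter_iff, Set.mem_setOf_eq]
      exact ⟨fun ⟨z, hz, _⟩ => hz, fun h => ⟨Z n ω, h, rfl⟩⟩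
    have hfsu := hfs_mem u hu
    have hint1 : Integrable (fun ω => s ^ M (n + 1) ω * u ^ Z (n + 1) ω) μ :=
      hintfn u hu (n + 1)
    have hint2 : Integrable (fun ω => s ^ M n ω * fs u ^ Z n ω) μ :=
      hintfn _ hfsu n
    have hterm : ∀ z, ∫ ω in B z, s ^ M (n + 1) ω * u ^ Z (n + 1) ω ∂μ =
        ∫ ω in B z, s ^ M n ω * fs u ^ Z n ω ∂μ := by
      intro z
      have e1 : ∫ ω in B z, s ^ M (n + 1) ω * u ^ Z (n + 1) ω ∂μ =
          ∫ ω in B z, s ^ M n ω * ∏ i ∈ Finset.range z, H u (ξ n i ω) ∂μ := by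
        refine setIntegral_congr_fun (hBm z) fun ω hω => ?_
        rw [hpt ω, hω.2]
      have e2 : ∫ ω in B z, s ^ M n ω * ∏ i ∈ Finset.range z, H u (ξ n i ω) ∂μ =
          ∫ ω, (B z).indicator (fun ω => s ^ M n ω) ω *
            ∏ i ∈ Finset.range z, H u (ξ n i ω) ∂μ := by
        rw [← integral_indicator (hBm z)]
        congr 1
        funext ω
        by_cases hω : ω ∈ B z <;>
          simp [Set.indicator_of_mem, Set.indicator_of_notMem, hω]
      have hXF : Measurable[ℱ n] ((B z).indicator fun ω => s ^ M n ω) :=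
        ((measurable_from_nat (f := fun m : ℕ => s ^ m)).comp (hZM n).2).indicator
          (hBF z)
      have hYF : Measurable[⨆ i, MeasurableSpace.comap (ξ n i) inferInstance]
          fun ω => ∏ i ∈ Finset.range z, H u (ξ n i ω) :=
        Finset.measurable_prod _ fun i _ => (hHmeas u).comp
          (Measurable.of_comap_le (le_iSup
            (fun i => MeasurableSpace.comap (ξ n i) inferInstance) i))
      have hIF := mkIF (hIndep1 n) hXF hYF
      have hXg : Measurable ((B z).indicator fun ω => s ^ M n ω) :=
        hXF.mono (ℱ.le n) le_rfl
      have hYg : Measurable fun ω => ∏ i ∈ Finset.range z, H u (ξ n i ω) :=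
        Finset.measurable_prod _ fun i _ => (hHmeas u).comp (hξmeas n i)
      have key : ∫ ω, (B z).indicator (fun ω => s ^ M n ω) ω *
            ∏ i ∈ Finset.range z, H u (ξ n i ω) ∂μ =
          (∫ ω, (B z).indicator (fun ω => s ^ M n ω) ω ∂μ) *
            ∫ ω, ∏ i ∈ Finset.range z, H u (ξ n i ω) ∂μ :=
        hIF.integral_mul_eq_mul_integral hXg.aestronglyMeasurable hYg.aestronglyMeasurable
      have e3 : ∫ ω, (B z).indicator (fun ω => s ^ M n ω) ω *
            ∏ i ∈ Finset.range z, H u (ξ n i ω) ∂μ =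
          (∫ ω, (B z).indicator (fun ω => s ^ M n ω) ω ∂μ) * fs u ^ z := by
        rw [key, hprod n u hu z]
      have e4 : (∫ ω, (B z).indicator (fun ω => s ^ M n ω) ω ∂μ) * fs u ^ z =
          ∫ ω in B z, s ^ M n ω * fs u ^ z ∂μ := by
        rw [← integral_mul_const, ← integral_indicator (hBm z)]
        congr 1
        funext ω
        by_cases hω : ω ∈ B z <;>
          simp [Set.indicator_of_mem, Set.indicator_of_notMem, hω]
      have e5 : ∫ ω in B z, s ^ M n ω * fs u ^ z ∂μ =
          ∫ ω in B z, s ^ M n ω * fs u ^ Z n ω ∂μ := by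
        refine setIntegral_congr_fun (hBm z) fun ω hω => ?_
        rw [hω.2]
      rw [e1, e2, e3, e4, e5]
    calc ∫ ω in A, s ^ M (n + 1) ω * u ^ Z (n + 1) ω ∂μ
        = ∑' z, ∫ ω in B z, s ^ M (n + 1) ω * u ^ Z (n + 1) ω ∂μ := by
          rw [← hBU, integral_iUnion hBm hBdisj hint1.integrableOn]
      _ = ∑' z, ∫ ω in B z, s ^ M n ω * fs u ^ Z n ω ∂μ := tsum_congr hterm
      _ = ∫ ω in A, s ^ M n ω * fs u ^ Z n ω ∂μ := by
          rw [← hBU, integral_iUnion hBm hBdisj hint2.integrableOn]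
  -- multi-step identity for set integrals
  have hsetint : ∀ k n, ∀ u ∈ Set.Icc (0:ℝ) 1, ∀ A, MeasurableSet[ℱ n] A →
      ∫ ω in A, s ^ M (n + k) ω * u ^ Z (n + k) ω ∂μ =
        ∫ ω in A, s ^ M n ω * (fs^[k] u) ^ Z n ω ∂μ := by
    intro k
    induction k with
    | zero => intro n u hu A hA; simp
    | succ k ih =>
      intro n u hu A hA
      have hA' : MeasurableSet[ℱ (n + k)] A := ℱ.mono (Nat.le_add_right n k) A hA
      have h1 : ∫ ω in A, s ^ M (n + (k + 1)) ω * u ^ Z (n + (k + 1)) ω ∂μ =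
          ∫ ω in A, s ^ M (n + k) ω * fs u ^ Z (n + k) ω ∂μ :=
        honestep (n + k) u hu A hA'
      rw [h1, ih n (fs u) (hfs_mem u hu) A hA, Function.iterate_succ_apply]
  constructor
  · intro n k
    have hg_meas : Measurable[ℱ n] fun ω => s ^ M n ω * (fs^[k] t) ^ Z n ω :=
      ((measurable_from_nat (f := fun m : ℕ => s ^ m)).comp (hZM n).2).mul
        ((measurable_from_nat (f := fun m : ℕ => (fs^[k] t) ^ m)).comp (hZM n).1)
    have hg_int : Integrable (fun ω => s ^ M n ω * (fs^[k] t) ^ Z n ω) μ :=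
      hintfn _ (hiter_mem k t ht) n
    have hf_int : Integrable (fun ω => s ^ M (n + k) ω * t ^ Z (n + k) ω) μ :=
      hintfn t ht (n + k)
    refine (ae_eq_condExp_of_forall_setIntegral_eq (ℱ.le n) hf_int
      (fun A _ _ => hg_int.integrableOn)
      (fun A hA _ => hsetint k n t ht A hA |>.symm) ?_).symm
    exact StronglyMeasurable.aestronglyMeasurable
      (Measurable.stronglyMeasurable hg_meas)
  · intro k
    have h := hsetint k 0 t ht Set.univ MeasurableSet.univ
    simp only [Nat.zero_add, setIntegral_univ] at h
    rw [h]
    have h2 : (fun ω => s ^ M 0 ω * (fs^[k] t) ^ Z 0 ω) = fun _ => fs^[k] t := by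
      funext ω
      rw [hM0 ω, hZ0 ω]
      simp
    rw [h2]
    simp
end

section
/- Let p be an offspring distribution with p(0) > 0, p(0)+p(1) < 1, finite mean, and q a mark function with ∃k, p(k)q(k) > 0. Fix s ∈ (0,1) and let κ(s) ∈ (0,1) be the fixed point of f_s(t) = E[s^{M_1} t^{Z_1}]. Then the process B_n = s^{M_n} κ(s)^{Z_n − 1} is a bounded nonnegative martingale with respect to (F_n), with B_0 = 1. -/
open MeasureTheory ProbabilityTheory Filter Finset
open scoped ENNReal NNReal Topology

/-!
Given `ℱ n`, the `Z n` nodes of generation `n` carry offspring-mark pairs `ξ n i` that are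
independent of `ℱ n` and identically distributed, and each contributes the factor
`s ^ mark * κ ^ children`, whose mean is `f_s(κ) = κ`. Since
`B (n + 1) = B n * κ⁻¹ ^ Z n * ∏ i < Z n, s ^ mark_i * κ ^ children_i`, the conditional mean of
`B (n + 1)` is `B n`. To use independence, the defining identity `∫_A B (n + 1) = ∫_A B n`
(`A ∈ ℱ n`) is checked on each slice `A ∩ {Z n = z}`, where the number of factors is fixed.
Boundedness is `B n ≤ κ⁻¹`, as `s, κ ≤ 1`.
-/

section

variable {Ω : Type*} {mΩ : MeasurableSpace Ω}

theorem Measurable.apply_index {m : MeasurableSpace Ω} {ι α : Type*} [Countable ι]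
    [MeasurableSpace ι] [MeasurableSingletonClass ι] [MeasurableSpace α]
    {Z : Ω → ι} (hZ : Measurable[m] Z) {F : ι → Ω → α} (hF : ∀ z, Measurable[m] (F z)) :
    Measurable[m] (fun ω => F (Z ω) ω) :=
  (measurable_from_prod_countable_left (f := fun p : Ω × ι => F p.2 p.1) hF).comp
    (measurable_id.prodMk hZ)

theorem setIntegral_eq_of_forall_preimage_singleton {μ : Measure Ω} {ι : Type*} [Countable ι]
    [MeasurableSpace ι] [MeasurableSingletonClass ι] {X : Ω → ι} (hX : Measurable X)
    {f g : Ω → ℝ} (hf : Integrable f μ) (hg : Integrable g μ) {A : Set Ω} (hA : MeasurableSet A)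
    (h : ∀ z, ∫ ω in A ∩ X ⁻¹' {z}, f ω ∂μ = ∫ ω in A ∩ X ⁻¹' {z}, g ω ∂μ) :
    ∫ ω in A, f ω ∂μ = ∫ ω in A, g ω ∂μ := by
  have hslice : ∀ z, MeasurableSet (A ∩ X ⁻¹' {z}) := fun z => hA.inter (hX (.singleton z))
  have hdisj : Pairwise (Function.onFun Disjoint fun z => A ∩ X ⁻¹' {z}) := fun z z' hzz' =>
    ((Set.disjoint_singleton.2 hzz').preimage X).mono Set.inter_subset_right
      Set.inter_subset_right
  have hcover : ⋃ z, A ∩ X ⁻¹' {z} = A := by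
    rw [← Set.inter_iUnion, ← Set.preimage_iUnion, Set.iUnion_singleton_eq_range, Set.range_id',
      Set.preimage_univ, Set.inter_univ]
  rw [← hcover, integral_iUnion hslice hdisj hf.integrableOn,
    integral_iUnion hslice hdisj hg.integrableOn]
  exact tsum_congr h

theorem ProbabilityTheory.Indep.setIntegral_mul_eq_mul {μ : Measure Ω} {m₁ m₂ : MeasurableSpace Ω}
    (hind : Indep m₁ m₂ μ) (hm₁ : m₁ ≤ mΩ) (hm₂ : m₂ ≤ mΩ) {X Y : Ω → ℝ}
    (hX : Measurable[m₁] X) (hY : Measurable[m₂] Y) {A : Set Ω} (hA : MeasurableSet[m₁] A) :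
    ∫ ω in A, X ω * Y ω ∂μ = (∫ ω in A, X ω ∂μ) * ∫ ω, Y ω ∂μ := by
  have hXA : Measurable[m₁] (A.indicator X) := hX.indicator hA
  have hindep : IndepFun (A.indicator X) Y μ :=
    (IndepFun_iff_Indep _ _ μ).2
      (indep_of_indep_of_le_right (indep_of_indep_of_le_left hind hXA.comap_le) hY.comap_le)
  rw [← integral_indicator (hm₁ _ hA), ← integral_indicator (hm₁ _ hA)]
  have : A.indicator (fun ω => X ω * Y ω) = A.indicator X * Y := by
    ext ω; by_cases hω : ω ∈ A <;> simp [hω]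
  rw [this, hindep.integral_mul_eq_mul_integral (hXA.mono hm₁ le_rfl).aestronglyMeasurable
    (hY.mono hm₂ le_rfl).aestronglyMeasurable]

theorem identDistrib_of_measure_preimage_singleton_eq {μ : Measure Ω} {α : Type*} [Countable α]
    [MeasurableSpace α] [MeasurableSingletonClass α] {X Y : Ω → α} (hX : Measurable X)
    (hY : Measurable Y) (h : ∀ x, μ (X ⁻¹' {x}) = μ (Y ⁻¹' {x})) : IdentDistrib X Y μ μ where
  aemeasurable_fst := hX.aemeasurable
  aemeasurable_snd := hY.aemeasurable
  map_eq := Measure.ext_of_singleton fun x => by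
    rw [Measure.map_apply hX (.singleton x), Measure.map_apply hY (.singleton x), h]

end

-- `f_s(t)` is the mean of `markedWeight s t` under the offspring-mark law.
noncomputable def markedWeight (s t : ℝ) (x : ℕ × Bool) : ℝ := (if x.2 then s else 1) * t ^ x.1

theorem prod_markedWeight {ι : Type*} (S : Finset ι) (x : ι → ℕ × Bool) (s t : ℝ) :
    ∏ i ∈ S, markedWeight s t (x i) =
      s ^ (∑ i ∈ S, if (x i).2 then 1 else 0) * t ^ (∑ i ∈ S, (x i).1) := by
  rw [← prod_pow_eq_pow_sum, ← prod_pow_eq_pow_sum, ← prod_mul_distrib]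
  refine prod_congr rfl fun i _ => ?_
  unfold markedWeight
  split_ifs <;> simp

section MarkedGaltonWatson

variable {Ω : Type*} {ξ : ℕ → ℕ → Ω → ℕ × Bool} {Z M : ℕ → Ω → ℕ} {s κ : ℝ}

structure MarkedGWRecursion (ξ : ℕ → ℕ → Ω → ℕ × Bool) (Z M : ℕ → Ω → ℕ) : Prop where
  size_zero : ∀ ω, Z 0 ω = 1
  size_succ : ∀ n ω, Z (n + 1) ω = ∑ i ∈ range (Z n ω), (ξ n i ω).1
  marks_zero : ∀ ω, M 0 ω = 0
  marks_succ : ∀ n ω, M (n + 1) ω = M n ω + ∑ i ∈ range (Z n ω), if (ξ n i ω).2 then 1 else 0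

-- The paper's `B n`.
noncomputable def fixedPointProcess (s κ : ℝ) (M Z : ℕ → Ω → ℕ) (n : ℕ) (ω : Ω) : ℝ :=
  s ^ M n ω * κ ^ ((Z n ω : ℤ) - 1)

theorem fixedPointProcess_succ (hrec : MarkedGWRecursion ξ Z M) (hκ : κ ≠ 0) (n : ℕ) (ω : Ω) :
    fixedPointProcess s κ M Z (n + 1) ω = fixedPointProcess s κ M Z n ω * (κ ^ Z n ω)⁻¹ *
      ∏ i ∈ range (Z n ω), markedWeight s κ (ξ n i ω) := by
  simp only [fixedPointProcess, prod_markedWeight, hrec.marks_succ, hrec.size_succ, pow_add,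
    zpow_sub_one₀ hκ, zpow_natCast]
  field_simp

theorem fixedPointProcess_le (hs0 : 0 ≤ s) (hs1 : s ≤ 1) (hκ0 : 0 < κ) (hκ1 : κ ≤ 1)
    (n : ℕ) (ω : Ω) : fixedPointProcess s κ M Z n ω ≤ κ⁻¹ :=
  calc fixedPointProcess s κ M Z n ω ≤ 1 * κ ^ (-1 : ℤ) :=
        mul_le_mul (pow_le_one₀ hs0 hs1) (zpow_le_zpow_right_of_le_one₀ hκ0 hκ1 (by omega))
          (zpow_pos hκ0 _).le zero_le_one
    _ = κ⁻¹ := by rw [one_mul, zpow_neg_one]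

theorem fixedPointProcess_nonneg (hs0 : 0 ≤ s) (hκ0 : 0 ≤ κ) (n : ℕ) (ω : Ω) :
    0 ≤ fixedPointProcess s κ M Z n ω :=
  mul_nonneg (pow_nonneg hs0 _) (zpow_nonneg hκ0 _)

variable [mΩ : MeasurableSpace Ω] {μ : Measure Ω} {ℱ : Filtration ℕ mΩ}

abbrev offspringMeasurableSpace (ξ : ℕ → ℕ → Ω → ℕ × Bool) (n : ℕ) : MeasurableSpace Ω :=
  ⨆ i, MeasurableSpace.comap (ξ n i) inferInstance

theorem measurable_offspring_of_lt
    (hℱ : ∀ n, ℱ n = ⨆ (m : ℕ) (_ : m < n) (i : ℕ),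
      MeasurableSpace.comap (ξ m i) inferInstance) {m n : ℕ} (hmn : m < n) (i : ℕ) :
    Measurable[ℱ n] (ξ m i) := by
  refine Measurable.of_comap_le ?_
  rw [hℱ n]
  exact le_iSup₂_of_le m hmn (le_iSup (fun i => MeasurableSpace.comap (ξ m i) inferInstance) i)

theorem measurable_size_and_marks (hrec : MarkedGWRecursion ξ Z M)
    (hξ : ∀ {m n}, m < n → ∀ i, Measurable[ℱ n] (ξ m i)) (n : ℕ) :
    Measurable[ℱ n] (Z n) ∧ Measurable[ℱ n] (M n) := by
  induction n with
  | zero =>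
    rw [show Z 0 = fun _ => 1 from funext hrec.size_zero,
      show M 0 = fun _ => 0 from funext hrec.marks_zero]
    exact ⟨measurable_const, measurable_const⟩
  | succ n ih =>
    have hZn := ih.1.mono (ℱ.mono n.le_succ) le_rfl
    have hMn := ih.2.mono (ℱ.mono n.le_succ) le_rfl
    rw [show Z (n + 1) = _ from funext (hrec.size_succ n),
      show M (n + 1) = _ from funext (hrec.marks_succ n)]
    refine ⟨hZn.apply_index (F := fun z ω => ∑ i ∈ range z, (ξ n i ω).1) fun z => ?_,
      hZn.apply_index (F := fun z ω => M n ω + ∑ i ∈ range z, if (ξ n i ω).2 then 1 else 0)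
        fun z => ?_⟩
    · exact Finset.measurable_sum _ fun i _ => measurable_fst.comp (hξ n.lt_succ_self i)
    · exact hMn.add (Finset.measurable_sum _ fun i _ =>
        (measurable_of_countable (fun x : ℕ × Bool => if x.2 then 1 else 0)).comp
          (hξ n.lt_succ_self i))

theorem indep_filtration_offspring (hξmeas : ∀ n i, Measurable (ξ n i))
    (hξindep : iIndepFun (fun ni : ℕ × ℕ => ξ ni.1 ni.2) μ)
    (hℱ : ∀ n, ℱ n = ⨆ (m : ℕ) (_ : m < n) (i : ℕ),
      MeasurableSpace.comap (ξ m i) inferInstance) (n : ℕ) :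
    Indep (ℱ n) (offspringMeasurableSpace ξ n) μ := by
  let σ : ℕ × ℕ → MeasurableSpace Ω := fun j => MeasurableSpace.comap (ξ j.1 j.2) inferInstance
  have hpast : ℱ n ≤ ⨆ j ∈ {j : ℕ × ℕ | j.1 < n}, σ j := by
    rw [hℱ n]
    exact iSup₂_le fun m hm => iSup_le fun i => le_iSup₂_of_le (m, i) hm le_rfl
  have hpresent : offspringMeasurableSpace ξ n ≤
      ⨆ j ∈ {j : ℕ × ℕ | j.1 = n}, σ j :=
    iSup_le fun i => le_iSup₂_of_le (f := fun j _ => σ j) (n, i) rfl le_rfl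
  have hdisj : Disjoint {j : ℕ × ℕ | j.1 < n} {j | j.1 = n} :=
    Set.disjoint_left.2 fun _ hlt heq => hlt.ne heq
  have hsplit := indep_iSup_of_disjoint (m := σ) (fun j => (hξmeas j.1 j.2).comap_le)
    hξindep.iIndep hdisj
  exact indep_of_indep_of_le_right (indep_of_indep_of_le_left hsplit hpast) hpresent

theorem integral_markedWeight_offspring (hident : ∀ n i, IdentDistrib (ξ n i) (ξ 0 0) μ μ)
    (hrec : MarkedGWRecursion ξ Z M)
    (hκfix : (∫ ω, s ^ M 1 ω * κ ^ Z 1 ω ∂μ) = κ) (n i : ℕ) :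
    ∫ ω, markedWeight s κ (ξ n i ω) ∂μ = κ := by
  have hroot : ∀ ω, markedWeight s κ (ξ 0 0 ω) = s ^ M 1 ω * κ ^ Z 1 ω := fun ω => by
    simpa [hrec.size_succ 0 ω, hrec.marks_succ 0 ω, hrec.size_zero, hrec.marks_zero] using
      prod_markedWeight (range 1) (fun i => ξ 0 i ω) s κ
  calc ∫ ω, markedWeight s κ (ξ n i ω) ∂μ = ∫ ω, markedWeight s κ (ξ 0 0 ω) ∂μ :=
        ((hident n i).comp (measurable_of_countable (markedWeight s κ))).integral_eq
    _ = κ := by simp_rw [hroot, hκfix]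

theorem integral_prod_markedWeight_offspring (hξmeas : ∀ n i, Measurable (ξ n i))
    (hξindep : iIndepFun (fun ni : ℕ × ℕ => ξ ni.1 ni.2) μ)
    (hweight : ∀ n i, ∫ ω, markedWeight s κ (ξ n i ω) ∂μ = κ) (n z : ℕ) :
    ∫ ω, ∏ i ∈ range z, markedWeight s κ (ξ n i ω) ∂μ = κ ^ z := by
  have hgen : iIndepFun (fun i : Fin z => ξ n i) μ :=
    hξindep.precomp (g := fun i : Fin z => (n, (i : ℕ))) fun i j hij =>
      Fin.ext (congrArg Prod.snd hij)
  simp_rw [← Fin.prod_univ_eq_prod_range (fun i => markedWeight s κ (ξ n i _))]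
  rw [hgen.integral_fun_prod_comp (fun i => (hξmeas n i).aemeasurable)
    (fun i => (measurable_of_countable _).aestronglyMeasurable)]
  simp [hweight]

theorem stronglyAdapted_fixedPointProcess
    (hZ : ∀ n, Measurable[ℱ n] (Z n)) (hM : ∀ n, Measurable[ℱ n] (M n)) :
    StronglyAdapted ℱ (fixedPointProcess s κ M Z) := fun n =>
  (((measurable_of_countable (s ^ · : ℕ → ℝ)).comp (hM n)).mul
    ((measurable_of_countable (fun k : ℕ => κ ^ ((k : ℤ) - 1))).comp (hZ n))).stronglyMeasurable

theorem integrable_fixedPointProcess [IsFiniteMeasure μ]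
    (hZ : ∀ n, Measurable[ℱ n] (Z n)) (hM : ∀ n, Measurable[ℱ n] (M n))
    (hs0 : 0 ≤ s) (hs1 : s ≤ 1) (hκ0 : 0 < κ) (hκ1 : κ ≤ 1) (n : ℕ) :
    Integrable (fixedPointProcess s κ M Z n) μ :=
  .of_bound ((stronglyAdapted_fixedPointProcess hZ hM n).mono (ℱ.le n)).aestronglyMeasurable
    κ⁻¹ (ae_of_all _ fun ω => by
      rw [Real.norm_of_nonneg (fixedPointProcess_nonneg hs0 hκ0.le n ω)]
      exact fixedPointProcess_le hs0 hs1 hκ0 hκ1 n ω)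

theorem setIntegral_fixedPointProcess_succ [IsProbabilityMeasure μ]
    (hξmeas : ∀ n i, Measurable (ξ n i)) (hrec : MarkedGWRecursion ξ Z M)
    (hZ : ∀ n, Measurable[ℱ n] (Z n)) (hM : ∀ n, Measurable[ℱ n] (M n))
    (hindep : ∀ n, Indep (ℱ n) (offspringMeasurableSpace ξ n) μ)
    (hprod : ∀ n z, ∫ ω, ∏ i ∈ range z, markedWeight s κ (ξ n i ω) ∂μ = κ ^ z)
    (hs0 : 0 ≤ s) (hs1 : s ≤ 1) (hκ0 : 0 < κ) (hκ1 : κ ≤ 1)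
    (n : ℕ) {A : Set Ω} (hA : MeasurableSet[ℱ n] A) :
    ∫ ω in A, fixedPointProcess s κ M Z n ω ∂μ =
      ∫ ω in A, fixedPointProcess s κ M Z (n + 1) ω ∂μ := by
  refine setIntegral_eq_of_forall_preimage_singleton ((hZ n).mono (ℱ.le n) le_rfl)
    (integrable_fixedPointProcess hZ hM hs0 hs1 hκ0 hκ1 n)
    (integrable_fixedPointProcess hZ hM hs0 hs1 hκ0 hκ1 (n + 1)) (ℱ.le n _ hA) fun z => ?_
  have hslice : MeasurableSet[ℱ n] (A ∩ Z n ⁻¹' {z}) := hA.inter (hZ n (.singleton z))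
  have hoffspring : Measurable[offspringMeasurableSpace ξ n]
      fun ω => ∏ i ∈ range z, markedWeight s κ (ξ n i ω) :=
    Finset.measurable_prod _ fun i _ => (measurable_of_countable (markedWeight s κ)).comp
      (Measurable.of_comap_le (le_iSup (fun i => MeasurableSpace.comap (ξ n i) inferInstance) i))
  symm
  calc ∫ ω in A ∩ Z n ⁻¹' {z}, fixedPointProcess s κ M Z (n + 1) ω ∂μ
      = ∫ ω in A ∩ Z n ⁻¹' {z}, fixedPointProcess s κ M Z n ω * (κ ^ z)⁻¹ *
          ∏ i ∈ range z, markedWeight s κ (ξ n i ω) ∂μ :=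
        setIntegral_congr_fun (ℱ.le n _ hslice) fun ω hω => by
          rw [fixedPointProcess_succ hrec hκ0.ne', Set.mem_singleton_iff.1 hω.2]
    _ = (∫ ω in A ∩ Z n ⁻¹' {z}, fixedPointProcess s κ M Z n ω * (κ ^ z)⁻¹ ∂μ) * κ ^ z := by
        rw [(hindep n).setIntegral_mul_eq_mul (ℱ.le n) (iSup_le fun i => (hξmeas n i).comap_le)
          (((stronglyAdapted_fixedPointProcess hZ hM n).measurable).mul_const _) hoffspring
          hslice, hprod]
    _ = ∫ ω in A ∩ Z n ⁻¹' {z}, fixedPointProcess s κ M Z n ω ∂μ := by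
        rw [integral_mul_const, mul_assoc, inv_mul_cancel₀ (pow_ne_zero _ hκ0.ne'), mul_one]

theorem martingale_fixedPointProcess [IsProbabilityMeasure μ]
    (hξmeas : ∀ n i, Measurable (ξ n i)) (hrec : MarkedGWRecursion ξ Z M)
    (hZ : ∀ n, Measurable[ℱ n] (Z n)) (hM : ∀ n, Measurable[ℱ n] (M n))
    (hindep : ∀ n, Indep (ℱ n) (offspringMeasurableSpace ξ n) μ)
    (hprod : ∀ n z, ∫ ω, ∏ i ∈ range z, markedWeight s κ (ξ n i ω) ∂μ = κ ^ z)
    (hs0 : 0 ≤ s) (hs1 : s ≤ 1) (hκ0 : 0 < κ) (hκ1 : κ ≤ 1) :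
    Martingale (fixedPointProcess s κ M Z) ℱ μ :=
  martingale_of_setIntegral_eq_succ (stronglyAdapted_fixedPointProcess hZ hM)
    (integrable_fixedPointProcess hZ hM hs0 hs1 hκ0 hκ1)
    fun n _ hA => setIntegral_fixedPointProcess_succ hξmeas hrec hZ hM hindep hprod hs0 hs1 hκ0 hκ1
      n hA

end MarkedGaltonWatson

theorem stmt_13_general
    {Ω : Type*} [mΩ : MeasurableSpace Ω] (μ : Measure Ω) [IsProbabilityMeasure μ]
    (p q : ℕ → ℝ)
    (ξ : ℕ → ℕ → Ω → ℕ × Bool)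
    (hξmeas : ∀ n i, Measurable (ξ n i))
    (hξindep : iIndepFun
      (fun ni : ℕ × ℕ => ξ ni.1 ni.2) μ)
    (hξlaw : ∀ n i k η, μ {ω | ξ n i ω = (k, η)} =
      ENNReal.ofReal (p k * if η then q k else 1 - q k))
    (Z M : ℕ → Ω → ℕ)
    (hZ0 : ∀ ω, Z 0 ω = 1)
    (hZrec : ∀ n ω, Z (n + 1) ω = ∑ i ∈ Finset.range (Z n ω), (ξ n i ω).1)
    (hM0 : ∀ ω, M 0 ω = 0)
    (hMrec : ∀ n ω, M (n + 1) ω = M n ω +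
      ∑ i ∈ Finset.range (Z n ω), (if (ξ n i ω).2 then 1 else 0))
    (ℱ : Filtration ℕ mΩ)
    (hℱ : ∀ n, ℱ n = ⨆ (m : ℕ) (_ : m < n) (i : ℕ),
      MeasurableSpace.comap (ξ m i) inferInstance)
    (s : ℝ) (hs : s ∈ Set.Ioo (0 : ℝ) 1)
    (κ : ℝ) (hκ : κ ∈ Set.Ioo (0 : ℝ) 1)
    (hκfix : (∫ ω, s ^ M 1 ω * κ ^ Z 1 ω ∂μ) = κ) :
    Martingale (fun n ω => s ^ M n ω * κ ^ ((Z n ω : ℤ) - 1)) ℱ μ ∧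
      (∀ n ω, 0 ≤ s ^ M n ω * κ ^ ((Z n ω : ℤ) - 1)) ∧
      (∃ C, ∀ n ω, s ^ M n ω * κ ^ ((Z n ω : ℤ) - 1) ≤ C) ∧
      ∀ ω, s ^ M 0 ω * κ ^ ((Z 0 ω : ℤ) - 1) = 1 := by
  obtain ⟨hs0, hs1⟩ := hs
  obtain ⟨hκ0, hκ1⟩ := hκ
  have hrec : MarkedGWRecursion ξ Z M := ⟨hZ0, hZrec, hM0, hMrec⟩
  have hZM := measurable_size_and_marks hrec (measurable_offspring_of_lt hℱ)
  have hident : ∀ n i, IdentDistrib (ξ n i) (ξ 0 0) μ μ := fun n i =>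
    identDistrib_of_measure_preimage_singleton_eq (hξmeas n i) (hξmeas 0 0)
      fun ⟨k, η⟩ => (hξlaw n i k η).trans (hξlaw 0 0 k η).symm
  have hprod := integral_prod_markedWeight_offspring hξmeas hξindep
    (integral_markedWeight_offspring hident hrec hκfix)
  refine ⟨martingale_fixedPointProcess hξmeas hrec (fun n => (hZM n).1) (fun n => (hZM n).2)
      (indep_filtration_offspring hξmeas hξindep hℱ) hprod hs0.le hs1.le hκ0 hκ1.le,
    fixedPointProcess_nonneg hs0.le hκ0.le, ⟨κ⁻¹, fixedPointProcess_le hs0.le hs1.le hκ0 hκ1.le⟩,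
    fun ω => ?_⟩
  simp [hZ0, hM0]

theorem stmt_13
    {Ω : Type*} [mΩ : MeasurableSpace Ω] (μ : Measure Ω) [IsProbabilityMeasure μ]
    (p q : ℕ → ℝ) (hp : ∀ k, 0 ≤ p k) (hpsum : ∑' k, p k = 1)
    (hq : ∀ k, q k ∈ Set.Icc (0 : ℝ) 1)
    (hdeg : p 0 + p 1 < 1) (hmark : ∃ k, 0 < p k * q k)
    (ξ : ℕ → ℕ → Ω → ℕ × Bool)
    (hξmeas : ∀ n i, Measurable (ξ n i))
    (hξindep : iIndepFun
      (fun ni : ℕ × ℕ => ξ ni.1 ni.2) μ)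
    (hξlaw : ∀ n i k η, μ {ω | ξ n i ω = (k, η)} =
      ENNReal.ofReal (p k * if η then q k else 1 - q k))
    (Z M : ℕ → Ω → ℕ)
    (hZ0 : ∀ ω, Z 0 ω = 1)
    (hZrec : ∀ n ω, Z (n + 1) ω = ∑ i ∈ Finset.range (Z n ω), (ξ n i ω).1)
    (hM0 : ∀ ω, M 0 ω = 0)
    (hMrec : ∀ n ω, M (n + 1) ω = M n ω +
      ∑ i ∈ Finset.range (Z n ω), (if (ξ n i ω).2 then 1 else 0))
    (ℱ : Filtration ℕ mΩ)
    (hℱ : ∀ n, ℱ n = ⨆ (m : ℕ) (_ : m < n) (i : ℕ),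
      MeasurableSpace.comap (ξ m i) inferInstance)
    (hp0 : 0 < p 0)
    (s : ℝ) (hs : s ∈ Set.Ioo (0 : ℝ) 1)
    (κ : ℝ) (hκ : κ ∈ Set.Ioo (0 : ℝ) 1)
    (hκfix : (∫ ω, s ^ M 1 ω * κ ^ Z 1 ω ∂μ) = κ) :
    Martingale (fun n ω => s ^ M n ω * κ ^ ((Z n ω : ℤ) - 1)) ℱ μ ∧
      (∀ n ω, 0 ≤ s ^ M n ω * κ ^ ((Z n ω : ℤ) - 1)) ∧
      (∃ C, ∀ n ω, s ^ M n ω * κ ^ ((Z n ω : ℤ) - 1) ≤ C) ∧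
      ∀ ω, s ^ M 0 ω * κ ^ ((Z 0 ω : ℤ) - 1) = 1 :=
  stmt_13_general (mΩ := mΩ) μ p q ξ hξmeas hξindep hξlaw Z M hZ0 hZrec hM0 hMrec ℱ hℱ s hs κ hκ
    hκfix
end

section
/- Under the probability measure Q_{s,1} defined by the martingale change of measure dQ_{s,1}/dP restricted to F_n equal to s^{M_n} κ(s)^{Z_n−1} (with s ∈ (0,1) fixed and p(0) > 0), the canonical random marked tree is a marked Galton-Watson tree with reproduction-marking law p_{s,0}(k,η) = p_0(k,η) s^η κ(s)^{k−1}, where p_0(k,1) = p(k)q(k) and p_0(k,0) = p(k)(1−q(k)). -/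
open MeasureTheory ProbabilityTheory Filter Finset
open scoped ENNReal NNReal Topology

private lemma prod_zpow_eq_zpow_sum {ι : Type*} (s : Finset ι) (f : ι → ℤ) {a : ℝ}
    (ha : a ≠ 0) : ∏ i ∈ s, a ^ f i = a ^ (∑ i ∈ s, f i) := by
  classical
  induction s using Finset.induction with
  | empty => simp
  | insert a s h ih =>
    rw [Finset.prod_insert h, Finset.sum_insert h, ih, zpow_add₀ ha]

theorem stmt_14
    {Ω : Type*} [mΩ : MeasurableSpace Ω] (μ : Measure Ω) [IsProbabilityMeasure μ]
    (p q : ℕ → ℝ) (hp : ∀ k, 0 ≤ p k) (hpsum : ∑' k, p k = 1)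
    (hq : ∀ k, q k ∈ Set.Icc (0 : ℝ) 1)
    (hdeg : p 0 + p 1 < 1) (hmark : ∃ k, 0 < p k * q k)
    (ξ : ℕ → ℕ → Ω → ℕ × Bool)
    (hξmeas : ∀ n i, Measurable (ξ n i))
    (hξindep : iIndepFun
      (fun ni : ℕ × ℕ => ξ ni.1 ni.2) μ)
    (hξlaw : ∀ n i k η, μ {ω | ξ n i ω = (k, η)} =
      ENNReal.ofReal (p k * if η then q k else 1 - q k))
    (Z M : ℕ → Ω → ℕ)
    (hZ0 : ∀ ω, Z 0 ω = 1)
    (hZrec : ∀ n ω, Z (n + 1) ω = ∑ i ∈ Finset.range (Z n ω), (ξ n i ω).1)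
    (hM0 : ∀ ω, M 0 ω = 0)
    (hMrec : ∀ n ω, M (n + 1) ω = M n ω +
      ∑ i ∈ Finset.range (Z n ω), (if (ξ n i ω).2 then 1 else 0))
    (hp0 : 0 < p 0)
    (s : ℝ) (hs : s ∈ Set.Ioo (0 : ℝ) 1)
    (κ : ℝ) (hκ : κ ∈ Set.Ioo (0 : ℝ) 1)
    (hκfix : (∫ ω, s ^ M 1 ω * κ ^ Z 1 ω ∂μ) = κ) :
    ∀ n (c : ℕ → ℕ → ℕ × Bool) (z : ℕ → ℕ), z 0 = 1 →
      (∀ m, z (m + 1) = ∑ i ∈ Finset.range (z m), (c m i).1) →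
      (∫ ω in {ω | ∀ m < n, ∀ i < z m, ξ m i ω = c m i},
          s ^ M n ω * κ ^ ((Z n ω : ℤ) - 1) ∂μ) =
        ∏ m ∈ Finset.range n, ∏ i ∈ Finset.range (z m),
          p (c m i).1 * (if (c m i).2 then q (c m i).1 else 1 - q (c m i).1) *
            (if (c m i).2 then s else 1) * κ ^ (((c m i).1 : ℤ) - 1) := by
  classical
  intro n c z hz0 hzrec
  obtain ⟨hs0, hs1⟩ := hs
  obtain ⟨hκ0, hκ1⟩ := hκ
  have hκne : κ ≠ 0 := ne_of_gt hκ0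
  set A : Set Ω := {ω | ∀ m < n, ∀ i < z m, ξ m i ω = c m i} with hAdef
  -- the index finset
  set S : Finset (ℕ × ℕ) := (Finset.range n).biUnion
    (fun m => (Finset.range (z m)).image (fun i => (m, i))) with hS
  have hmemS : ∀ qq : ℕ × ℕ, qq ∈ S ↔ qq.1 < n ∧ qq.2 < z qq.1 := by
    rintro ⟨m, i⟩
    simp only [hS, Finset.mem_biUnion, Finset.mem_image, Finset.mem_range, Prod.mk.injEq]
    constructor
    · rintro ⟨a, ha, b, hb, rfl, rfl⟩; exact ⟨ha, hb⟩
    · rintro ⟨h1, h2⟩; exact ⟨m, h1, i, h2, rfl, rfl⟩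
  set E : ℕ × ℕ → Set Ω := fun qq => (fun ω => ξ qq.1 qq.2 ω) ⁻¹' {c qq.1 qq.2} with hE
  have hA : A = ⋂ qq ∈ S, E qq := by
    ext ω
    simp only [hAdef, Set.mem_setOf_eq, Set.mem_iInter, hE, Set.mem_preimage,
      Set.mem_singleton_iff]
    constructor
    · intro h qq hqq
      exact h qq.1 ((hmemS qq).1 hqq).1 qq.2 ((hmemS qq).1 hqq).2
    · intro h m hm i hi
      exact h (m, i) ((hmemS (m, i)).2 ⟨hm, hi⟩)
  have hEmeas : ∀ qq : ℕ × ℕ, MeasurableSet (E qq) :=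
    fun qq => (hξmeas qq.1 qq.2) (measurableSet_singleton _)
  have hAmeas : MeasurableSet A := by
    rw [hA]; exact Finset.measurableSet_biInter S (fun qq _ => hEmeas qq)
  -- Z and M are constant on A
  have hZconst : ∀ ω ∈ A, ∀ m ≤ n, Z m ω = z m := by
    intro ω hω m
    induction m with
    | zero => intro _; rw [hZ0, hz0]
    | succ m ih =>
      intro hm
      have hm' : m < n := Nat.lt_of_succ_le hm
      rw [hZrec, ih (le_of_lt hm'), hzrec]
      exact Finset.sum_congr rfl (fun i hi => by
        rw [hω m hm' i (Finset.mem_range.1 hi)])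
  have hMconst : ∀ ω ∈ A, ∀ m ≤ n, M m ω =
      ∑ j ∈ Finset.range m, ∑ i ∈ Finset.range (z j), (if (c j i).2 then 1 else 0) := by
    intro ω hω m
    induction m with
    | zero => intro _; rw [hM0]; simp
    | succ m ih =>
      intro hm
      have hm' : m < n := Nat.lt_of_succ_le hm
      rw [hMrec, ih (le_of_lt hm'), Finset.sum_range_succ,
        hZconst ω hω m (le_of_lt hm')]
      congr 1
      exact Finset.sum_congr rfl (fun i hi => by
        rw [hω m hm' i (Finset.mem_range.1 hi)])
  set Msum : ℕ := ∑ j ∈ Finset.range n, ∑ i ∈ Finset.range (z j),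
    (if (c j i).2 then 1 else 0) with hMsum
  -- the measure of A
  have hμE : ∀ qq : ℕ × ℕ, μ (E qq) =
      ENNReal.ofReal (p (c qq.1 qq.2).1 *
        if (c qq.1 qq.2).2 then q (c qq.1 qq.2).1 else 1 - q (c qq.1 qq.2).1) := by
    intro qq
    have := hξlaw qq.1 qq.2 (c qq.1 qq.2).1 (c qq.1 qq.2).2
    simpa [hE, Set.preimage, Set.mem_singleton_iff] using this
  have hμA : μ A = ∏ qq ∈ S, μ (E qq) := by
    rw [hA]
    exact hξindep.meas_biInter (fun qq _ => ⟨{c qq.1 qq.2}, measurableSet_singleton _, rfl⟩)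
  -- nonnegativity
  have hpq : ∀ k (η : Bool), 0 ≤ p k * (if η then q k else 1 - q k) := by
    intro k η
    apply mul_nonneg (hp k)
    cases η
    · simpa using sub_nonneg.2 (hq k).2
    · simpa using (hq k).1
  have hμAre : (μ A).toReal = ∏ m ∈ Finset.range n, ∏ i ∈ Finset.range (z m),
      (p (c m i).1 * if (c m i).2 then q (c m i).1 else 1 - q (c m i).1) := by
    rw [hμA, ENNReal.toReal_prod]
    have hdisj : ∀ a ∈ Finset.range n, ∀ b ∈ Finset.range n, a ≠ b →
        Disjoint ((Finset.range (z a)).image (fun i => (a, i)))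
          ((Finset.range (z b)).image (fun i => (b, i))) := by
      intro a _ b _ hab
      simp only [Finset.disjoint_left, Finset.mem_image, Finset.mem_range]
      rintro ⟨x, y⟩ ⟨i, _, hi⟩ ⟨j, _, hj⟩
      injection hi with h1 h2
      injection hj with h3 h4
      exact hab (h1.trans h3.symm)
    rw [hS, Finset.prod_biUnion hdisj]
    refine Finset.prod_congr rfl (fun m _ => ?_)
    rw [Finset.prod_image (by intro a _ b _ h; injection h)]
    refine Finset.prod_congr rfl (fun i _ => ?_)
    rw [hμE, ENNReal.toReal_ofReal (hpq _ _)]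
  -- the integral
  have hint : (∫ ω in A, s ^ M n ω * κ ^ ((Z n ω : ℤ) - 1) ∂μ) =
      (μ A).toReal * (s ^ Msum * κ ^ ((z n : ℤ) - 1)) := by
    rw [setIntegral_congr_fun hAmeas (g := fun _ => s ^ Msum * κ ^ ((z n : ℤ) - 1))
      (fun ω hω => by rw [hZconst ω hω n le_rfl, hMconst ω hω n le_rfl]),
      setIntegral_const, smul_eq_mul]
    rfl
  rw [hint, hμAre]
  -- now massage the RHS
  have hrhs : ∀ m ∈ Finset.range n, ∏ i ∈ Finset.range (z m),
      (p (c m i).1 * (if (c m i).2 then q (c m i).1 else 1 - q (c m i).1) *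
        (if (c m i).2 then s else 1) * κ ^ (((c m i).1 : ℤ) - 1)) =
      (∏ i ∈ Finset.range (z m),
        (p (c m i).1 * if (c m i).2 then q (c m i).1 else 1 - q (c m i).1)) *
      s ^ (∑ i ∈ Finset.range (z m), (if (c m i).2 then 1 else 0)) *
      κ ^ (∑ i ∈ Finset.range (z m), (((c m i).1 : ℤ) - 1)) := by
    intro m _
    rw [Finset.prod_mul_distrib, Finset.prod_mul_distrib,
      prod_zpow_eq_zpow_sum _ _ hκne, ← Finset.prod_pow_eq_pow_sum]
    congr 1
    congr 1
    refine Finset.prod_congr rfl (fun i _ => ?_)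
    cases h : (c m i).2 <;> simp [h]
  rw [Finset.prod_congr rfl hrhs, Finset.prod_mul_distrib, Finset.prod_mul_distrib,
    prod_zpow_eq_zpow_sum _ _ hκne, ← Finset.prod_pow_eq_pow_sum]
  have htel : ∑ m ∈ Finset.range n, ∑ i ∈ Finset.range (z m), (((c m i).1 : ℤ) - 1) =
      (z n : ℤ) - 1 := by
    have hstep : ∀ m, ∑ i ∈ Finset.range (z m), (((c m i).1 : ℤ) - 1) =
        (z (m + 1) : ℤ) - (z m : ℤ) := by
      intro m
      rw [Finset.sum_sub_distrib, Finset.sum_const, Finset.card_range, hzrec m]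
      push_cast
      ring
    rw [Finset.sum_congr rfl (fun m _ => hstep m), Finset.sum_range_sub (fun m => (z m : ℤ)),
      hz0]
    norm_num
  rw [htel]
  ring
end

section
/- Let p be an offspring distribution with p(0) = 0, p(0)+p(1) < 1 and finite mean, q a mark function with ∃k, p(k)q(k) > 0, and suppose r := min{j > 0 : p(j) > 0} ≥ 2. Fix s ∈ (0,1) and let f_s(t) = Σ_{k≥r} p(k) t^k (s q(k)+1−q(k)). Then for every t ∈ (0,1], the series b(t) = ln(t) + Σ_{j=0}^∞ r^{−(j+1)} ln(f_s^{∘(j+1)}(t) / (f_s^{∘j}(t))^r) converges, b(t) < 0, and f_s^{∘p}(t) = α_r(s)^{−1/(r−1)} e^{r^p b(t)} (1+o(1)) as p → ∞, where α_r(s) = p(r)(s q(r)+1−q(r)). -/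
/-!
Write `f u = ∑ a k u ^ k` with `a k = p k (s q k + 1 - q k)` and `x n = f^[n] t`. Since
`f u = u ^ r * g u` with `g u = ∑ a (k + r) u ^ k` squeezed between `α = a r` and
`γ = ∑ a k < 1`, the iterates decay at least geometrically and `x (n + 1) / x n ^ r = g (x n) → α`.
Taking logarithms, `log x (n + 1) = r log x n + log g (x n)`, so
`r⁻ⁿ log x n = log t + ∑_{j<n} r^{-(j+1)} log g (x j)`, which converges to `b`; the remainder
`rⁿ b - log x n = ∑ᵢ r^{-(i+1)} log g (x (i + n))` tends to `log α / (r - 1)` by dominated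
convergence, which is the asymptotic formula. Every term of the series is negative, so `b < 0`.
-/

open Filter Finset Real
open scoped Topology

section Geometric

variable {r : ℝ}

lemma tsum_inv_pow_succ (hr : 1 < r) : ∑' i : ℕ, (r ^ (i + 1))⁻¹ = (r - 1)⁻¹ := by
  have h0 : 0 < r := zero_lt_one.trans hr
  simp_rw [← inv_pow, pow_succ, tsum_mul_right,
    tsum_geometric_of_lt_one (inv_nonneg.2 h0.le) (inv_lt_one_of_one_lt₀ hr)]
  field_simp

lemma summable_inv_pow_succ (hr : 1 < r) : Summable fun i : ℕ => (r ^ (i + 1))⁻¹ := by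
  simp_rw [← inv_pow]
  exact (summable_nat_add_iff 1).2 <| summable_geometric_of_lt_one
    (inv_nonneg.2 (zero_le_one.trans hr.le)) (inv_lt_one_of_one_lt₀ hr)

lemma summable_inv_pow_succ_mul_of_tendsto (hr : 1 < r) {G : ℕ → ℝ} {L : ℝ}
    (hG : Tendsto G atTop (𝓝 L)) : Summable fun j : ℕ => (r ^ (j + 1))⁻¹ * G j := by
  obtain ⟨C, hC⟩ := isBounded_iff_forall_norm_le.1 (Metric.isBounded_range_of_tendsto G hG)
  refine ((summable_inv_pow_succ hr).mul_right C).of_norm_bounded fun j => ?_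
  rw [norm_mul, norm_inv, norm_pow, Real.norm_of_nonneg (zero_le_one.trans hr.le)]
  exact mul_le_mul_of_nonneg_left (hC _ (Set.mem_range_self j)) (by positivity)

lemma pow_mul_tsum_inv_pow_succ_mul_eq (hr : r ≠ 0) {G : ℕ → ℝ}
    (hG : Summable fun j : ℕ => (r ^ (j + 1))⁻¹ * G j) (n : ℕ) :
    r ^ n * ∑' j : ℕ, (r ^ (j + 1))⁻¹ * G j =
      r ^ n * ∑ j ∈ range n, (r ^ (j + 1))⁻¹ * G j + ∑' i : ℕ, (r ^ (i + 1))⁻¹ * G (i + n) := by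
  rw [← hG.sum_add_tsum_nat_add n, mul_add, ← tsum_mul_left]
  congr 1
  refine tsum_congr fun i => ?_
  rw [show i + n + 1 = i + 1 + n by ring, pow_add]
  field_simp

lemma tendsto_tsum_inv_pow_succ_mul_add (hr : 1 < r) {G : ℕ → ℝ} {L : ℝ}
    (hG : Tendsto G atTop (𝓝 L)) :
    Tendsto (fun n => ∑' i : ℕ, (r ^ (i + 1))⁻¹ * G (i + n)) atTop (𝓝 (L / (r - 1))) := by
  obtain ⟨C, hC⟩ := isBounded_iff_forall_norm_le.1 (Metric.isBounded_range_of_tendsto G hG)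
  rw [div_eq_inv_mul, ← tsum_inv_pow_succ hr, ← tsum_mul_right]
  refine tendsto_tsum_of_dominated_convergence ((summable_inv_pow_succ hr).mul_right C)
    (fun i => ((hG.comp (tendsto_add_atTop_nat i)).congr fun n => by simp [add_comm]).const_mul _)
    (Eventually.of_forall fun n i => ?_)
  rw [norm_mul, norm_inv, norm_pow, Real.norm_of_nonneg (zero_le_one.trans hr.le)]
  exact mul_le_mul_of_nonneg_left (hC _ (Set.mem_range_self _)) (by positivity)

end Geometric

section Seneta

variable {r : ℕ} {x : ℕ → ℝ}

lemma log_eq_pow_mul_add_sum_log_div_pow (hr : r ≠ 0) (hx : ∀ n, 0 < x n) (n : ℕ) :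
    log (x n) = (r : ℝ) ^ n *
      (log (x 0) + ∑ j ∈ range n, ((r : ℝ) ^ (j + 1))⁻¹ * log (x (j + 1) / x j ^ r)) := by
  induction n with
  | zero => simp
  | succ n ih =>
    have hxn := hx n
    have hlog : log (x (n + 1)) = r * log (x n) + log (x (n + 1) / x n ^ r) := by
      rw [← log_pow, ← log_mul (by positivity) (by have := hx (n + 1); positivity),
        mul_div_cancel₀ _ (by positivity)]
    rw [hlog, ih, sum_range_succ]
    field_simp
    ring

lemma log_add_tsum_log_div_pow_neg (hr : 0 < r) (hx : ∀ n, 0 < x n) (hx0 : x 0 ≤ 1)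
    (hlt : ∀ n, x (n + 1) < x n ^ r)
    (hsum : Summable fun j : ℕ => ((r : ℝ) ^ (j + 1))⁻¹ * log (x (j + 1) / x j ^ r)) :
    log (x 0) + ∑' j : ℕ, ((r : ℝ) ^ (j + 1))⁻¹ * log (x (j + 1) / x j ^ r) < 0 := by
  have hterm : ∀ j, ((r : ℝ) ^ (j + 1))⁻¹ * log (x (j + 1) / x j ^ r) < 0 := fun j => by
    have hxj := hx j
    exact mul_neg_of_pos_of_neg (by positivity) <|
      log_neg (div_pos (hx (j + 1)) (by positivity)) ((div_lt_one (by positivity)).2 (hlt j))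
  have := hsum.tsum_lt_tsum (fun j => (hterm j).le) (hterm 0) summable_zero
  rw [tsum_zero] at this
  linarith [log_nonpos (hx 0).le hx0]

theorem tendsto_div_rpow_mul_exp_of_tendsto_div_pow (hr : 1 < r) (hx : ∀ n, 0 < x n) {α : ℝ}
    (hα : 0 < α) (hratio : Tendsto (fun n => x (n + 1) / x n ^ r) atTop (𝓝 α)) :
    Summable (fun j : ℕ => ((r : ℝ) ^ (j + 1))⁻¹ * log (x (j + 1) / x j ^ r)) ∧
      Tendsto (fun n : ℕ => x n / (α ^ (-(1 : ℝ) / ((r : ℝ) - 1)) * exp ((r : ℝ) ^ n *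
        (log (x 0) + ∑' j : ℕ, ((r : ℝ) ^ (j + 1))⁻¹ * log (x (j + 1) / x j ^ r)))))
        atTop (𝓝 1) := by
  have hr' : (1 : ℝ) < r := by exact_mod_cast hr
  have hG : Tendsto (fun n => log (x (n + 1) / x n ^ r)) atTop (𝓝 (log α)) :=
    (continuousAt_log hα.ne').tendsto.comp hratio
  have hsum := summable_inv_pow_succ_mul_of_tendsto hr' hG
  refine ⟨hsum, ?_⟩
  have hA : α ^ (-(1 : ℝ) / ((r : ℝ) - 1)) = exp (-(log α / ((r : ℝ) - 1))) := by
    rw [rpow_def_of_pos hα]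
    ring_nf
  rw [hA]
  set c := exp (-(log α / ((r : ℝ) - 1)))
  have hrewrite : ∀ n : ℕ, exp (-∑' i : ℕ, ((r : ℝ) ^ (i + 1))⁻¹ *
      log (x (i + n + 1) / x (i + n) ^ r)) / c = x n / (c * exp ((r : ℝ) ^ n *
        (log (x 0) + ∑' j : ℕ, ((r : ℝ) ^ (j + 1))⁻¹ * log (x (j + 1) / x j ^ r)))) := by
    intro n
    rw [mul_add, pow_mul_tsum_inv_pow_succ_mul_eq (by positivity) hsum n, ← add_assoc, ← mul_add,
      ← log_eq_pow_mul_add_sum_log_div_pow (by omega) hx, exp_add, exp_log (hx n), exp_neg]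
    have := hx n
    field_simp
  have hlim := ((tendsto_tsum_inv_pow_succ_mul_add hr' hG).neg.rexp).div_const c
  rw [div_self (by positivity)] at hlim
  exact hlim.congr hrewrite

end Seneta

section PowerSeries

variable {a : ℕ → ℝ} {u : ℝ}

lemma summable_mul_pow_of_nonneg (ha0 : ∀ k, 0 ≤ a k) (ha : Summable a) (hu : u ∈ Set.Icc 0 1) :
    Summable fun k => a k * u ^ k :=
  ha.of_nonneg_of_le (fun k => mul_nonneg (ha0 k) (pow_nonneg hu.1 k))
    fun k => mul_le_of_le_one_right (ha0 k) (pow_le_one₀ hu.1 hu.2)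

lemma le_tsum_mul_pow (ha0 : ∀ k, 0 ≤ a k) (ha : Summable a) (hu : u ∈ Set.Icc 0 1) :
    a 0 ≤ ∑' k, a k * u ^ k := by
  simpa using (summable_mul_pow_of_nonneg ha0 ha hu).le_tsum 0
    fun k _ => mul_nonneg (ha0 k) (pow_nonneg hu.1 k)

lemma tsum_mul_pow_le_tsum (ha0 : ∀ k, 0 ≤ a k) (ha : Summable a) (hu : u ∈ Set.Icc 0 1) :
    ∑' k, a k * u ^ k ≤ ∑' k, a k :=
  (summable_mul_pow_of_nonneg ha0 ha hu).tsum_le_tsum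
    (fun k => mul_le_of_le_one_right (ha0 k) (pow_le_one₀ hu.1 hu.2)) ha

lemma tsum_mul_pow_eq_pow_mul_tsum {r : ℕ} (ha : Summable fun k => a k * u ^ k)
    (hlow : ∀ k < r, a k = 0) :
    ∑' k, a k * u ^ k = u ^ r * ∑' k, a (k + r) * u ^ k := by
  rw [← ha.sum_add_tsum_nat_add r,
    sum_eq_zero fun k hk => by rw [hlow k (mem_range.1 hk), zero_mul], zero_add, ← tsum_mul_left]
  exact tsum_congr fun k => by ring

lemma tendsto_tsum_mul_pow_nhdsWithin_zero (ha : Summable fun k => ‖a k‖) :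
    Tendsto (fun u => ∑' k, a k * u ^ k) (𝓝[Set.Icc (-1) 1] 0) (𝓝 (a 0)) := by
  have hcont : ContinuousOn (fun u => ∑' k, a k * u ^ k) (Set.Icc (-1) 1) :=
    continuousOn_tsum (fun k => (continuous_const.mul (continuous_pow k)).continuousOn) ha
      fun k u hu => by
        rw [norm_mul, norm_pow]
        exact mul_le_of_le_one_right (norm_nonneg _) (pow_le_one₀ (norm_nonneg _)
          (abs_le.2 hu))
  have h0 : ∑' k, a k * (0 : ℝ) ^ k = a 0 :=
    (tsum_eq_single 0 fun k hk => by rw [zero_pow hk, mul_zero]).trans (by simp)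
  simpa only [h0] using (hcont 0 (by norm_num)).tendsto

end PowerSeries

section Iterate

variable {f : ℝ → ℝ} {γ t : ℝ}

lemma iterate_mem_Ioc_and_le_pow_mul
    (hf : ∀ u ∈ Set.Ioc (0 : ℝ) 1, f u ∈ Set.Ioc 0 1 ∧ f u ≤ γ * u) (ht : t ∈ Set.Ioc 0 1)
    (n : ℕ) : f^[n] t ∈ Set.Ioc 0 1 ∧ f^[n] t ≤ γ ^ n * t := by
  induction n with
  | zero => simpa using ht
  | succ n ih =>
    have hγ : 0 ≤ γ := nonneg_of_mul_nonneg_left ((hf _ ih.1).1.1.le.trans (hf _ ih.1).2) ih.1.1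
    rw [Function.iterate_succ_apply', pow_succ']
    exact ⟨(hf _ ih.1).1, (hf _ ih.1).2.trans (by rw [mul_assoc]; gcongr; exact ih.2)⟩

lemma tendsto_iterate_nhdsWithin_zero (hγ : γ < 1)
    (hf : ∀ u ∈ Set.Ioc (0 : ℝ) 1, f u ∈ Set.Ioc 0 1 ∧ f u ≤ γ * u) (ht : t ∈ Set.Ioc 0 1) :
    Tendsto (fun n => f^[n] t) atTop (𝓝[Set.Ioc 0 1] 0) := by
  have hγ0 : 0 ≤ γ := nonneg_of_mul_nonneg_left ((hf t ht).1.1.le.trans (hf t ht).2) ht.1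
  have hiter := iterate_mem_Ioc_and_le_pow_mul hf ht
  refine tendsto_nhdsWithin_iff.2 ⟨?_, Eventually.of_forall fun n => (hiter n).1⟩
  have hlim := (tendsto_pow_atTop_nhds_zero_of_lt_one hγ0 hγ).mul_const t
  rw [zero_mul] at hlim
  exact tendsto_of_tendsto_of_tendsto_of_le_of_le tendsto_const_nhds hlim
    (fun n => (hiter n).1.1.le) fun n => (hiter n).2

end Iterate

theorem iterate_tsum_mul_pow_asymptotics {a : ℕ → ℝ} {r : ℕ} (hr : 1 < r)
    (ha0 : ∀ k, 0 ≤ a k) (ha : Summable a) (ha1 : ∑' k, a k < 1) (hlow : ∀ k < r, a k = 0)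
    (har : 0 < a r) {f : ℝ → ℝ} (hf : ∀ u, f u = ∑' k, a k * u ^ k) {t : ℝ}
    (ht : t ∈ Set.Ioc 0 1) :
    Summable (fun j : ℕ => ((r : ℝ) ^ (j + 1))⁻¹ * log (f^[j + 1] t / (f^[j] t) ^ r)) ∧
      ∀ b : ℝ, b = log t + ∑' j : ℕ, ((r : ℝ) ^ (j + 1))⁻¹ * log (f^[j + 1] t / (f^[j] t) ^ r) →
        b < 0 ∧ Tendsto (fun n : ℕ => f^[n] t /
          (a r ^ (-(1 : ℝ) / ((r : ℝ) - 1)) * exp ((r : ℝ) ^ n * b))) atTop (𝓝 1) := by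
  set g : ℝ → ℝ := fun u => ∑' k, a (k + r) * u ^ k
  have hshift0 : ∀ k, 0 ≤ a (k + r) := fun k => ha0 _
  have hshift : Summable fun k => a (k + r) := (summable_nat_add_iff r).2 ha
  have hfg : ∀ u ∈ Set.Icc (0 : ℝ) 1, f u = u ^ r * g u := fun u hu =>
    (hf u).trans (tsum_mul_pow_eq_pow_mul_tsum (summable_mul_pow_of_nonneg ha0 ha hu) hlow)
  have hg : ∀ u ∈ Set.Icc (0 : ℝ) 1, a r ≤ g u ∧ g u ≤ ∑' k, a k := fun u hu =>
    ⟨by simpa using le_tsum_mul_pow hshift0 hshift hu,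
      (tsum_mul_pow_le_tsum hshift0 hshift hu).trans <| hshift.tsum_le_tsum_of_inj (· + r)
        (add_left_injective r) (fun _ _ => ha0 _) (fun _ => le_rfl) ha⟩
  have hmaps : ∀ u ∈ Set.Ioc (0 : ℝ) 1, f u ∈ Set.Ioc 0 1 ∧ f u ≤ (∑' k, a k) * u := by
    intro u hu
    obtain ⟨hgr, hgγ⟩ := hg u (Set.Ioc_subset_Icc_self hu)
    have hur : u ^ r ≤ u := pow_le_of_le_one hu.1.le hu.2 (by omega)
    have hfu : f u ≤ (∑' k, a k) * u := by
      rw [hfg u (Set.Ioc_subset_Icc_self hu), mul_comm]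
      exact mul_le_mul hgγ hur (pow_nonneg hu.1.le r) (har.le.trans (hgr.trans hgγ))
    refine ⟨⟨?_, hfu.trans ?_⟩, hfu⟩
    · rw [hfg u (Set.Ioc_subset_Icc_self hu)]
      exact mul_pos (pow_pos hu.1 r) (har.trans_le hgr)
    · nlinarith [hu.1, hu.2, har.trans_le (hgr.trans hgγ)]
  have hx : ∀ n, f^[n] t ∈ Set.Ioc 0 1 := fun n => (iterate_mem_Ioc_and_le_pow_mul hmaps ht n).1
  have hratio : ∀ n, f^[n + 1] t / (f^[n] t) ^ r = g (f^[n] t) := fun n => by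
    rw [Function.iterate_succ_apply', hfg _ (Set.Ioc_subset_Icc_self (hx n)),
      mul_div_cancel_left₀ _ (pow_ne_zero _ (hx n).1.ne')]
  have hglim : Tendsto g (𝓝[Set.Ioc 0 1] 0) (𝓝 (a r)) := by
    have hnorm : Summable fun k => ‖a (k + r)‖ := by
      simpa only [Real.norm_of_nonneg (hshift0 _)] using hshift
    have hsub : Set.Ioc (0 : ℝ) 1 ⊆ Set.Icc (-1) 1 :=
      Set.Ioc_subset_Icc_self.trans (Set.Icc_subset_Icc (by norm_num) le_rfl)
    simpa using (tendsto_tsum_mul_pow_nhdsWithin_zero hnorm).mono_left (nhdsWithin_mono _ hsub)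
  have hlim : Tendsto (fun n => f^[n + 1] t / (f^[n] t) ^ r) atTop (𝓝 (a r)) := by
    simp_rw [hratio]
    exact hglim.comp (tendsto_iterate_nhdsWithin_zero ha1 hmaps ht)
  obtain ⟨hsum, hasymp⟩ :=
    tendsto_div_rpow_mul_exp_of_tendsto_div_pow hr (fun n => (hx n).1) har hlim
  refine ⟨hsum, fun b hb => ?_⟩
  subst hb
  refine ⟨log_add_tsum_log_div_pow_neg (by omega) (fun n => (hx n).1) ht.2 (fun n => ?_) hsum,
    hasymp⟩
  rw [← div_lt_one (pow_pos (hx n).1 r), hratio]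
  exact (hg _ (Set.Ioc_subset_Icc_self (hx n))).2.trans_lt ha1

theorem stmt_17_general
    (p q : ℕ → ℝ) (hp : ∀ k, 0 ≤ p k) (hpsum : ∑' k, p k = 1)
    (hq : ∀ k, q k ∈ Set.Icc (0 : ℝ) 1)
    (hmark : ∃ k, 0 < p k * q k)
    (s : ℝ) (hs : s ∈ Set.Ioo (0 : ℝ) 1)
    (fs : ℝ → ℝ)
    (hfs : ∀ t, fs t = ∑' k, p k * t ^ k * (s * q k + 1 - q k))
    (hp0 : p 0 = 0)
    (r : ℕ) (hr2 : 2 ≤ r) (hpr : 0 < p r) (hrmin : ∀ j, 0 < j → j < r → p j = 0) :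
    ∀ t ∈ Set.Ioc (0 : ℝ) 1,
      Summable (fun j : ℕ => ((r : ℝ) ^ (j + 1))⁻¹ *
        Real.log (fs^[j + 1] t / (fs^[j] t) ^ r)) ∧
      ∀ b : ℝ,
        b = Real.log t + ∑' j : ℕ, ((r : ℝ) ^ (j + 1))⁻¹ *
          Real.log (fs^[j + 1] t / (fs^[j] t) ^ r) →
        b < 0 ∧
          Tendsto (fun n : ℕ => fs^[n] t /
              ((p r * (s * q r + 1 - q r)) ^ (-(1 : ℝ) / ((r : ℝ) - 1)) *
                Real.exp ((r : ℝ) ^ n * b)))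
            atTop (𝓝 1) := by
  intro t ht
  obtain ⟨hs0, hs1⟩ := hs
  have hmark_pos : ∀ k, 0 < s * q k + 1 - q k := fun k => by
    nlinarith [mul_nonneg (sub_nonneg.2 (hq k).2) (sub_nonneg.2 hs1.le)]
  have hle : ∀ k, p k * (s * q k + 1 - q k) ≤ p k := fun k =>
    mul_le_of_le_one_right (hp k) (by nlinarith [mul_nonneg (hq k).1 (sub_nonneg.2 hs1.le)])
  have hp_summable : Summable p := by
    by_contra h
    simp [tsum_eq_zero_of_not_summable h] at hpsum
  have ha := hp_summable.of_nonneg_of_le (fun k => mul_nonneg (hp k) (hmark_pos k).le) hle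
  obtain ⟨k₀, hk₀⟩ := hmark
  have ha1 : ∑' k, p k * (s * q k + 1 - q k) < 1 :=
    (ha.tsum_lt_tsum hle (i := k₀) (by nlinarith) hp_summable).trans_eq hpsum
  refine iterate_tsum_mul_pow_asymptotics hr2 (fun k => mul_nonneg (hp k) (hmark_pos k).le) ha
    ha1 (fun k hk => ?_) (mul_pos hpr (hmark_pos r)) (fun u => (hfs u).trans
      (tsum_congr fun k => by ring)) ht
  rcases Nat.eq_zero_or_pos k with rfl | hk0
  · rw [hp0, zero_mul]
  · rw [hrmin k hk0 hk, zero_mul]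

theorem stmt_17
    (p q : ℕ → ℝ) (hp : ∀ k, 0 ≤ p k) (hpsum : ∑' k, p k = 1)
    (hq : ∀ k, q k ∈ Set.Icc (0 : ℝ) 1)
    (hdeg : p 0 + p 1 < 1) (hmark : ∃ k, 0 < p k * q k)
    (mp : ℝ) (hmean : HasSum (fun k : ℕ => (k : ℝ) * p k) mp)
    (s : ℝ) (hs : s ∈ Set.Ioo (0 : ℝ) 1)
    (fs : ℝ → ℝ)
    (hfs : ∀ t, fs t = ∑' k, p k * t ^ k * (s * q k + 1 - q k))
    (hp0 : p 0 = 0)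
    (r : ℕ) (hr2 : 2 ≤ r) (hpr : 0 < p r) (hrmin : ∀ j, 0 < j → j < r → p j = 0) :
    ∀ t ∈ Set.Ioc (0 : ℝ) 1,
      Summable (fun j : ℕ => ((r : ℝ) ^ (j + 1))⁻¹ *
        Real.log (fs^[j + 1] t / (fs^[j] t) ^ r)) ∧
      ∀ b : ℝ,
        b = Real.log t + ∑' j : ℕ, ((r : ℝ) ^ (j + 1))⁻¹ *
          Real.log (fs^[j + 1] t / (fs^[j] t) ^ r) →
        b < 0 ∧
          Tendsto (fun n : ℕ => fs^[n] t /
              ((p r * (s * q r + 1 - q r)) ^ (-(1 : ℝ) / ((r : ℝ) - 1)) *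
                Real.exp ((r : ℝ) ^ n * b)))
            atTop (𝓝 1) :=
  stmt_17_general p q hp hpsum hq hmark s hs fs hfs hp0 r hr2 hpr hrmin
end

section
/- Let p be an offspring distribution with p(0) = 0, r = min{j > 0 : p(j) > 0} ≥ 1, p(0)+p(1) < 1, finite mean, and q a mark function with ∃k, p(k)q(k) > 0. Fix s ∈ (0,1) and set α_r(s) = p(r)(s q(r)+1−q(r)). Then B_n = s^{M_n} α_r(s)^{−(r^n−1)/(r−1)} 1_{{Z_n = r^n}} (for r ≥ 2; B_n = s^{M_n} α_1(s)^{−n} 1_{{Z_n=1}} for r = 1) is a nonnegative (F_n)-martingale with B_0 = 1, and the associated change of measure yields the law of the regular r-ary marked tree: every node has exactly r children, and each node is marked independently with probability s q(r)/(s q(r)+1−q(r)). -/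
open MeasureTheory ProbabilityTheory Filter Finset

private lemma aux_meas_sum {Ω : Type*} [m : MeasurableSpace Ω] {f : Ω → ℕ} {g : ℕ → Ω → ℕ}
    (hf : Measurable f) (hg : ∀ i, Measurable (g i)) :
    Measurable fun ω => ∑ i ∈ Finset.range (f ω), g i ω := by
  apply measurable_to_countable'
  intro c
  have h : (fun ω => ∑ i ∈ Finset.range (f ω), g i ω) ⁻¹' {c} =
      ⋃ k, ({ω | f ω = k} ∩ {ω | ∑ i ∈ Finset.range k, g i ω = c}) := by
    ext ω
    simp only [Set.mem_preimage, Set.mem_singleton_iff, Set.mem_iUnion, Set.mem_inter_iff,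
      Set.mem_setOf_eq]
    constructor
    · intro h; exact ⟨f ω, rfl, h⟩
    · rintro ⟨k, hk, h⟩; rw [hk]; exact h
  rw [h]
  refine MeasurableSet.iUnion fun k => MeasurableSet.inter ?_ ?_
  · exact hf (measurableSet_singleton k)
  · exact (Finset.measurable_sum _ fun i _ => hg i) (measurableSet_singleton c)

private lemma aux_zgrow (r : ℕ) (hr1 : 1 ≤ r) (c : ℕ → ℕ → ℕ × Bool) (z : ℕ → ℕ)
    (hz0 : z 0 = 1) (hzrec : ∀ m, z (m + 1) = ∑ i ∈ Finset.range (z m), (c m i).1) :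
    ∀ n, (∀ m < n, ∀ i < z m, r ≤ (c m i).1) →
      r ^ n ≤ z n ∧
      (((∃ m < n, r ^ m < z m) ∨ ∃ m < n, ∃ i < z m, r < (c m i).1) → r ^ n < z n) := by
  intro n
  induction n with
  | zero => intro _; simp [hz0]
  | succ n ih =>
    intro hge
    have hge' : ∀ m < n, ∀ i < z m, r ≤ (c m i).1 := fun m hm => hge m (hm.trans (Nat.lt_succ_self n))
    obtain ⟨ih1, ih2⟩ := ih hge'
    have hbase : r * z n ≤ z (n + 1) := by
      rw [hzrec]
      calc r * z n = ∑ _i ∈ Finset.range (z n), r := by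
            rw [Finset.sum_const, Finset.card_range, smul_eq_mul, mul_comm]
        _ ≤ ∑ i ∈ Finset.range (z n), (c n i).1 :=
            Finset.sum_le_sum fun i hi => hge n (Nat.lt_succ_self n) i (Finset.mem_range.1 hi)
    have hr0 : 0 < r := Nat.lt_of_lt_of_le Nat.zero_lt_one hr1
    constructor
    · calc r ^ (n + 1) = r * r ^ n := by ring
        _ ≤ r * z n := Nat.mul_le_mul_left r ih1
        _ ≤ z (n + 1) := hbase
    · rintro (⟨m, hm, hstrict⟩ | ⟨m, hm, i, hi, hstrict⟩)
      · rcases Nat.lt_succ_iff_lt_or_eq.1 hm with hm' | rfl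
        · have h1 : r ^ n < z n := ih2 (Or.inl ⟨m, hm', hstrict⟩)
          calc r ^ (n + 1) = r * r ^ n := by ring
            _ < r * z n := mul_lt_mul_of_pos_left h1 hr0
            _ ≤ z (n + 1) := hbase
        · calc r ^ (m + 1) = r * r ^ m := by ring
            _ < r * z m := mul_lt_mul_of_pos_left hstrict hr0
            _ ≤ z (m + 1) := hbase
      · rcases Nat.lt_succ_iff_lt_or_eq.1 hm with hm' | rfl
        · have h1 : r ^ n < z n := ih2 (Or.inr ⟨m, hm', i, hi, hstrict⟩)
          calc r ^ (n + 1) = r * r ^ n := by ring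
            _ < r * z n := mul_lt_mul_of_pos_left h1 hr0
            _ ≤ z (n + 1) := hbase
        · calc r ^ (m + 1) = r * r ^ m := by ring
            _ ≤ r * z m := Nat.mul_le_mul_left r ih1
            _ < z (m + 1) := by
              rw [hzrec]
              calc r * z m = ∑ _i ∈ Finset.range (z m), r := by
                    rw [Finset.sum_const, Finset.card_range, smul_eq_mul, mul_comm]
                _ < ∑ j ∈ Finset.range (z m), (c m j).1 :=
                  Finset.sum_lt_sum
                    (fun j hj => hge m (Nat.lt_succ_self m) j (Finset.mem_range.1 hj))
                    ⟨i, Finset.mem_range.2 hi, hstrict⟩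

/-- If all relevant offspring numbers equal `r`, the recursion gives `z m = r ^ m`. -/
private lemma aux_zreg (r : ℕ) (c : ℕ → ℕ → ℕ × Bool) (z : ℕ → ℕ)
    (hz0 : z 0 = 1) (hzrec : ∀ m, z (m + 1) = ∑ i ∈ Finset.range (z m), (c m i).1)
    (n : ℕ) (hall : ∀ m < n, ∀ i < z m, (c m i).1 = r) :
    ∀ m ≤ n, z m = r ^ m := by
  intro m hm
  induction m with
  | zero => simpa using hz0
  | succ k ih =>
    have hk : k < n := Nat.lt_of_succ_le hm
    have hzk := ih hk.le
    rw [hzrec]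
    calc ∑ i ∈ Finset.range (z k), (c k i).1 = ∑ _i ∈ Finset.range (z k), r :=
          Finset.sum_congr rfl fun i hi => hall k hk i (Finset.mem_range.1 hi)
      _ = r ^ (k + 1) := by
          rw [Finset.sum_const, Finset.card_range, smul_eq_mul, hzk, pow_succ, mul_comm]

/-- Under `hge`, if `z n = r ^ n` then all the relevant values are exactly `r`
and `z m = r ^ m` for all `m ≤ n`. -/
private lemma aux_zrigid (r : ℕ) (hr1 : 1 ≤ r) (c : ℕ → ℕ → ℕ × Bool) (z : ℕ → ℕ)
    (hz0 : z 0 = 1) (hzrec : ∀ m, z (m + 1) = ∑ i ∈ Finset.range (z m), (c m i).1)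
    (n : ℕ) (hge : ∀ m < n, ∀ i < z m, r ≤ (c m i).1) (hzn : z n = r ^ n) :
    (∀ m ≤ n, z m = r ^ m) ∧ (∀ m < n, ∀ i < z m, (c m i).1 = r) := by
  have h := aux_zgrow r hr1 c z hz0 hzrec n hge
  have hnostrict : ¬ ((∃ m < n, r ^ m < z m) ∨ ∃ m < n, ∃ i < z m, r < (c m i).1) := by
    intro hcon
    exact absurd hzn (Nat.ne_of_gt (h.2 hcon))
  push_neg at hnostrict
  obtain ⟨h1, h2⟩ := hnostrict
  constructor
  · intro m hm
    rcases Nat.lt_or_ge m n with hm' | hm'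
    · exact le_antisymm (h1 m hm') (aux_zgrow r hr1 c z hz0 hzrec m
        (fun k hk => hge k (hk.trans hm'))).1
    · rw [le_antisymm hm hm', hzn]
  · intro m hm i hi
    exact le_antisymm (h2 m hm i hi) (hge m hm i hi)

private lemma aux_zreg' (r : ℕ) (c : ℕ → ℕ → ℕ × Bool) (z : ℕ → ℕ)
    (hz0 : z 0 = 1) (hzrec : ∀ m, z (m + 1) = ∑ i ∈ Finset.range (z m), (c m i).1)
    (n : ℕ) (hall : ∀ m < n, ∀ i < r ^ m, (c m i).1 = r) :
    ∀ m ≤ n, z m = r ^ m := by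
  intro m hm
  induction m with
  | zero => simpa using hz0
  | succ k ih =>
    have hk : k < n := Nat.lt_of_succ_le hm
    have hzk := ih hk.le
    rw [hzrec]
    calc ∑ i ∈ Finset.range (z k), (c k i).1 = ∑ _i ∈ Finset.range (z k), r :=
          Finset.sum_congr rfl fun i hi =>
            hall k hk i (by rw [← hzk]; exact Finset.mem_range.1 hi)
      _ = r ^ (k + 1) := by
          rw [Finset.sum_const, Finset.card_range, smul_eq_mul, hzk, pow_succ, mul_comm]
open scoped ENNReal NNReal Topology

theorem stmt_18
    {Ω : Type*} [mΩ : MeasurableSpace Ω] (μ : Measure Ω) [IsProbabilityMeasure μ]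
    (p q : ℕ → ℝ) (hp : ∀ k, 0 ≤ p k) (hpsum : ∑' k, p k = 1)
    (hq : ∀ k, q k ∈ Set.Icc (0 : ℝ) 1)
    (hdeg : p 0 + p 1 < 1) (hmark : ∃ k, 0 < p k * q k)
    (ξ : ℕ → ℕ → Ω → ℕ × Bool)
    (hξmeas : ∀ n i, Measurable (ξ n i))
    (hξindep : iIndepFun
      (fun ni : ℕ × ℕ => ξ ni.1 ni.2) μ)
    (hξlaw : ∀ n i k η, μ {ω | ξ n i ω = (k, η)} =
      ENNReal.ofReal (p k * if η then q k else 1 - q k))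
    (Z M : ℕ → Ω → ℕ)
    (hZ0 : ∀ ω, Z 0 ω = 1)
    (hZrec : ∀ n ω, Z (n + 1) ω = ∑ i ∈ Finset.range (Z n ω), (ξ n i ω).1)
    (hM0 : ∀ ω, M 0 ω = 0)
    (hMrec : ∀ n ω, M (n + 1) ω = M n ω +
      ∑ i ∈ Finset.range (Z n ω), (if (ξ n i ω).2 then 1 else 0))
    (ℱ : Filtration ℕ mΩ)
    (hℱ : ∀ n, ℱ n = ⨆ (m : ℕ) (_ : m < n) (i : ℕ),
      MeasurableSpace.comap (ξ m i) inferInstance)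
    (hp0 : p 0 = 0)
    (r : ℕ) (hr1 : 1 ≤ r) (hpr : 0 < p r) (hrmin : ∀ j, j < r → p j = 0)
    (s : ℝ) (hs : s ∈ Set.Ioo (0 : ℝ) 1)
    (B : ℕ → Ω → ℝ)
    (hB : ∀ n ω, B n ω = s ^ M n ω *
      ((p r * (s * q r + 1 - q r)) ^ (∑ m ∈ Finset.range n, r ^ m))⁻¹ *
      (if Z n ω = r ^ n then 1 else 0)) :
    Martingale B ℱ μ ∧ (∀ n ω, 0 ≤ B n ω) ∧ (∀ ω, B 0 ω = 1) ∧
      ∀ n (c : ℕ → ℕ → ℕ × Bool) (z : ℕ → ℕ), z 0 = 1 →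
        (∀ m, z (m + 1) = ∑ i ∈ Finset.range (z m), (c m i).1) →
        (∫ ω in {ω | ∀ m < n, ∀ i < z m, ξ m i ω = c m i}, B n ω ∂μ) =
          ∏ m ∈ Finset.range n, ∏ i ∈ Finset.range (z m),
            if (c m i).1 = r then
              (if (c m i).2 then s * q r else 1 - q r) / (s * q r + 1 - q r)
            else 0 := by
  obtain ⟨hs0, hs1⟩ := hs
  obtain ⟨hq0, hq1⟩ := hq r
  set D : ℝ := s * q r + 1 - q r with hD
  have hD0 : 0 < D := by rw [hD]; nlinarith
  set α : ℝ := p r * D with hα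
  have hα0 : 0 < α := mul_pos hpr hD0
  set g : ℕ × Bool → ℝ := fun kη =>
    if kη.1 = r then (if kη.2 then s else 1) * α⁻¹ else 0 with hg
  have hgmeas : Measurable g := measurable_of_countable g
  have hg01 : ∀ kη, 0 ≤ g kη ∧ g kη ≤ α⁻¹ := by
    intro kη
    have hinv : (0:ℝ) ≤ α⁻¹ := inv_nonneg.2 hα0.le
    rw [hg]
    dsimp only
    split
    · split
      · exact ⟨by positivity, by nlinarith⟩
      · exact ⟨by nlinarith, by nlinarith⟩
    · exact ⟨le_rfl, hinv⟩
  set B' : ℕ → Ω → ℝ := fun n ω =>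
    ∏ m ∈ Finset.range n, ∏ i ∈ Finset.range (r ^ m), g (ξ m i ω) with hB'
  -- the almost-sure good event
  have hGae : ∀ᵐ ω ∂μ, ∀ m i, r ≤ (ξ m i ω).1 := by
    rw [ae_all_iff]
    intro m
    rw [ae_all_iff]
    intro i
    have hsub : {ω | ¬ r ≤ (ξ m i ω).1} ⊆
        ⋃ jb : ℕ × Bool, {ω | ξ m i ω = jb ∧ jb.1 < r} := by
      intro ω hω
      exact Set.mem_iUnion.2 ⟨ξ m i ω, rfl, by simpa [not_le] using hω⟩
    refine measure_mono_null hsub (measure_iUnion_null fun jb => ?_)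
    by_cases hjb : jb.1 < r
    · have he : {ω | ξ m i ω = jb ∧ jb.1 < r} = {ω | ξ m i ω = (jb.1, jb.2)} := by
        ext ω; simp [hjb]
      rw [he, hξlaw]
      simp [hrmin _ hjb]
    · have he : {ω | ξ m i ω = jb ∧ jb.1 < r} = ∅ := by
        ext ω; simp [hjb]
      simp [he]
  -- pointwise description of Z and M on the good event
  have key : ∀ ω, (∀ m i, r ≤ (ξ m i ω).1) → ∀ n,
      (Z n ω = r ^ n ↔ ∀ m < n, ∀ i < r ^ m, (ξ m i ω).1 = r) ∧
      (Z n ω = r ^ n → M n ω =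
        ∑ m ∈ Finset.range n, ∑ i ∈ Finset.range (r ^ m), (if (ξ m i ω).2 then 1 else 0)) := by
    intro ω hGω n
    have hforward : Z n ω = r ^ n →
        (∀ m ≤ n, Z m ω = r ^ m) ∧ (∀ m < n, ∀ i < r ^ m, (ξ m i ω).1 = r) := by
      intro hZn
      have h := aux_zrigid r hr1 (fun m i => ξ m i ω) (fun m => Z m ω) (hZ0 ω)
        (fun m => hZrec m ω) n (fun m _ i _ => hGω m i) hZn
      exact ⟨h.1, fun m hm i hi => h.2 m hm i (by rw [h.1 m hm.le]; exact hi)⟩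
    refine ⟨⟨fun hZn => (hforward hZn).2, fun hall => ?_⟩, fun hZn => ?_⟩
    · exact aux_zreg' r (fun m i => ξ m i ω) (fun m => Z m ω) (hZ0 ω)
        (fun m => hZrec m ω) n hall n le_rfl
    · have hZall := (hforward hZn).1
      have hMk : ∀ k, k ≤ n → M k ω =
          ∑ m ∈ Finset.range k, ∑ i ∈ Finset.range (r ^ m), (if (ξ m i ω).2 then 1 else 0) := by
        intro k
        induction k with
        | zero => intro _; simpa using hM0 ω
        | succ j ih =>
          intro hj
          rw [hMrec, ih (Nat.le_of_succ_le hj), hZall j (Nat.le_of_succ_le hj),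
            Finset.sum_range_succ]
      exact hMk n le_rfl
  -- B and B' agree a.e.
  have hBB' : ∀ n, B n =ᵐ[μ] B' n := by
    intro n
    filter_upwards [hGae] with ω hGω
    obtain ⟨hiff, hM⟩ := key ω hGω n
    by_cases hZn : Z n ω = r ^ n
    · have hall := hiff.1 hZn
      have hprod : ∏ m ∈ Finset.range n, ∏ i ∈ Finset.range (r ^ m), g (ξ m i ω) =
          s ^ (∑ m ∈ Finset.range n, ∑ i ∈ Finset.range (r ^ m),
              (if (ξ m i ω).2 then 1 else 0)) *
            (α ^ (∑ m ∈ Finset.range n, r ^ m))⁻¹ := by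
        have hstep : ∀ m ∈ Finset.range n, ∏ i ∈ Finset.range (r ^ m), g (ξ m i ω) =
            s ^ (∑ i ∈ Finset.range (r ^ m), if (ξ m i ω).2 then 1 else 0) * α⁻¹ ^ (r ^ m) := by
          intro m hm
          calc ∏ i ∈ Finset.range (r ^ m), g (ξ m i ω)
              = ∏ i ∈ Finset.range (r ^ m),
                  (s ^ (if (ξ m i ω).2 then 1 else 0) * α⁻¹) := by
                refine Finset.prod_congr rfl fun i hi => ?_
                rw [hg]
                dsimp only
                rw [if_pos (hall m (Finset.mem_range.1 hm) i (Finset.mem_range.1 hi))]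
                congr 1
                by_cases hb : (ξ m i ω).2 <;> simp [hb]
            _ = (∏ i ∈ Finset.range (r ^ m), s ^ (if (ξ m i ω).2 then 1 else 0)) *
                  α⁻¹ ^ (r ^ m) := by
                rw [Finset.prod_mul_distrib, Finset.prod_const, Finset.card_range]
            _ = s ^ (∑ i ∈ Finset.range (r ^ m), if (ξ m i ω).2 then 1 else 0) *
                  α⁻¹ ^ (r ^ m) := by
                rw [Finset.prod_pow_eq_pow_sum]
        rw [Finset.prod_congr rfl hstep, Finset.prod_mul_distrib,
          Finset.prod_pow_eq_pow_sum, Finset.prod_pow_eq_pow_sum, ← inv_pow]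
      rw [hB n ω, if_pos hZn, mul_one, hM hZn, hB']
      exact hprod.symm
    · rw [hB n ω, if_neg hZn, mul_zero, hB']
      have hne : ∃ m, m < n ∧ ∃ i, i < r ^ m ∧ (ξ m i ω).1 ≠ r := by
        by_contra h
        push_neg at h
        exact hZn (hiff.2 fun m hm i hi => h m hm i hi)
      obtain ⟨m, hm, i, hi, hne⟩ := hne
      symm
      refine Finset.prod_eq_zero (Finset.mem_range.2 hm) ?_
      refine Finset.prod_eq_zero (Finset.mem_range.2 hi) ?_
      rw [hg]
      dsimp only
      rw [if_neg hne]
  -- measurability infrastructure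
  have hcomap_le : ∀ n m i, m < n →
      MeasurableSpace.comap (ξ m i) inferInstance ≤ ℱ n := by
    intro n m i hm
    rw [hℱ]
    refine le_trans ?_ (le_iSup _ m)
    refine le_trans ?_ (le_iSup (fun _ : m < n => ⨆ i, MeasurableSpace.comap (ξ m i) inferInstance) hm)
    exact le_iSup (fun i => MeasurableSpace.comap (ξ m i) inferInstance) i
  have hξF : ∀ n m i, m < n → Measurable[ℱ n] (ξ m i) := fun n m i hm =>
    measurable_iff_comap_le.2 (hcomap_le n m i hm)
  have hZMmeas : ∀ n, Measurable[ℱ n] (Z n) ∧ Measurable[ℱ n] (M n) := by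
    intro n
    induction n with
    | zero =>
      constructor
      · have h1 : Z 0 = fun _ => 1 := funext hZ0
        rw [h1]; exact measurable_const
      · have h1 : M 0 = fun _ => 0 := funext hM0
        rw [h1]; exact measurable_const
    | succ n ih =>
      have hZn : Measurable[ℱ (n+1)] (Z n) := ih.1.mono (ℱ.mono (Nat.le_succ n)) le_rfl
      have hMn : Measurable[ℱ (n+1)] (M n) := ih.2.mono (ℱ.mono (Nat.le_succ n)) le_rfl
      have hξn : ∀ i, Measurable[ℱ (n+1)] (ξ n i) := fun i => hξF (n+1) n i (Nat.lt_succ_self n)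
      constructor
      · have h1 : Z (n+1) = fun ω => ∑ i ∈ Finset.range (Z n ω), (ξ n i ω).1 :=
          funext (hZrec n)
        rw [h1]
        exact @aux_meas_sum Ω (ℱ (n+1)) _ _ hZn fun i => (hξn i).fst
      · have h1 : M (n+1) = fun ω => M n ω +
            ∑ i ∈ Finset.range (Z n ω), (if (ξ n i ω).2 then 1 else 0) := funext (hMrec n)
        rw [h1]
        refine Measurable.add hMn (@aux_meas_sum Ω (ℱ (n+1)) _ _ hZn fun i => ?_)
        exact (measurable_of_countable (fun b : Bool => if b then (1:ℕ) else 0)).comp (hξn i).snd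
  have hBadp : Adapted ℱ B := by
    intro n
    have h1 : B n = fun ω => s ^ M n ω * (α ^ (∑ m ∈ Finset.range n, r ^ m))⁻¹ *
        (if Z n ω = r ^ n then 1 else 0) := funext (hB n)
    rw [h1]
    refine Measurable.mul (Measurable.mul ?_ measurable_const) ?_
    · exact (measurable_of_countable (fun k : ℕ => s ^ k)).comp (hZMmeas n).2
    · exact (measurable_of_countable (fun k : ℕ => if k = r ^ n then (1:ℝ) else 0)).comp
        (hZMmeas n).1
  have hBnonneg : ∀ n ω, 0 ≤ B n ω := by
    intro n ω
    rw [hB]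
    have h1 : (0:ℝ) ≤ s ^ M n ω := by positivity
    have h2 : (0:ℝ) ≤ (α ^ (∑ m ∈ Finset.range n, r ^ m))⁻¹ := by positivity
    split <;> nlinarith
  have hBint : ∀ n, Integrable (B n) μ := by
    intro n
    refine Integrable.mono' (integrable_const ((α ^ (∑ m ∈ Finset.range n, r ^ m))⁻¹))
      (((hBadp n).mono (ℱ.le n) le_rfl).aestronglyMeasurable) (ae_of_all _ fun ω => ?_)
    rw [Real.norm_eq_abs, abs_of_nonneg (hBnonneg n ω), hB]
    have h1 : s ^ M n ω ≤ 1 := pow_le_one₀ hs0.le hs1.le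
    have h2 : (0:ℝ) ≤ s ^ M n ω := by positivity
    have h3 : (0:ℝ) ≤ (α ^ (∑ m ∈ Finset.range n, r ^ m))⁻¹ := by positivity
    split
    · nlinarith
    · nlinarith
  have hB'int_gen : ∀ (F : Finset ℕ) (G : ℕ → Finset ℕ),
      Integrable (fun ω => ∏ m ∈ F, ∏ i ∈ G m, g (ξ m i ω)) μ := by
    intro F G
    have hmeas : Measurable (fun ω => ∏ m ∈ F, ∏ i ∈ G m, g (ξ m i ω)) :=
      Finset.measurable_prod _ fun m _ =>
        Finset.measurable_prod _ fun i _ => hgmeas.comp (hξmeas m i)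
    refine Integrable.mono' (integrable_const (α⁻¹ ^ (∑ m ∈ F, (G m).card)))
      hmeas.aestronglyMeasurable (ae_of_all _ fun ω => ?_)
    rw [Real.norm_eq_abs, abs_of_nonneg
      (Finset.prod_nonneg fun m _ => Finset.prod_nonneg fun i _ => (hg01 _).1)]
    calc ∏ m ∈ F, ∏ i ∈ G m, g (ξ m i ω) ≤ ∏ m ∈ F, ∏ _i ∈ G m, α⁻¹ := by
          refine Finset.prod_le_prod (fun m _ => Finset.prod_nonneg fun i _ => (hg01 _).1)
            fun m _ => ?_
          exact Finset.prod_le_prod (fun i _ => (hg01 _).1) fun i _ => (hg01 _).2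
      _ = α⁻¹ ^ (∑ m ∈ F, (G m).card) := by
          simp_rw [Finset.prod_const]
          rw [Finset.prod_pow_eq_pow_sum]
  have hB'smF : ∀ n, StronglyMeasurable[ℱ n] (B' n) := by
    intro n
    rw [hB']
    apply Measurable.stronglyMeasurable
    refine Finset.measurable_prod _ fun m hm => Finset.measurable_prod _ fun i _ => ?_
    exact hgmeas.comp (hξF n m i (Finset.mem_range.1 hm))
  -- expectation of g and of products of g's
  have hind_int : ∀ (m i : ℕ) (kη : ℕ × Bool),
      (∫ ω, (if ξ m i ω = kη then (1:ℝ) else 0) ∂μ) = (μ {ω | ξ m i ω = kη}).toReal ∧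
        Integrable (fun ω => if ξ m i ω = kη then (1:ℝ) else 0) μ := by
    intro m i kη
    have hms : MeasurableSet {ω | ξ m i ω = kη} := hξmeas m i (measurableSet_singleton kη)
    have hrepr : (fun ω => if ξ m i ω = kη then (1:ℝ) else 0) =
        Set.indicator {ω | ξ m i ω = kη} (1 : Ω → ℝ) := by
      ext ω
      by_cases h : ξ m i ω = kη <;> simp [h]
    constructor
    · rw [hrepr]
      exact integral_indicator_one hms
    · rw [hrepr]
      exact (integrable_const (1:ℝ)).indicator hms
  have hinteg_g : ∀ m i, ∫ ω, g (ξ m i ω) ∂μ = 1 := by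
    intro m i
    have hrepr : ∀ ω, g (ξ m i ω) = (s * α⁻¹) * (if ξ m i ω = (r, true) then 1 else 0)
        + α⁻¹ * (if ξ m i ω = (r, false) then 1 else 0) := by
      intro ω
      rw [hg]
      rcases hkη : ξ m i ω with ⟨k, b⟩
      dsimp only
      by_cases hk : k = r
      · subst hk; cases b <;> simp [Prod.ext_iff]
      · cases b <;> simp [hk, Prod.ext_iff]
    simp_rw [hrepr]
    rw [integral_add ((hind_int m i _).2.const_mul _) ((hind_int m i _).2.const_mul _),
      integral_const_mul, integral_const_mul, (hind_int m i _).1, (hind_int m i _).1,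
      hξlaw, hξlaw]
    have e1 : (if (true : Bool) then q r else 1 - q r) = q r := rfl
    have e2 : (if (false : Bool) then q r else 1 - q r) = 1 - q r := rfl
    rw [e1, e2, ENNReal.toReal_ofReal (mul_nonneg (hp r) hq0),
      ENNReal.toReal_ofReal (mul_nonneg (hp r) (by linarith))]
    rw [hα, hD]
    have hD' : (1 + s * q r - q r) ≠ 0 := by linarith
    field_simp
    linear_combination mul_inv_cancel₀ hD'
  have hYindep : iIndepFun
      (fun x : ℕ × ℕ => fun ω => g (ξ x.1 x.2 ω)) μ :=
    hξindep.comp (fun _ => g) (fun _ => hgmeas)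
  have hEX : ∀ n k, ∫ ω, ∏ i ∈ Finset.range k, g (ξ n i ω) ∂μ = 1 := by
    intro n k
    induction k with
    | zero => simp
    | succ k ih =>
      have hemb : Function.Injective (fun i : ℕ => ((n, i) : ℕ × ℕ)) := by
        intro a b hab
        simpa using congrArg Prod.snd hab
      set T : Finset (ℕ × ℕ) := (Finset.range k).map ⟨fun i => (n, i), hemb⟩ with hT
      have hnotmem : (n, k) ∉ T := by simp [hT]
      have hprodeq : (∏ x ∈ T, (fun ω => g (ξ x.1 x.2 ω))) =
          fun ω => ∏ i ∈ Finset.range k, g (ξ n i ω) := by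
        funext ω
        rw [Finset.prod_apply, hT, Finset.prod_map]
        rfl
      have hindep2 : IndepFun (∏ x ∈ T, (fun ω => g (ξ x.1 x.2 ω))) (fun ω => g (ξ n k ω)) μ :=
        hYindep.indepFun_finsetProd_of_notMem (fun x => hgmeas.comp (hξmeas x.1 x.2)) hnotmem
      have hstep : (fun ω => ∏ i ∈ Finset.range (k+1), g (ξ n i ω)) =
          (∏ x ∈ T, (fun ω => g (ξ x.1 x.2 ω))) * (fun ω => g (ξ n k ω)) := by
        funext ω
        rw [Pi.mul_apply, hprodeq, Finset.prod_range_succ]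
      rw [hstep, hindep2.integral_mul_eq_mul_integral
        (by rw [hprodeq]
            exact (Finset.measurable_prod _ fun i _ =>
              hgmeas.comp (hξmeas n i)).aestronglyMeasurable)
        ((hgmeas.comp (hξmeas n k)).aestronglyMeasurable), hprodeq, ih, hinteg_g, mul_one]
  -- independence of level-n information from ℱ n
  have hindepF : ∀ n, Indep
      (⨆ x ∈ {x : ℕ × ℕ | x.1 = n}, MeasurableSpace.comap (ξ x.1 x.2) inferInstance)
      (ℱ n) μ := by
    intro n
    have hξiIndep : iIndep
        (fun x : ℕ × ℕ => MeasurableSpace.comap (ξ x.1 x.2) inferInstance) μ := by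
      rw [iIndepFun_iff_iIndep] at hξindep
      exact hξindep
    have hdisj : Disjoint {x : ℕ × ℕ | x.1 = n} {x : ℕ × ℕ | x.1 < n} := by
      rw [Set.disjoint_left]
      rintro ⟨a, b⟩ ha hb
      simp only [Set.mem_setOf_eq] at ha hb
      omega
    have h := indep_iSup_of_disjoint (fun x : ℕ × ℕ => (hξmeas x.1 x.2).comap_le) hξiIndep hdisj
    have hFeq : (ℱ n : MeasurableSpace Ω) =
        ⨆ x ∈ {x : ℕ × ℕ | x.1 < n}, MeasurableSpace.comap (ξ x.1 x.2) inferInstance := by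
      rw [hℱ]
      apply le_antisymm
      · refine iSup_le fun m => iSup_le fun hm => iSup_le fun i => ?_
        refine le_trans ?_ (le_iSup _ ((m, i) : ℕ × ℕ))
        exact le_iSup (fun _ : ((m, i) : ℕ × ℕ) ∈ {x : ℕ × ℕ | x.1 < n} =>
          MeasurableSpace.comap (ξ m i) inferInstance) hm
      · refine iSup_le fun x => iSup_le fun hx => ?_
        refine le_trans ?_ (le_iSup _ x.1)
        refine le_trans ?_ (le_iSup (fun _ : x.1 < n =>
          ⨆ i, MeasurableSpace.comap (ξ x.1 i) inferInstance) hx)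
        exact le_iSup (fun i => MeasurableSpace.comap (ξ x.1 i) inferInstance) x.2
    rw [hFeq]
    exact h
  -- the martingale property
  have hmart : ∀ n, B n =ᵐ[μ] μ[B (n+1) | ℱ n] := by
    intro n
    set X : Ω → ℝ := fun ω => ∏ i ∈ Finset.range (r ^ n), g (ξ n i ω) with hX
    have hXint : Integrable X μ := by
      have h := hB'int_gen {n} (fun _ => Finset.range (r ^ n))
      rw [hX]
      simpa using h
    have hB'succ : B' (n+1) = B' n * X := by
      funext ω
      simp only [hB', hX, Pi.mul_apply]
      rw [Finset.prod_range_succ]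
    have hB'succ_int : Integrable (B' n * X) μ := by
      rw [← hB'succ, hB']
      exact hB'int_gen (Finset.range (n+1)) (fun m => Finset.range (r ^ m))
    set mS := ⨆ x ∈ {x : ℕ × ℕ | x.1 = n},
      MeasurableSpace.comap (ξ x.1 x.2) inferInstance with hmS
    have hXsm : StronglyMeasurable[mS] X := by
      apply Measurable.stronglyMeasurable
      refine Finset.measurable_prod _ fun i _ => ?_
      refine hgmeas.comp (measurable_iff_comap_le.2 ?_)
      rw [hmS]
      refine le_trans ?_ (le_iSup _ ((n, i) : ℕ × ℕ))
      exact le_iSup (fun _ : ((n, i) : ℕ × ℕ) ∈ {x : ℕ × ℕ | x.1 = n} =>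
        MeasurableSpace.comap (ξ n i) inferInstance) rfl
    have hmSle : mS ≤ mΩ := by
      rw [hmS]
      exact iSup_le fun x => iSup_le fun _ => (hξmeas x.1 x.2).comap_le
    have h3 : μ[X | ℱ n] =ᵐ[μ] fun _ => ∫ ω, X ω ∂μ :=
      condExp_indep_eq hmSle (ℱ.le n) hXsm (hindepF n)
    have h2 : μ[B' n * X | ℱ n] =ᵐ[μ] B' n * μ[X | ℱ n] :=
      condExp_mul_of_stronglyMeasurable_left (hB'smF n) hB'succ_int hXint
    have h1 : μ[B (n+1) | ℱ n] =ᵐ[μ] μ[B' n * X | ℱ n] :=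
      condExp_congr_ae (hB'succ ▸ hBB' (n+1))
    refine ((hBB' n).trans ?_).trans h1.symm
    refine EventuallyEq.trans ?_ h2.symm
    have h4 : B' n * μ[X | ℱ n] =ᵐ[μ] B' n := by
      have h5 : μ[X | ℱ n] =ᵐ[μ] fun _ => (1:ℝ) := by
        rw [← hEX n (r ^ n)]
        exact h3
      filter_upwards [h5] with ω h5ω
      rw [Pi.mul_apply, h5ω, mul_one]
    exact h4.symm
  refine ⟨martingale_nat hBadp.stronglyAdapted hBint hmart, hBnonneg, ?_, ?_⟩
  · intro ω
    rw [hB]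
    simp [hZ0, hM0]
  · intro n c z hz0 hzrec
    set A := {ω | ∀ m < n, ∀ i < z m, ξ m i ω = c m i} with hA
    have hAmem : ∀ ω, ω ∈ A ↔ ∀ m < n, ∀ i < z m, ξ m i ω = c m i := fun ω => Iff.rfl
    have hAmeas : MeasurableSet A := by
      have hAeq : A = ⋂ m ∈ Finset.range n, ⋂ i ∈ Finset.range (z m), {ω | ξ m i ω = c m i} := by
        ext ω
        simp only [hA, Set.mem_setOf_eq, Set.mem_iInter, Finset.mem_range]
      rw [hAeq]
      exact MeasurableSet.biInter (Finset.range n).countable_toSet fun m _ =>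
        MeasurableSet.biInter (Finset.range (z m)).countable_toSet fun i _ =>
          hξmeas m i (measurableSet_singleton (c m i))
    have hZA : ∀ ω, ω ∈ A → ∀ m ≤ n, Z m ω = z m := by
      intro ω hω m
      induction m with
      | zero => intro _; rw [hZ0, hz0]
      | succ k ih =>
        intro hk
        rw [hZrec, hzrec, ih (Nat.le_of_succ_le hk)]
        exact Finset.sum_congr rfl fun i hi => by
          rw [(hAmem ω).1 hω k (Nat.lt_of_succ_le hk) i (Finset.mem_range.1 hi)]
    by_cases hzn : z n = r ^ n
    · -- z n = r ^ n
      have hK : ∀ ω ∈ A, M n ω = ∑ m ∈ Finset.range n, ∑ i ∈ Finset.range (z m),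
          (if (c m i).2 then 1 else 0) := by
        intro ω hω
        have hMk : ∀ k, k ≤ n → M k ω = ∑ m ∈ Finset.range k, ∑ i ∈ Finset.range (z m),
            (if (c m i).2 then 1 else 0) := by
          intro k
          induction k with
          | zero => intro _; simpa using hM0 ω
          | succ j ih =>
            intro hj
            rw [hMrec, ih (Nat.le_of_succ_le hj), hZA ω hω j (Nat.le_of_succ_le hj),
              Finset.sum_range_succ]
            congr 1
            exact Finset.sum_congr rfl fun i hi => by
              rw [(hAmem ω).1 hω j (Nat.lt_of_succ_le hj) i (Finset.mem_range.1 hi)]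
        exact hMk n le_rfl
      have hBA : ∀ ω ∈ A, B n ω =
          s ^ (∑ m ∈ Finset.range n, ∑ i ∈ Finset.range (z m), (if (c m i).2 then 1 else 0)) *
            (α ^ (∑ m ∈ Finset.range n, r ^ m))⁻¹ := by
        intro ω hω
        rw [hB n ω, hK ω hω, hZA ω hω n le_rfl, if_pos hzn, mul_one]
      rw [setIntegral_congr_fun hAmeas fun ω hω => hBA ω hω, setIntegral_const, smul_eq_mul]
      by_cases hall : ∀ m < n, ∀ i < z m, (c m i).1 = r
      · -- all offspring numbers equal r : the main computation
        have hzm : ∀ m ≤ n, z m = r ^ m := aux_zreg r c z hz0 hzrec n hall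
        have hemb : ∀ m : ℕ, Function.Injective (fun i : ℕ => ((m, i) : ℕ × ℕ)) :=
          fun m a b hab => by simpa using congrArg Prod.snd hab
        set T : Finset (ℕ × ℕ) := (Finset.range n).biUnion
          (fun m => (Finset.range (z m)).map ⟨fun i => (m, i), hemb m⟩) with hT
        have hAeq2 : A = ⋂ x ∈ T, {ω | ξ x.1 x.2 ω = c x.1 x.2} := by
          ext ω
          simp only [hA, Set.mem_setOf_eq, Set.mem_iInter, hT, Finset.mem_biUnion,
            Finset.mem_range, Finset.mem_map, Function.Embedding.coeFn_mk]
          constructor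
          · rintro h x ⟨m, hm, i, hi, rfl⟩
            exact h m hm i hi
          · intro h m hm i hi
            exact h (m, i) ⟨m, hm, i, hi, rfl⟩
        have hdisjT : (↑(Finset.range n) : Set ℕ).PairwiseDisjoint
            (fun m => (Finset.range (z m)).map ⟨fun i => (m, i), hemb m⟩) := by
          intro a _ b _ hab
          simp only [Function.onFun]
          rw [Finset.disjoint_left]
          rintro ⟨x1, x2⟩ hxa hxb
          simp only [Finset.mem_map, Function.Embedding.coeFn_mk, Prod.mk.injEq] at hxa hxb
          obtain ⟨i, _, hi2, _⟩ := hxa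
          obtain ⟨j, _, hj2, _⟩ := hxb
          exact hab (hi2.trans hj2.symm)
        have hμA : μ A = ∏ m ∈ Finset.range n, ∏ i ∈ Finset.range (z m),
            ENNReal.ofReal (p (c m i).1 *
              (if (c m i).2 then q (c m i).1 else 1 - q (c m i).1)) := by
          rw [hAeq2, hξindep.meas_biInter (S := T)
            (s := fun x => {ω | ξ x.1 x.2 ω = c x.1 x.2}) (fun x hx =>
            ⟨{c x.1 x.2}, measurableSet_singleton _, rfl⟩)]
          rw [hT, Finset.prod_biUnion hdisjT]
          refine Finset.prod_congr rfl fun m hm => ?_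
          rw [Finset.prod_map]
          refine Finset.prod_congr rfl fun i hi => ?_
          simpa using hξlaw m i (c m i).1 (c m i).2
        have hμAtoReal : (μ A).toReal = ∏ m ∈ Finset.range n, ∏ i ∈ Finset.range (z m),
            (p (c m i).1 * (if (c m i).2 then q (c m i).1 else 1 - q (c m i).1)) := by
          rw [hμA, ENNReal.toReal_prod]
          refine Finset.prod_congr rfl fun m _ => ?_
          rw [ENNReal.toReal_prod]
          refine Finset.prod_congr rfl fun i _ => ENNReal.toReal_ofReal ?_
          refine mul_nonneg (hp _) ?_
          rcases hq (c m i).1 with ⟨hql, hqu⟩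
          split
          · exact hql
          · linarith
        have e1 : s ^ (∑ m ∈ Finset.range n, ∑ i ∈ Finset.range (z m),
            (if (c m i).2 then 1 else 0)) =
            ∏ m ∈ Finset.range n, ∏ i ∈ Finset.range (z m), (if (c m i).2 then s else 1) := by
          rw [← Finset.prod_pow_eq_pow_sum]
          refine Finset.prod_congr rfl fun m _ => ?_
          rw [← Finset.prod_pow_eq_pow_sum]
          refine Finset.prod_congr rfl fun i _ => ?_
          by_cases hb : (c m i).2 <;> simp [hb]
        have e2 : (α ^ (∑ m ∈ Finset.range n, r ^ m))⁻¹ =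
            ∏ m ∈ Finset.range n, ∏ _i ∈ Finset.range (z m), α⁻¹ := by
          have hS : ∑ m ∈ Finset.range n, r ^ m = ∑ m ∈ Finset.range n, z m :=
            Finset.sum_congr rfl fun m hm => (hzm m (Finset.mem_range.1 hm).le).symm
          rw [hS, ← inv_pow, ← Finset.prod_pow_eq_pow_sum]
          exact Finset.prod_congr rfl fun m _ => by
            rw [Finset.prod_const, Finset.card_range]
        rw [measureReal_def, hμAtoReal, e1, e2]
        simp only [← Finset.prod_mul_distrib]
        refine Finset.prod_congr rfl fun m hm => Finset.prod_congr rfl fun i hi => ?_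
        have hcmi : (c m i).1 = r := hall m (Finset.mem_range.1 hm) i (Finset.mem_range.1 hi)
        rw [hcmi, if_pos rfl]
        by_cases hb : (c m i).2 <;> simp only [hb, if_true, if_false]
        · rw [hα]
          field_simp
        · rw [hα]
          simp only [Bool.false_eq_true, if_false]
          field_simp
      · -- some offspring number differs from r : both sides vanish
        push_neg at hall
        obtain ⟨m, hm, i, hi, hcne⟩ := hall
        have hlow : ∃ m' < n, ∃ i' < z m', (c m' i').1 < r := by
          by_contra h2
          push_neg at h2
          have hgrow := aux_zgrow r hr1 c z hz0 hzrec n h2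
          have hstrict : r ^ n < z n :=
            hgrow.2 (Or.inr ⟨m, hm, i, hi, lt_of_le_of_ne (h2 m hm i hi) (Ne.symm hcne)⟩)
          omega
        obtain ⟨m', hm', i', hi', hlt⟩ := hlow
        have hμA0 : μ A = 0 := by
          have hsub : A ⊆ {ω | ξ m' i' ω = c m' i'} :=
            fun ω hω => (hAmem ω).1 hω m' hm' i' hi'
          refine measure_mono_null hsub ?_
          have hsets : {ω | ξ m' i' ω = c m' i'} =
              {ω | ξ m' i' ω = ((c m' i').1, (c m' i').2)} := by simp
          rw [hsets, hξlaw]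
          simp [hrmin _ hlt]
        rw [measureReal_def, hμA0, ENNReal.toReal_zero, zero_mul]
        symm
        refine Finset.prod_eq_zero (Finset.mem_range.2 hm) ?_
        refine Finset.prod_eq_zero (Finset.mem_range.2 hi) ?_
        rw [if_neg hcne]
    · -- z n ≠ r ^ n : both sides vanish
      have hLHS : ∫ ω in A, B n ω ∂μ = 0 := by
        refine setIntegral_eq_zero_of_forall_eq_zero fun ω hω => ?_
        rw [hB n ω, hZA ω hω n le_rfl, if_neg hzn, mul_zero]
      rw [hLHS]
      symm
      have hne : ∃ m, m < n ∧ ∃ i, i < z m ∧ (c m i).1 ≠ r := by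
        by_contra h
        push_neg at h
        exact hzn (aux_zreg r c z hz0 hzrec n (fun m hm i hi => h m hm i hi) n le_rfl)
      obtain ⟨m, hm, i, hi, hne⟩ := hne
      refine Finset.prod_eq_zero (Finset.mem_range.2 hm) ?_
      refine Finset.prod_eq_zero (Finset.mem_range.2 hi) ?_
      rw [if_neg hne]
end
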